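/- arXiv:2412.06189 — 12 statements merged into one kernel-verified Lean document; each statement's English description precedes it below -/
import Mathlib

section
/- For every hypergraph H = (V, E) and every edge-dominated polymatroid h on V, one has h(V) ≤ ρ*(H), the fractional edge cover number of H. -/
/-!
Order the vertices and add them one at a time. By submodularity, the marginal gain
`h(S ∪ {v}) - h(S)` is at most the gain `h((e ∩ S) ∪ {v}) - h(e ∩ S)` inside every hyperedge
`e ∋ v`, and since the weights of the hyperedges through `v` sum to at least `1`, the gain is
bounded by the weighted gains of the restrictions `h(e ∩ ·)`. Telescoping gives
`h(V) ≤ ∑ₑ W(e) h(e) ≤ ∑ₑ W(e)` for every fractional edge cover `W`.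
-/

open Finset

/-- A polymatroid on a finite vertex type `V`: nonnegative, zero on `∅`,
monotone and submodular. -/
def IsPolymatroid {V : Type*} [DecidableEq V] [Fintype V] (h : Finset V → ℝ) : Prop :=
  h ∅ = 0 ∧ (∀ A : Finset V, 0 ≤ h A) ∧
    (∀ A B : Finset V, A ⊆ B → h A ≤ h B) ∧
    (∀ A B : Finset V, h (A ∪ B) + h (A ∩ B) ≤ h A + h B)

/-- `h` is edge-dominated w.r.t. the hyperedge set `E`. -/
def EdgeDominated {V : Type*} [DecidableEq V] [Fintype V]
    (E : Finset (Finset V)) (h : Finset V → ℝ) : Prop :=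
  ∀ e ∈ E, h e ≤ 1

/-- `W` is a fractional edge cover of the hypergraph with hyperedges `E`. -/
def IsFracEdgeCover {V : Type*} [DecidableEq V] [Fintype V]
    (E : Finset (Finset V)) (W : Finset V → ℝ) : Prop :=
  (∀ e ∈ E, 0 ≤ W e ∧ W e ≤ 1) ∧
    ∀ v : V, 1 ≤ ∑ e ∈ E.filter (fun e => v ∈ e), W e

/-- The fractional edge cover number `ρ*` of the hypergraph with hyperedges `E`. -/
noncomputable def fracCoverNumber {V : Type*} [DecidableEq V] [Fintype V]
    (E : Finset (Finset V)) : ℝ :=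
  sInf {s : ℝ | ∃ W : Finset V → ℝ, IsFracEdgeCover E W ∧ s = ∑ e ∈ E, W e}

section Submodular

variable {V : Type*} [DecidableEq V] {h : Finset V → ℝ}

theorem marginal_le_marginal_of_subset
    (hsub : ∀ A B : Finset V, h (A ∪ B) + h (A ∩ B) ≤ h A + h B)
    {S T : Finset V} {v : V} (hTS : T ⊆ S) (hv : v ∉ S) :
    h (insert v S) - h S ≤ h (insert v T) - h T := by
  have key := hsub S (insert v T)
  rw [union_insert, union_eq_left.2 hTS, inter_insert_of_notMem hv,
    inter_eq_right.2 hTS] at key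
  linarith

variable (E : Finset (Finset V)) (W : Finset V → ℝ)

theorem marginal_le_sum_mul_marginal_inter
    (hmono : ∀ A B : Finset V, A ⊆ B → h A ≤ h B)
    (hsub : ∀ A B : Finset V, h (A ∪ B) + h (A ∩ B) ≤ h A + h B)
    (hW : ∀ e ∈ E, 0 ≤ W e) (hcover : ∀ v : V, 1 ≤ ∑ e ∈ E.filter (fun e => v ∈ e), W e)
    {S : Finset V} {v : V} (hv : v ∉ S) :
    h (insert v S) - h S ≤ ∑ e ∈ E, W e * (h (e ∩ insert v S) - h (e ∩ S)) := by
  have hgain : 0 ≤ h (insert v S) - h S := sub_nonneg.2 (hmono _ _ (subset_insert v S))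
  calc h (insert v S) - h S
      ≤ (∑ e ∈ E.filter (fun e => v ∈ e), W e) * (h (insert v S) - h S) :=
        le_mul_of_one_le_left hgain (hcover v)
    _ = ∑ e ∈ E.filter (fun e => v ∈ e), W e * (h (insert v S) - h S) := sum_mul _ _ _
    _ ≤ ∑ e ∈ E.filter (fun e => v ∈ e), W e * (h (insert v (e ∩ S)) - h (e ∩ S)) := by
        refine sum_le_sum fun e he => mul_le_mul_of_nonneg_left ?_ (hW e (mem_filter.1 he).1)
        exact marginal_le_marginal_of_subset hsub inter_subset_right hv
    _ = ∑ e ∈ E, W e * (h (e ∩ insert v S) - h (e ∩ S)) := by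
        rw [sum_filter]
        refine sum_congr rfl fun e _ => ?_
        by_cases hve : v ∈ e
        · rw [if_pos hve, inter_insert_of_mem hve]
        · rw [if_neg hve, inter_insert_of_notMem hve, sub_self, mul_zero]

theorem le_sum_mul_inter_of_cover (h0 : h ∅ = 0)
    (hmono : ∀ A B : Finset V, A ⊆ B → h A ≤ h B)
    (hsub : ∀ A B : Finset V, h (A ∪ B) + h (A ∩ B) ≤ h A + h B)
    (hW : ∀ e ∈ E, 0 ≤ W e) (hcover : ∀ v : V, 1 ≤ ∑ e ∈ E.filter (fun e => v ∈ e), W e)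
    (S : Finset V) : h S ≤ ∑ e ∈ E, W e * h (e ∩ S) := by
  induction S using Finset.induction_on with
  | empty => simp [h0]
  | insert v S hv ih =>
    have step := marginal_le_sum_mul_marginal_inter E W hmono hsub hW hcover hv
    simp only [mul_sub, sum_sub_distrib] at step
    linarith

end Submodular

theorem isFracEdgeCover_one {V : Type*} [DecidableEq V] [Fintype V]
    (E : Finset (Finset V)) (hcov : ∀ v : V, ∃ e ∈ E, v ∈ e) :
    IsFracEdgeCover E (fun _ => 1) := by
  refine ⟨fun _ _ => ⟨zero_le_one, le_rfl⟩, fun v => ?_⟩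
  obtain ⟨e, he, hve⟩ := hcov v
  rw [sum_const, nsmul_one, Nat.one_le_cast]
  exact card_pos.2 ⟨e, mem_filter.2 ⟨he, hve⟩⟩

/-- for every hypergraph `H = (V, E)` (every vertex lying in some
hyperedge) and every edge-dominated polymatroid `h` on `V`,
`h(V) ≤ ρ*(H)`. -/
theorem polymatroid_le_fracCoverNumber {V : Type*} [DecidableEq V] [Fintype V]
    (E : Finset (Finset V)) (hcov : ∀ v : V, ∃ e ∈ E, v ∈ e)
    (h : Finset V → ℝ) (hpoly : IsPolymatroid h) (hED : EdgeDominated E h) :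
    h Finset.univ ≤ fracCoverNumber E := by
  obtain ⟨h0, -, hmono, hsub⟩ := hpoly
  refine le_csInf ⟨_, _, isFracEdgeCover_one E hcov, rfl⟩ ?_
  rintro _ ⟨W, ⟨hW, hcover⟩, rfl⟩
  calc h univ ≤ ∑ e ∈ E, W e * h (e ∩ univ) :=
        le_sum_mul_inter_of_cover E W h0 hmono hsub (fun e he => (hW e he).1) hcover univ
    _ ≤ ∑ e ∈ E, W e := sum_le_sum fun e he => by
        rw [inter_univ]
        exact mul_le_of_le_one_right (hW e he).1 (hED e he)
end

section
/- Fix ω ∈ [2,3] and γ := ω − 2. The maximum, over all edge-dominated polymatroids h on the triangle hypergraph (vertex set {X, Y, Z}, hyperedges {X,Y}, {Y,Z}, {X,Z}), of min( h({X,Y,Z}), max( h({X}) + h({Y}) + γ·h({Z}), h({X}) + γ·h({Y}) + h({Z}), γ·h({X}) + h({Y}) + h({Z}) ) ) equals 2ω/(ω+1). In particular, the ω-submodular width of the triangle (3-clique) query equals 2ω/(ω+1). -/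
open Finset

/-!
For the upper bound, submodularity on the two edges through a vertex `v` gives
`h(XYZ) + h(v) ≤ 2`. If `m` is the minimum in question and, say,
`m ≤ h(X) + h(Y) + γ h(Z)`, then weighting `m ≤ h(XYZ)` by `ω = 2 + γ` gives
`(ω + 1) m ≤ (h(XYZ) + h(X)) + (h(XYZ) + h(Y)) + γ (h(XYZ) + h(Z)) ≤ 2ω`.

The bound is attained by `h(A) = ((3 - ω) [A ≠ ∅] + (ω - 1) |A|) / (ω + 1)`, a nonnegative
combination of the rank functions of the uniform matroids `U₁,₃` and `U₃,₃` (this is where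
`ω ≤ 3` enters): edges get `1`, vertices `2 / (ω + 1)` and the whole triangle `2ω / (ω + 1)`.
-/

section Polymatroid

variable {V : Type*} [DecidableEq V] [Fintype V]

theorem IsPolymatroid.add {h g : Finset V → ℝ} (hh : IsPolymatroid h) (hg : IsPolymatroid g) :
    IsPolymatroid fun A => h A + g A := by
  obtain ⟨hh0, hhnn, hhmono, hhsub⟩ := hh
  obtain ⟨hg0, hgnn, hgmono, hgsub⟩ := hg
  refine ⟨by simp [hh0, hg0], fun A => add_nonneg (hhnn A) (hgnn A),
    fun A B hAB => add_le_add (hhmono A B hAB) (hgmono A B hAB), fun A B => ?_⟩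
  linarith [hhsub A B, hgsub A B]

theorem IsPolymatroid.const_mul {h : Finset V → ℝ} (hh : IsPolymatroid h) {c : ℝ} (hc : 0 ≤ c) :
    IsPolymatroid fun A => c * h A := by
  obtain ⟨h0, hnn, hmono, hsub⟩ := hh
  refine ⟨by simp [h0], fun A => mul_nonneg hc (hnn A),
    fun A B hAB => mul_le_mul_of_nonneg_left (hmono A B hAB) hc, fun A B => ?_⟩
  rw [← mul_add, ← mul_add]
  exact mul_le_mul_of_nonneg_left (hsub A B) hc

theorem isPolymatroid_card : IsPolymatroid fun A : Finset V => (#A : ℝ) := by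
  refine ⟨by simp, fun A => by positivity, fun A B hAB => ?_, fun A B => ?_⟩ <;> dsimp only
  · exact_mod_cast card_le_card hAB
  · exact_mod_cast (card_union_add_card_inter A B).le

theorem isPolymatroid_indicator_nonempty :
    IsPolymatroid fun A : Finset V => if A.Nonempty then (1 : ℝ) else 0 := by
  refine ⟨by simp, fun A => ?_, fun A B hAB => ?_, fun A B => ?_⟩ <;> dsimp only
  · split_ifs <;> norm_num
  · by_cases hA : A.Nonempty
    · simp [hA, hA.mono hAB]
    · split_ifs <;> norm_num
  · by_cases hA : A.Nonempty <;> by_cases hB : B.Nonempty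
    · simp only [hA, hB, hA.mono subset_union_left, if_true]
      split_ifs <;> norm_num
    · simp [not_nonempty_iff_eq_empty.mp hB, hA]
    · simp [not_nonempty_iff_eq_empty.mp hA, hB]
    · simp [not_nonempty_iff_eq_empty.mp hA, not_nonempty_iff_eq_empty.mp hB]

theorem IsPolymatroid.add_le_two_of_le_one {h : Finset V → ℝ} (hh : IsPolymatroid h)
    {A B : Finset V} (hA : h A ≤ 1) (hB : h B ≤ 1) : h (A ∪ B) + h (A ∩ B) ≤ 2 := by
  linarith [hh.2.2.2 A B]

end Polymatroid

theorem IsPolymatroid.triangle_add_vertex_le_two {h : Finset (Fin 3) → ℝ} (hh : IsPolymatroid h)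
    (h01 : h {0, 1} ≤ 1) (h12 : h {1, 2} ≤ 1) (h02 : h {0, 2} ≤ 1) :
    h {0, 1, 2} + h {0} ≤ 2 ∧ h {0, 1, 2} + h {1} ≤ 2 ∧ h {0, 1, 2} + h {2} ≤ 2 := by
  have h0 := hh.add_le_two_of_le_one h01 h02
  have h1 := hh.add_le_two_of_le_one h01 h12
  have h2 := hh.add_le_two_of_le_one h02 h12
  simp only [show ({0, 1} ∪ {0, 2} : Finset (Fin 3)) = {0, 1, 2} by decide,
    show ({0, 1} ∪ {1, 2} : Finset (Fin 3)) = {0, 1, 2} by decide,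
    show ({0, 2} ∪ {1, 2} : Finset (Fin 3)) = {0, 1, 2} by decide,
    show ({0, 1} ∩ {0, 2} : Finset (Fin 3)) = {0} by decide,
    show ({0, 1} ∩ {1, 2} : Finset (Fin 3)) = {1} by decide,
    show ({0, 2} ∩ {1, 2} : Finset (Fin 3)) = {2} by decide] at h0 h1 h2
  exact ⟨h0, h1, h2⟩

theorem min_le_two_mul_div_of_add_le_two {ω f a b c L : ℝ} (hω : 2 ≤ ω)
    (ha : f + a ≤ 2) (hb : f + b ≤ 2) (hc : f + c ≤ 2) (hL : L = a + b + (ω - 2) * c) :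
    min f L ≤ 2 * ω / (ω + 1) := by
  rw [le_div_iff₀ (by linarith)]
  have hmin_f : ω * min f L ≤ ω * f := mul_le_mul_of_nonneg_left (min_le_left f L) (by linarith)
  have hγc : (ω - 2) * (f + c) ≤ (ω - 2) * 2 := mul_le_mul_of_nonneg_left hc (by linarith)
  linarith [min_le_right f L]

noncomputable def triangleExtremalPolymatroid (ω : ℝ) (A : Finset (Fin 3)) : ℝ :=
  (3 - ω) / (ω + 1) * (if A.Nonempty then 1 else 0) + (ω - 1) / (ω + 1) * #A

theorem isPolymatroid_triangleExtremalPolymatroid {ω : ℝ} (hω₁ : 1 ≤ ω) (hω₃ : ω ≤ 3) :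
    IsPolymatroid (triangleExtremalPolymatroid ω) :=
  (isPolymatroid_indicator_nonempty.const_mul (by apply div_nonneg <;> linarith)).add
    (isPolymatroid_card.const_mul (by apply div_nonneg <;> linarith))

theorem triangleExtremalPolymatroid_of_card_eq {ω : ℝ} (hω : 0 < ω + 1) {A : Finset (Fin 3)}
    {k : ℕ} (hA : #A = k) (hk : 0 < k) :
    triangleExtremalPolymatroid ω A = (3 - ω + (ω - 1) * k) / (ω + 1) := by
  have hne : A.Nonempty := card_pos.mp (hA ▸ hk)
  rw [triangleExtremalPolymatroid, if_pos hne, hA]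
  field_simp

/-- with `ω ∈ [2,3]` and `γ = ω − 2`, the maximum over all
edge-dominated polymatroids `h` on the triangle hypergraph (vertices
`X = 0`, `Y = 1`, `Z = 2`; hyperedges `{X,Y}, {Y,Z}, {X,Z}`) of
`min( h(XYZ), max( h(X)+h(Y)+γh(Z), h(X)+γh(Y)+h(Z), γh(X)+h(Y)+h(Z) ) )`
equals `2ω/(ω+1)`; i.e. the ω-submodular width of the triangle query is
`2ω/(ω+1)`. -/
theorem omega_subw_triangle (ω : ℝ) (hω₂ : 2 ≤ ω) (hω₃ : ω ≤ 3) :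
    IsGreatest
      {x : ℝ | ∃ h : Finset (Fin 3) → ℝ, IsPolymatroid h ∧
        h {0, 1} ≤ 1 ∧ h {1, 2} ≤ 1 ∧ h {0, 2} ≤ 1 ∧
        x = min (h {0, 1, 2})
          (max (max (h {0} + h {1} + (ω - 2) * h {2})
                    (h {0} + (ω - 2) * h {1} + h {2}))
               ((ω - 2) * h {0} + h {1} + h {2}))}
      (2 * ω / (ω + 1)) := by
  have hω : 0 < ω + 1 := by linarith
  constructor
  · have vertex (i : Fin 3) : triangleExtremalPolymatroid ω {i} = 2 / (ω + 1) := by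
      rw [triangleExtremalPolymatroid_of_card_eq hω (card_singleton i) one_pos]; push_cast; ring
    have edge (A : Finset (Fin 3)) (hA : #A = 2) : triangleExtremalPolymatroid ω A = 1 := by
      rw [triangleExtremalPolymatroid_of_card_eq hω hA two_pos]; push_cast; field_simp; ring
    have top : triangleExtremalPolymatroid ω {0, 1, 2} = 2 * ω / (ω + 1) := by
      rw [triangleExtremalPolymatroid_of_card_eq hω (k := 3) rfl three_pos]; push_cast; ring
    refine ⟨triangleExtremalPolymatroid ω, isPolymatroid_triangleExtremalPolymatroid
      (by linarith) hω₃, (edge _ rfl).le, (edge _ rfl).le, (edge _ rfl).le, ?_⟩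
    rw [vertex, vertex, vertex, top]
    refine (min_eq_left (le_max_of_le_left (le_max_of_le_left (le_of_eq ?_)))).symm
    field_simp
    ring
  · rintro _ ⟨h, hh, h01, h12, h02, rfl⟩
    obtain ⟨h0, h1, h2⟩ := hh.triangle_add_vertex_le_two h01 h12 h02
    rw [min_max_distrib_left, min_max_distrib_left]
    refine max_le (max_le ?_ ?_) ?_
    · exact min_le_two_mul_div_of_add_le_two hω₂ h0 h1 h2 rfl
    · exact min_le_two_mul_div_of_add_le_two hω₂ h0 h2 h1 (by ring)
    · exact min_le_two_mul_div_of_add_le_two hω₂ h1 h2 h0 (by ring)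
end

section
/- Fix ω ∈ [2,3]. The maximum, over all edge-dominated polymatroids h on the 4-clique hypergraph (vertex set V = {X, Y, Z, W}, hyperedges all 2-element subsets), of min( h(V), min over all partitions of V into pairwise-disjoint sets A, B, C, D with A, B, C nonempty and D possibly empty and A∪B∪C∪D = V of MM(A;B;C|D) ) equals (ω+1)/2. In particular, the ω-submodular width of the 4-clique query equals (ω+1)/2. -/
open Finset

/-- The matrix-multiplication measure `MM(A;B;C|G)` for a set function `h`
and parameter `γ = ω − 2`. -/
noncomputable def MM {V : Type*} [DecidableEq V] [Fintype V]
    (h : Finset V → ℝ) (γ : ℝ) (A B C G : Finset V) : ℝ :=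
  max (max ((h (A ∪ G) - h G) + (h (B ∪ G) - h G) + γ * (h (C ∪ G) - h G) + h G)
           ((h (A ∪ G) - h G) + γ * (h (B ∪ G) - h G) + (h (C ∪ G) - h G) + h G))
      (γ * (h (A ∪ G) - h G) + (h (B ∪ G) - h G) + (h (C ∪ G) - h G) + h G)

/-- The half-cardinality polymatroid. -/
noncomputable def hhalf : Finset (Fin 4) → ℝ := fun S => (S.card : ℝ) / 2

lemma hhalf_cond {S T : Finset (Fin 4)} (hST : Disjoint S T) :
    hhalf (S ∪ T) - hhalf T = (S.card : ℝ) / 2 := by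
  unfold hhalf
  rw [card_union_of_disjoint hST]
  push_cast
  ring

lemma MM_nonneg (h : Finset (Fin 4) → ℝ) (hp : IsPolymatroid h) (γ : ℝ) (hγ : 0 ≤ γ)
    (A B C G : Finset (Fin 4)) : 0 ≤ MM h γ A B C G := by
  obtain ⟨h0, hnn, hmono, hsub⟩ := hp
  have hA : h G ≤ h (A ∪ G) := hmono _ _ subset_union_right
  have hB : h G ≤ h (B ∪ G) := hmono _ _ subset_union_right
  have hC : h G ≤ h (C ∪ G) := hmono _ _ subset_union_right
  have hG : 0 ≤ h G := hnn G
  have h1 : 0 ≤ (h (A ∪ G) - h G) + (h (B ∪ G) - h G) + γ * (h (C ∪ G) - h G) + h G := by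
    nlinarith [mul_nonneg hγ (sub_nonneg.2 hC)]
  exact h1.trans ((le_max_left _ _).trans (le_max_left _ _))

/-- Case 1 bound: if the singleton at `v` has value ≥ 1/2, conditioning on it works. -/
lemma mm_case1 (h : Finset (Fin 4) → ℝ) (hp : IsPolymatroid h)
    (he : ∀ e : Finset (Fin 4), e.card = 2 → h e ≤ 1)
    (γ : ℝ) (hγ0 : 0 ≤ γ) (hγ1 : γ ≤ 1)
    {a b c v : Fin 4} (hav : a ≠ v) (hbv : b ≠ v) (hcv : c ≠ v)
    (hv : 1 / 2 ≤ h {v}) :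
    MM h γ {a} {b} {c} {v} ≤ (γ + 3) / 2 := by
  obtain ⟨h0, hnn, hmono, hsub⟩ := hp
  have ea : h ({a} ∪ {v}) ≤ 1 := he _ (by rw [← insert_eq]; exact card_pair hav)
  have eb : h ({b} ∪ {v}) ≤ 1 := he _ (by rw [← insert_eq]; exact card_pair hbv)
  have ec : h ({c} ∪ {v}) ≤ 1 := he _ (by rw [← insert_eq]; exact card_pair hcv)
  have ma : h {v} ≤ h ({a} ∪ {v}) := hmono _ _ subset_union_right
  have mb : h {v} ≤ h ({b} ∪ {v}) := hmono _ _ subset_union_right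
  have mc : h {v} ≤ h ({c} ∪ {v}) := hmono _ _ subset_union_right
  have key : ∀ x y : ℝ, h {v} ≤ x → x ≤ 1 → γ * (x - h {v}) ≤ γ * (1 - h {v}) := by
    intro x y hx1 hx2
    exact mul_le_mul_of_nonneg_left (by linarith) hγ0
  have hg2 : γ * (1 / 2) ≤ γ * h {v} := mul_le_mul_of_nonneg_left hv hγ0
  unfold MM
  refine max_le (max_le ?_ ?_) ?_
  · nlinarith [key _ 0 mc ec]
  · nlinarith [key _ 0 mb eb]
  · nlinarith [key _ 0 ma ea]

/-- Case 2 bound: if two singletons have value ≤ 1/2, pair up the other two. -/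
lemma mm_case2 (h : Finset (Fin 4) → ℝ) (hp : IsPolymatroid h)
    (he : ∀ e : Finset (Fin 4), e.card = 2 → h e ≤ 1)
    (γ : ℝ) (hγ0 : 0 ≤ γ) (hγ1 : γ ≤ 1)
    (h2 : h {2} ≤ 1 / 2) (h3 : h {3} ≤ 1 / 2) :
    MM h γ {0, 1} {2} {3} ∅ ≤ (γ + 3) / 2 := by
  obtain ⟨h0, hnn, hmono, hsub⟩ := hp
  have e01 : h ({0, 1} : Finset (Fin 4)) ≤ 1 := he _ (by decide)
  have n2 : 0 ≤ h ({2} : Finset (Fin 4)) := hnn _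
  have n3 : 0 ≤ h ({3} : Finset (Fin 4)) := hnn _
  have n01 : 0 ≤ h ({0, 1} : Finset (Fin 4)) := hnn _
  unfold MM
  simp only [union_empty, h0, sub_zero, add_zero]
  refine max_le (max_le ?_ ?_) ?_
  · nlinarith [mul_le_mul_of_nonneg_left h3 hγ0]
  · nlinarith [mul_le_mul_of_nonneg_left h2 hγ0]
  · nlinarith [mul_le_mul_of_nonneg_left e01 hγ0]

/-- the ω-submodular width of the 4-clique query equals `(ω+1)/2`. -/
theorem omega_subw_four_clique (ω : ℝ) (hω₂ : 2 ≤ ω) (hω₃ : ω ≤ 3) :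
    IsGreatest
      {x : ℝ | ∃ h : Finset (Fin 4) → ℝ, IsPolymatroid h ∧
        (∀ e : Finset (Fin 4), e.card = 2 → h e ≤ 1) ∧
        x = min (h Finset.univ)
          (sInf {y : ℝ | ∃ A B C D : Finset (Fin 4),
            A.Nonempty ∧ B.Nonempty ∧ C.Nonempty ∧
            Disjoint A B ∧ Disjoint A C ∧ Disjoint A D ∧
            Disjoint B C ∧ Disjoint B D ∧ Disjoint C D ∧
            A ∪ B ∪ C ∪ D = Finset.univ ∧
            y = MM h (ω - 2) A B C D})}
      ((ω + 1) / 2) := by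
  have hγ0 : (0:ℝ) ≤ ω - 2 := by linarith
  have hγ1 : ω - 2 ≤ 1 := by linarith
  constructor
  · -- membership: the half-cardinality polymatroid attains (ω+1)/2
    have hpoly : IsPolymatroid hhalf := by
      refine ⟨by simp [hhalf], fun A => by unfold hhalf; positivity, ?_, ?_⟩
      · intro A B hAB
        have : (A.card : ℝ) ≤ B.card := Nat.cast_le.2 (card_le_card hAB)
        unfold hhalf; linarith
      · intro A B
        have hc := Finset.card_union_add_card_inter A B
        have : ((A ∪ B).card : ℝ) + (A ∩ B).card = A.card + B.card := by exact_mod_cast hc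
        unfold hhalf; linarith
    have hedge : ∀ e : Finset (Fin 4), e.card = 2 → hhalf e ≤ 1 := by
      intro e he2; unfold hhalf; rw [he2]; norm_num
    refine ⟨hhalf, hpoly, hedge, ?_⟩
    set Y := {y : ℝ | ∃ A B C D : Finset (Fin 4),
            A.Nonempty ∧ B.Nonempty ∧ C.Nonempty ∧
            Disjoint A B ∧ Disjoint A C ∧ Disjoint A D ∧
            Disjoint B C ∧ Disjoint B D ∧ Disjoint C D ∧
            A ∪ B ∪ C ∪ D = Finset.univ ∧
            y = MM hhalf (ω - 2) A B C D} with hY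
    have hbdd : BddBelow Y := by
      refine ⟨0, ?_⟩
      rintro y ⟨A, B, C, D, -, -, -, -, -, -, -, -, -, -, rfl⟩
      exact MM_nonneg _ hpoly _ hγ0 _ _ _ _
    have hmem : MM hhalf (ω - 2) {0} {1} {2} {3} ∈ Y := by
      exact ⟨{0}, {1}, {2}, {3}, by decide, by decide, by decide, by decide, by decide,
        by decide, by decide, by decide, by decide, by decide, rfl⟩
    have hlow : ∀ y ∈ Y, (ω + 1) / 2 ≤ y := by
      rintro y ⟨A, B, C, D, hAne, hBne, hCne, hAB, hAC, hAD, hBC, hBD, hCD, huniv, rfl⟩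
      have hABCD : Disjoint (A ∪ B ∪ C) D :=
        disjoint_union_left.2 ⟨disjoint_union_left.2 ⟨hAD, hBD⟩, hCD⟩
      have hABC : Disjoint (A ∪ B) C := disjoint_union_left.2 ⟨hAC, hBC⟩
      have hsum : A.card + B.card + C.card + D.card = 4 := by
        have h4 : (A ∪ B ∪ C ∪ D).card = 4 := by rw [huniv]; simp
        rw [card_union_of_disjoint hABCD, card_union_of_disjoint hABC,
          card_union_of_disjoint hAB] at h4
        omega
      have ha1 : 1 ≤ A.card := card_pos.2 hAne
      have hb1 : 1 ≤ B.card := card_pos.2 hBne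
      have hc1 : 1 ≤ C.card := card_pos.2 hCne
      have hAD' : hhalf (A ∪ D) - hhalf D = (A.card : ℝ) / 2 := hhalf_cond hAD
      have hBD' : hhalf (B ∪ D) - hhalf D = (B.card : ℝ) / 2 := hhalf_cond hBD
      have hCD' : hhalf (C ∪ D) - hhalf D = (C.card : ℝ) / 2 := hhalf_cond hCD
      have hDv : hhalf D = (D.card : ℝ) / 2 := rfl
      have hsumR : (A.card : ℝ) + B.card + C.card + D.card = 4 := by exact_mod_cast hsum
      have hcase : A.card = 1 ∨ B.card = 1 ∨ C.card = 1 := by omega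
      unfold MM
      rw [hAD', hBD', hCD', hDv]
      rcases hcase with h1 | h1 | h1
      · refine le_trans ?_ (le_max_right _ _)
        rw [h1]
        push_cast
        have h1' : (A.card : ℝ) = 1 := by exact_mod_cast h1
        have : (B.card : ℝ) + C.card + D.card = 3 := by linarith
        nlinarith
      · refine le_trans (le_trans ?_ (le_max_right _ _)) (le_max_left _ _)
        rw [h1]
        push_cast
        have h1' : (B.card : ℝ) = 1 := by exact_mod_cast h1
        have : (A.card : ℝ) + C.card + D.card = 3 := by linarith
        nlinarith
      · refine le_trans (le_trans ?_ (le_max_left _ _)) (le_max_left _ _)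
        rw [h1]
        push_cast
        have h1' : (C.card : ℝ) = 1 := by exact_mod_cast h1
        have : (A.card : ℝ) + B.card + D.card = 3 := by linarith
        nlinarith
    have hup : MM hhalf (ω - 2) {0} {1} {2} {3} ≤ (ω + 1) / 2 := by
      have c0 : hhalf ({0} ∪ {3} : Finset (Fin 4)) - hhalf {3} = (1 : ℝ) / 2 := by
        have := hhalf_cond (S := {0}) (T := {3}) (by decide)
        simpa using this
      have c1 : hhalf ({1} ∪ {3} : Finset (Fin 4)) - hhalf {3} = (1 : ℝ) / 2 := by
        have := hhalf_cond (S := {1}) (T := {3}) (by decide)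
        simpa using this
      have c2 : hhalf ({2} ∪ {3} : Finset (Fin 4)) - hhalf {3} = (1 : ℝ) / 2 := by
        have := hhalf_cond (S := {2}) (T := {3}) (by decide)
        simpa using this
      have c3 : hhalf ({3} : Finset (Fin 4)) = (1 : ℝ) / 2 := by
        unfold hhalf; norm_num
      unfold MM
      rw [c0, c1, c2, c3]
      refine max_le (max_le ?_ ?_) ?_ <;> nlinarith
    have hsInf : sInf Y = (ω + 1) / 2 :=
      le_antisymm (le_trans (csInf_le hbdd hmem) hup) (le_csInf ⟨_, hmem⟩ hlow)
    have huniv4 : hhalf (univ : Finset (Fin 4)) = 2 := by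
      unfold hhalf; norm_num
    rw [hsInf, huniv4, min_eq_right (by linarith)]
  · -- upper bound
    rintro x ⟨h, hpoly, hedge, rfl⟩
    set Y := {y : ℝ | ∃ A B C D : Finset (Fin 4),
            A.Nonempty ∧ B.Nonempty ∧ C.Nonempty ∧
            Disjoint A B ∧ Disjoint A C ∧ Disjoint A D ∧
            Disjoint B C ∧ Disjoint B D ∧ Disjoint C D ∧
            A ∪ B ∪ C ∪ D = Finset.univ ∧
            y = MM h (ω - 2) A B C D} with hY
    have hbdd : BddBelow Y := by
      refine ⟨0, ?_⟩
      rintro y ⟨A, B, C, D, -, -, -, -, -, -, -, -, -, -, rfl⟩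
      exact MM_nonneg _ hpoly _ hγ0 _ _ _ _
    have key : ∀ y ∈ Y, y ≤ (ω + 1) / 2 → min (h univ) (sInf Y) ≤ (ω + 1) / 2 :=
      fun y hy hyle => le_trans (min_le_right _ _) (le_trans (csInf_le hbdd hy) hyle)
    have hT : (ω - 2 + 3) / 2 = (ω + 1) / 2 := by ring
    by_cases h2 : 1 / 2 ≤ h {2}
    · refine key (MM h (ω - 2) {0} {1} {3} {2}) ?_ ?_
      · exact ⟨{0}, {1}, {3}, {2}, by decide, by decide, by decide, by decide, by decide,
          by decide, by decide, by decide, by decide, by decide, rfl⟩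
      · rw [← hT]
        exact mm_case1 h hpoly hedge _ hγ0 hγ1 (by decide) (by decide) (by decide) h2
    · by_cases h3 : 1 / 2 ≤ h {3}
      · refine key (MM h (ω - 2) {0} {1} {2} {3}) ?_ ?_
        · exact ⟨{0}, {1}, {2}, {3}, by decide, by decide, by decide, by decide, by decide,
            by decide, by decide, by decide, by decide, by decide, rfl⟩
        · rw [← hT]
          exact mm_case1 h hpoly hedge _ hγ0 hγ1 (by decide) (by decide) (by decide) h3
      · refine key (MM h (ω - 2) {0, 1} {2} {3} ∅) ?_ ?_
        · exact ⟨{0, 1}, {2}, {3}, ∅, by decide, by decide, by decide, by decide, by decide,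
            by decide, by decide, by decide, by decide, by decide, rfl⟩
        · rw [← hT]
          exact mm_case2 h hpoly hedge _ hγ0 hγ1 (by linarith) (by linarith)
end

section
/- Fix ω ∈ [2,3]. The maximum, over all edge-dominated polymatroids h on the 5-clique hypergraph (vertex set V = {X, Y, Z, W, L}, hyperedges all 2-element subsets), of min( h(V), min over all partitions of V into pairwise-disjoint sets A, B, C, D with A, B, C nonempty and D possibly empty and A∪B∪C∪D = V of MM(A;B;C|D) ) equals ω/2 + 1. In particular, the ω-submodular width of the 5-clique query equals ω/2 + 1. -/
open Finset

lemma mm_card_half (γ : ℝ) (hγ0 : 0 ≤ γ) (hγ1 : γ ≤ 1)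
    (A B C D : Finset (Fin 5)) (hA : A.Nonempty) (hB : B.Nonempty) (hC : C.Nonempty)
    (hAB : Disjoint A B) (hAC : Disjoint A C) (hAD : Disjoint A D)
    (hBC : Disjoint B C) (hBD : Disjoint B D) (hCD : Disjoint C D)
    (hU : A ∪ B ∪ C ∪ D = Finset.univ) :
    MM (fun S => (S.card : ℝ)/2) γ A B C D = 2 + γ/2 := by
  have hsum : A.card + B.card + C.card + D.card = 5 := by
    have h1 : Disjoint (A ∪ B) C := disjoint_union_left.mpr ⟨hAC, hBC⟩
    have h2 : Disjoint (A ∪ B ∪ C) D :=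
      disjoint_union_left.mpr ⟨disjoint_union_left.mpr ⟨hAD, hBD⟩, hCD⟩
    have := congrArg Finset.card hU
    rwa [card_union_of_disjoint h2, card_union_of_disjoint h1,
      card_union_of_disjoint hAB, card_univ, Fintype.card_fin] at this
  have hA1 : 1 ≤ A.card := Finset.one_le_card.mpr hA
  have hB1 : 1 ≤ B.card := Finset.one_le_card.mpr hB
  have hC1 : 1 ≤ C.card := Finset.one_le_card.mpr hC
  have hone : A.card = 1 ∨ B.card = 1 ∨ C.card = 1 := by omega
  have eA : ((A ∪ D).card : ℝ) = A.card + D.card := by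
    rw [card_union_of_disjoint hAD]; push_cast; ring
  have eB : ((B ∪ D).card : ℝ) = B.card + D.card := by
    rw [card_union_of_disjoint hBD]; push_cast; ring
  have eC : ((C ∪ D).card : ℝ) = C.card + D.card := by
    rw [card_union_of_disjoint hCD]; push_cast; ring
  have hsumR : (A.card : ℝ) + B.card + C.card + D.card = 5 := by
    exact_mod_cast congrArg (fun n : ℕ => (n : ℝ)) hsum
  have hA1R : (1:ℝ) ≤ A.card := by exact_mod_cast hA1
  have hB1R : (1:ℝ) ≤ B.card := by exact_mod_cast hB1
  have hC1R : (1:ℝ) ≤ C.card := by exact_mod_cast hC1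
  simp only [MM, eA, eB, eC]
  have kA : 0 ≤ (1 - γ) * ((A.card : ℝ) - 1) :=
    mul_nonneg (by linarith) (by linarith)
  have kB : 0 ≤ (1 - γ) * ((B.card : ℝ) - 1) :=
    mul_nonneg (by linarith) (by linarith)
  have kC : 0 ≤ (1 - γ) * ((C.card : ℝ) - 1) :=
    mul_nonneg (by linarith) (by linarith)
  apply le_antisymm
  · apply max_le (max_le ?_ ?_) ?_ <;> linarith [kA, kB, kC]
  · rcases hone with h1 | h1 | h1
    · have h1R : (A.card : ℝ) = 1 := by exact_mod_cast h1
      refine le_trans ?_ (le_max_right _ _)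
      rw [h1R]; linarith
    · have h1R : (B.card : ℝ) = 1 := by exact_mod_cast h1
      refine le_trans (le_trans ?_ (le_max_right _ _)) (le_max_left _ _)
      rw [h1R]; linarith
    · have h1R : (C.card : ℝ) = 1 := by exact_mod_cast h1
      refine le_trans (le_trans ?_ (le_max_left _ _)) (le_max_left _ _)
      rw [h1R]; linarith

/-- the ω-submodular width of the 5-clique query equals `ω/2 + 1`. -/
theorem omega_subw_five_clique (ω : ℝ) (hω₂ : 2 ≤ ω) (hω₃ : ω ≤ 3) :
    IsGreatest
      {x : ℝ | ∃ h : Finset (Fin 5) → ℝ, IsPolymatroid h ∧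
        (∀ e : Finset (Fin 5), e.card = 2 → h e ≤ 1) ∧
        x = min (h Finset.univ)
          (sInf {y : ℝ | ∃ A B C D : Finset (Fin 5),
            A.Nonempty ∧ B.Nonempty ∧ C.Nonempty ∧
            Disjoint A B ∧ Disjoint A C ∧ Disjoint A D ∧
            Disjoint B C ∧ Disjoint B D ∧ Disjoint C D ∧
            A ∪ B ∪ C ∪ D = Finset.univ ∧
            y = MM h (ω - 2) A B C D})}
      (ω / 2 + 1) := by
  have hγ0 : (0:ℝ) ≤ ω - 2 := by linarith
  have hγ1 : ω - 2 ≤ 1 := by linarith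
  constructor
  · -- membership: the modular polymatroid h(S) = |S|/2
    refine ⟨fun S => (S.card : ℝ)/2,
      ⟨by simp, fun A => by positivity,
       fun A B hAB => by
         have h1 : (A.card : ℝ) ≤ B.card := by exact_mod_cast Finset.card_le_card hAB
         linarith,
       fun A B => by
         have h1 : ((A ∪ B).card : ℝ) + ((A ∩ B).card : ℝ) = A.card + B.card := by
           exact_mod_cast Finset.card_union_add_card_inter A B
         linarith⟩,
      fun e he => by simp [he], ?_⟩
    have hset : {y : ℝ | ∃ A B C D : Finset (Fin 5),
        A.Nonempty ∧ B.Nonempty ∧ C.Nonempty ∧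
        Disjoint A B ∧ Disjoint A C ∧ Disjoint A D ∧
        Disjoint B C ∧ Disjoint B D ∧ Disjoint C D ∧
        A ∪ B ∪ C ∪ D = Finset.univ ∧
        y = MM (fun S => (S.card : ℝ)/2) (ω - 2) A B C D} = {2 + (ω - 2)/2} := by
      ext y
      simp only [Set.mem_setOf_eq, Set.mem_singleton_iff]
      constructor
      · rintro ⟨A, B, C, D, hA, hB, hC, h1, h2, h3, h4, h5, h6, hU, rfl⟩
        exact mm_card_half _ hγ0 hγ1 A B C D hA hB hC h1 h2 h3 h4 h5 h6 hU
      · rintro rfl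
        exact ⟨{0}, {1}, {2}, {3,4}, ⟨0, by decide⟩, ⟨1, by decide⟩, ⟨2, by decide⟩,
          by decide, by decide, by decide, by decide, by decide, by decide, by decide,
          (mm_card_half _ hγ0 hγ1 _ _ _ _ ⟨0, by decide⟩ ⟨1, by decide⟩ ⟨2, by decide⟩
            (by decide) (by decide) (by decide) (by decide) (by decide) (by decide)
            (by decide)).symm⟩
    rw [hset, csInf_singleton]
    have huniv : (((Finset.univ : Finset (Fin 5)).card : ℝ))/2 = 5/2 := by simp
    rw [show ((fun S => ((S.card : ℝ))/2) (Finset.univ : Finset (Fin 5))) = 5/2 from huniv]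
    rw [min_eq_right (by linarith)]
    ring
  · -- upper bound
    rintro x ⟨h, ⟨he0, hnn, hmono, hsub⟩, hedge, rfl⟩
    have hbdd : (0 : ℝ) ∈ lowerBounds {y : ℝ | ∃ A B C D : Finset (Fin 5),
        A.Nonempty ∧ B.Nonempty ∧ C.Nonempty ∧
        Disjoint A B ∧ Disjoint A C ∧ Disjoint A D ∧
        Disjoint B C ∧ Disjoint B D ∧ Disjoint C D ∧
        A ∪ B ∪ C ∪ D = Finset.univ ∧
        y = MM h (ω - 2) A B C D} := by
      rintro y ⟨A, B, C, D, -, -, -, -, -, -, -, -, -, -, rfl⟩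
      have iA : 0 ≤ h (A ∪ D) - h D := sub_nonneg.mpr (hmono _ _ Finset.subset_union_right)
      have iB : 0 ≤ h (B ∪ D) - h D := sub_nonneg.mpr (hmono _ _ Finset.subset_union_right)
      have iC : 0 ≤ h (C ∪ D) - h D := sub_nonneg.mpr (hmono _ _ Finset.subset_union_right)
      have hD := hnn D
      have hm := mul_nonneg hγ0 iA
      simp only [MM]
      refine le_trans ?_ (le_max_right _ _)
      linarith
    refine le_trans (min_le_right _ _) ?_
    by_cases hc : h {0} ≤ 1/2
    · -- partition {0}, {1,2}, {3,4}, ∅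
      refine le_trans (csInf_le ⟨0, hbdd⟩
        ⟨{0}, {1,2}, {3,4}, ∅, ⟨0, by decide⟩, ⟨1, by decide⟩, ⟨3, by decide⟩,
          by decide, by decide, by decide, by decide, by decide, by decide, by decide,
          rfl⟩) ?_
      have e1 : h {1,2} ≤ 1 := hedge _ (by decide)
      have e2 : h {3,4} ≤ 1 := hedge _ (by decide)
      have n0 := hnn {0}
      have n1 := hnn ({1,2} : Finset (Fin 5))
      have n2 := hnn ({3,4} : Finset (Fin 5))
      have m1 : (ω-2) * h {3,4} ≤ (ω-2) * 1 := mul_le_mul_of_nonneg_left e2 hγ0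
      have m2 : (ω-2) * h {1,2} ≤ (ω-2) * 1 := mul_le_mul_of_nonneg_left e1 hγ0
      have m3 : (ω-2) * h {0} ≤ (ω-2) * (1/2) := mul_le_mul_of_nonneg_left hc hγ0
      simp only [MM, Finset.union_empty, he0, sub_zero, add_zero]
      apply max_le (max_le ?_ ?_) ?_ <;> linarith
    · -- partition {1}, {2}, {3} | {0,4}
      push_neg at hc
      refine le_trans (csInf_le ⟨0, hbdd⟩
        ⟨{1}, {2}, {3}, {0,4}, ⟨1, by decide⟩, ⟨2, by decide⟩, ⟨3, by decide⟩,
          by decide, by decide, by decide, by decide, by decide, by decide, by decide,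
          rfl⟩) ?_
      have u1a : h ({1} ∪ {0,4}) + h {0} ≤ 1 + h {0,4} := by
        have s := hsub {1,0} {0,4}
        rw [show ({1,0} : Finset (Fin 5)) ∪ {0,4} = {1} ∪ {0,4} from by decide,
          show ({1,0} : Finset (Fin 5)) ∩ {0,4} = {0} from by decide] at s
        have := hedge {1,0} (by decide); linarith
      have u1b : h ({1} ∪ {0,4}) + h {4} ≤ 1 + h {0,4} := by
        have s := hsub {1,4} {0,4}
        rw [show ({1,4} : Finset (Fin 5)) ∪ {0,4} = {1} ∪ {0,4} from by decide,
          show ({1,4} : Finset (Fin 5)) ∩ {0,4} = {4} from by decide] at s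
        have := hedge {1,4} (by decide); linarith
      have u2a : h ({2} ∪ {0,4}) + h {0} ≤ 1 + h {0,4} := by
        have s := hsub {2,0} {0,4}
        rw [show ({2,0} : Finset (Fin 5)) ∪ {0,4} = {2} ∪ {0,4} from by decide,
          show ({2,0} : Finset (Fin 5)) ∩ {0,4} = {0} from by decide] at s
        have := hedge {2,0} (by decide); linarith
      have u2b : h ({2} ∪ {0,4}) + h {4} ≤ 1 + h {0,4} := by
        have s := hsub {2,4} {0,4}
        rw [show ({2,4} : Finset (Fin 5)) ∪ {0,4} = {2} ∪ {0,4} from by decide,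
          show ({2,4} : Finset (Fin 5)) ∩ {0,4} = {4} from by decide] at s
        have := hedge {2,4} (by decide); linarith
      have u3a : h ({3} ∪ {0,4}) + h {0} ≤ 1 + h {0,4} := by
        have s := hsub {3,0} {0,4}
        rw [show ({3,0} : Finset (Fin 5)) ∪ {0,4} = {3} ∪ {0,4} from by decide,
          show ({3,0} : Finset (Fin 5)) ∩ {0,4} = {0} from by decide] at s
        have := hedge {3,0} (by decide); linarith
      have u3b : h ({3} ∪ {0,4}) + h {4} ≤ 1 + h {0,4} := by
        have s := hsub {3,4} {0,4}
        rw [show ({3,4} : Finset (Fin 5)) ∪ {0,4} = {3} ∪ {0,4} from by decide,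
          show ({3,4} : Finset (Fin 5)) ∩ {0,4} = {4} from by decide] at s
        have := hedge {3,4} (by decide); linarith
      have d04 : h {0,4} ≤ h {0} + h {4} := by
        have s := hsub {0} {4}
        rw [show ({0} : Finset (Fin 5)) ∪ {4} = {0,4} from by decide,
          show ({0} : Finset (Fin 5)) ∩ {4} = ∅ from by decide, he0] at s
        linarith
      have m1 : (ω-2) * (h ({1} ∪ {0,4}) - h {0,4}) ≤ (ω-2) * (1 - h {0}) :=
        mul_le_mul_of_nonneg_left (by linarith) hγ0
      have m2 : (ω-2) * (h ({2} ∪ {0,4}) - h {0,4}) ≤ (ω-2) * (1 - h {0}) :=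
        mul_le_mul_of_nonneg_left (by linarith) hγ0
      have m3 : (ω-2) * (h ({3} ∪ {0,4}) - h {0,4}) ≤ (ω-2) * (1 - h {0}) :=
        mul_le_mul_of_nonneg_left (by linarith) hγ0
      have mhalf : (ω-2) * (1 - h {0}) ≤ (ω-2) * (1/2) :=
        mul_le_mul_of_nonneg_left (by linarith) hγ0
      simp only [MM]
      apply max_le (max_le ?_ ?_) ?_ <;> linarith
end

section
/- Fix ω ∈ [2,3] and an integer k ≥ 6. The maximum, over all edge-dominated polymatroids h on the k-clique hypergraph (vertex set V = {X_1, …, X_k}, hyperedges all 2-element subsets), of min( h(V), min over all partitions of V into pairwise-disjoint sets A, B, C, D with A, B, C nonempty and D possibly empty and A∪B∪C∪D = V of MM(A;B;C|D) ) equals (1/2)·⌈k/3⌉ + (1/2)·⌈(k−1)/3⌉ + ((ω−2)/2)·⌊k/3⌋. In particular, the ω-submodular width of the k-clique query equals this value. -/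
open Finset

lemma pm_key {V : Type*} [DecidableEq V] [Fintype V] (h : Finset V → ℝ)
    (hp : IsPolymatroid h) (he : ∀ e : Finset V, e.card = 2 → h e ≤ 1) :
    ∀ n : ℕ, 2 ≤ n → ∀ X : Finset V, X.card = n → h X ≤ (n : ℝ) / 2 := by
  obtain ⟨h0, _hnn, _hmono, hsub⟩ := hp
  intro n
  induction n using Nat.strong_induction_on with
  | _ n ih =>
    intro hn2 X hX
    rcases eq_or_lt_of_le hn2 with h2 | h3
    · have := he X (by omega)
      rw [← h2]; norm_num; linarith
    · have hcard2 : 1 < X.card := by omega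
      obtain ⟨u, hu, v, hv, huv⟩ := Finset.one_lt_card.mp hcard2
      have hvne : v ≠ u := fun hh => huv (hh ▸ rfl)
      have hveu : v ∈ X.erase u := Finset.mem_erase.mpr ⟨hvne, hv⟩
      have hU1 : ({u, v} : Finset V) ∪ X.erase u = X := by
        rw [show ({u, v} : Finset V) = insert u {v} from rfl, Finset.insert_union,
          ← Finset.insert_eq, Finset.insert_eq_self.mpr hveu, Finset.insert_erase hu]
      have hI1 : ({u, v} : Finset V) ∩ X.erase u = {v} := by
        ext x
        simp only [Finset.mem_inter, Finset.mem_insert, Finset.mem_singleton, Finset.mem_erase]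
        constructor
        · rintro ⟨rfl | rfl, hne, _⟩
          · exact absurd rfl hne
          · rfl
        · rintro rfl; exact ⟨Or.inr rfl, hvne, hv⟩
      have hU2 : ({v} : Finset V) ∪ X.erase v = X := by
        rw [← Finset.insert_eq, Finset.insert_erase hv]
      have hI2 : ({v} : Finset V) ∩ X.erase v = ∅ := by
        ext x
        simp only [Finset.mem_inter, Finset.mem_singleton, Finset.mem_erase,
          Finset.notMem_empty, iff_false]
        rintro ⟨rfl, hne, _⟩; exact hne rfl
      have s1 := hsub {u, v} (X.erase u)
      rw [hU1, hI1] at s1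
      have s2 := hsub {v} (X.erase v)
      rw [hU2, hI2] at s2
      have he1 : h (X.erase u) ≤ ((n - 1 : ℕ) : ℝ) / 2 := by
        refine ih (n - 1) (by omega) (by omega) _ ?_
        rw [Finset.card_erase_of_mem hu, hX]
      have he2 : h (X.erase v) ≤ ((n - 1 : ℕ) : ℝ) / 2 := by
        refine ih (n - 1) (by omega) (by omega) _ ?_
        rw [Finset.card_erase_of_mem hv, hX]
      have hp1 : h {u, v} ≤ 1 := he _ (Finset.card_pair huv)
      have hcast : ((n - 1 : ℕ) : ℝ) = (n : ℝ) - 1 := by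
        rw [Nat.cast_sub (by omega)]; norm_num
      rw [hcast] at he1 he2
      rw [h0] at s2
      linarith

set_option maxHeartbeats 1000000 in
/-- for `k ≥ 6`, the ω-submodular width of the `k`-clique query
equals `⌈k/3⌉/2 + ⌈(k−1)/3⌉/2 + (ω−2)/2·⌊k/3⌋`.  (Here `⌈k/3⌉ = (k+2)/3`,
`⌈(k−1)/3⌉ = (k+1)/3` and `⌊k/3⌋ = k/3` in natural-number division.) -/
theorem omega_subw_k_clique (ω : ℝ) (hω₂ : 2 ≤ ω) (hω₃ : ω ≤ 3)
    (k : ℕ) (hk : 6 ≤ k) :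
    IsGreatest
      {x : ℝ | ∃ h : Finset (Fin k) → ℝ, IsPolymatroid h ∧
        (∀ e : Finset (Fin k), e.card = 2 → h e ≤ 1) ∧
        x = min (h Finset.univ)
          (sInf {y : ℝ | ∃ A B C D : Finset (Fin k),
            A.Nonempty ∧ B.Nonempty ∧ C.Nonempty ∧
            Disjoint A B ∧ Disjoint A C ∧ Disjoint A D ∧
            Disjoint B C ∧ Disjoint B D ∧ Disjoint C D ∧
            A ∪ B ∪ C ∪ D = Finset.univ ∧
            y = MM h (ω - 2) A B C D})}
      ((((k + 2) / 3 : ℕ) : ℝ) / 2 + (((k + 1) / 3 : ℕ) : ℝ) / 2 +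
        (ω - 2) / 2 * (((k / 3 : ℕ) : ℝ))) := by
  set γ := ω - 2 with hγdef
  have hγ0 : 0 ≤ γ := by rw [hγdef]; linarith
  have hγ1 : γ ≤ 1 := by rw [hγdef]; linarith
  set a := (k + 2) / 3 with hadef
  set b := (k + 1) / 3 with hbdef
  set c := k / 3 with hcdef
  have habc : a + b + c = k := by omega
  have hc2 : 2 ≤ c := by omega
  have hcb : c ≤ b := by omega
  have hba : b ≤ a := by omega
  have hcbR : ((c : ℕ) : ℝ) ≤ ((b : ℕ) : ℝ) := by exact_mod_cast hcb
  have hbaR : ((b : ℕ) : ℝ) ≤ ((a : ℕ) : ℝ) := by exact_mod_cast hba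
  have habcR : ((a : ℕ) : ℝ) + ((b : ℕ) : ℝ) + ((c : ℕ) : ℝ) = (k : ℝ) := by
    exact_mod_cast habc
  have hc0R : (0 : ℝ) ≤ ((c : ℕ) : ℝ) := by positivity
  have q1 : (0 : ℝ) ≤ (1 - γ) * (((b : ℕ) : ℝ) - ((c : ℕ) : ℝ)) :=
    mul_nonneg (by linarith) (by linarith)
  have q2 : (0 : ℝ) ≤ (1 - γ) * (((a : ℕ) : ℝ) - ((c : ℕ) : ℝ)) :=
    mul_nonneg (by linarith) (by linarith)
  -- the balanced partition
  have hA' : ∀ m ∈ Finset.range a, m < k := fun m hm => by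
    simp only [Finset.mem_range] at hm; omega
  have hB' : ∀ m ∈ Finset.Ico a (a + b), m < k := fun m hm => by
    simp only [Finset.mem_Ico] at hm; omega
  have hC' : ∀ m ∈ Finset.Ico (a + b) k, m < k := fun m hm => by
    simp only [Finset.mem_Ico] at hm; omega
  set A : Finset (Fin k) := Finset.attachFin (Finset.range a) hA' with hAdef
  set B : Finset (Fin k) := Finset.attachFin (Finset.Ico a (a + b)) hB' with hBdef
  set C : Finset (Fin k) := Finset.attachFin (Finset.Ico (a + b) k) hC' with hCdef
  have hcardA : A.card = a := by rw [hAdef, Finset.card_attachFin, Finset.card_range]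
  have hcardB : B.card = b := by rw [hBdef, Finset.card_attachFin, Nat.card_Ico]; omega
  have hcardC : C.card = c := by rw [hCdef, Finset.card_attachFin, Nat.card_Ico]; omega
  have hAne : A.Nonempty := Finset.card_pos.mp (by omega)
  have hBne : B.Nonempty := Finset.card_pos.mp (by omega)
  have hCne : C.Nonempty := Finset.card_pos.mp (by omega)
  have hmemA : ∀ i : Fin k, i ∈ A ↔ (i : ℕ) < a := by
    intro i; rw [hAdef, Finset.mem_attachFin, Finset.mem_range]
  have hmemB : ∀ i : Fin k, i ∈ B ↔ a ≤ (i : ℕ) ∧ (i : ℕ) < a + b := by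
    intro i; rw [hBdef, Finset.mem_attachFin, Finset.mem_Ico]
  have hmemC : ∀ i : Fin k, i ∈ C ↔ a + b ≤ (i : ℕ) := by
    intro i; rw [hCdef, Finset.mem_attachFin, Finset.mem_Ico]
    exact ⟨fun hh => hh.1, fun hh => ⟨hh, i.isLt⟩⟩
  have hdAB : Disjoint A B := Finset.disjoint_left.mpr (fun i hi hj => by
    rw [hmemA] at hi; rw [hmemB] at hj; omega)
  have hdAC : Disjoint A C := Finset.disjoint_left.mpr (fun i hi hj => by
    rw [hmemA] at hi; rw [hmemC] at hj; omega)
  have hdBC : Disjoint B C := Finset.disjoint_left.mpr (fun i hi hj => by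
    rw [hmemB] at hi; rw [hmemC] at hj; omega)
  have hunion : A ∪ B ∪ C ∪ (∅ : Finset (Fin k)) = Finset.univ := by
    rw [Finset.union_empty]
    ext i
    simp only [Finset.mem_union, Finset.mem_univ, iff_true, hmemA, hmemB, hmemC]
    omega
  set T : ℝ := ((a : ℕ) : ℝ) / 2 + ((b : ℕ) : ℝ) / 2 + γ / 2 * ((c : ℕ) : ℝ) with hTdef
  show IsGreatest _ T
  -- key inequality for the `max` of the three components
  have hkey3 : ∀ xa xb xc : ℝ, xa ≤ ((a : ℕ) : ℝ) / 2 → xb ≤ ((b : ℕ) : ℝ) / 2 →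
      xc ≤ ((c : ℕ) : ℝ) / 2 → 0 ≤ xa → 0 ≤ xb → 0 ≤ xc →
      max (max (xa + xb + γ * xc) (xa + γ * xb + xc)) (γ * xa + xb + xc) ≤ T := by
    intro xa xb xc h1 h2 h3 p1 p2 p3
    have m1 : γ * xa ≤ γ * (((a : ℕ) : ℝ) / 2) := mul_le_mul_of_nonneg_left h1 hγ0
    have m2 : γ * xb ≤ γ * (((b : ℕ) : ℝ) / 2) := mul_le_mul_of_nonneg_left h2 hγ0
    have m3 : γ * xc ≤ γ * (((c : ℕ) : ℝ) / 2) := mul_le_mul_of_nonneg_left h3 hγ0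
    have e1 : xa + xb + γ * xc ≤ T := by rw [hTdef]; nlinarith
    have e2 : xa + γ * xb + xc ≤ T := by rw [hTdef]; nlinarith
    have e3 : γ * xa + xb + xc ≤ T := by rw [hTdef]; nlinarith
    exact max_le (max_le e1 e2) e3
  have hTk : T ≤ (k : ℝ) / 2 := by
    have : (0 : ℝ) ≤ (1 - γ) * ((c : ℕ) : ℝ) := mul_nonneg (by linarith) hc0R
    rw [hTdef]; nlinarith
  constructor
  · -- membership : the polymatroid h(X) = |X|/2 achieves T
    refine ⟨fun X => (X.card : ℝ) / 2, ?_, ?_, ?_⟩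
    · refine ⟨by simp, fun X => by positivity, fun X Y hXY => ?_, fun X Y => ?_⟩
      · have h1 : (X.card : ℝ) ≤ (Y.card : ℝ) := by
          exact_mod_cast Finset.card_le_card hXY
        simp only; linarith
      · have h1 : ((X ∪ Y).card : ℝ) + ((X ∩ Y).card : ℝ) = (X.card : ℝ) + (Y.card : ℝ) := by
          exact_mod_cast Finset.card_union_add_card_inter X Y
        simp only; linarith
    · intro e he
      show ((e.card : ℝ)) / 2 ≤ 1
      rw [he]; norm_num
    · -- x = min (k/2) (sInf S) = T
      have huniv : (((Finset.univ : Finset (Fin k)).card : ℝ)) / 2 = (k : ℝ) / 2 := by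
        rw [Finset.card_univ, Fintype.card_fin]
      have hMMcomp : ∀ A' B' C' D' : Finset (Fin k),
          Disjoint A' D' → Disjoint B' D' → Disjoint C' D' →
          MM (fun X => (X.card : ℝ) / 2) γ A' B' C' D' =
          max (max ((A'.card : ℝ) / 2 + (B'.card : ℝ) / 2 + γ * ((C'.card : ℝ) / 2)
              + (D'.card : ℝ) / 2)
            ((A'.card : ℝ) / 2 + γ * ((B'.card : ℝ) / 2) + (C'.card : ℝ) / 2
              + (D'.card : ℝ) / 2))
            (γ * ((A'.card : ℝ) / 2) + (B'.card : ℝ) / 2 + (C'.card : ℝ) / 2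
              + (D'.card : ℝ) / 2) := by
        intro A' B' C' D' d1 d2 d3
        have c1 : (((A' ∪ D').card : ℝ)) = (A'.card : ℝ) + (D'.card : ℝ) := by
          rw [Finset.card_union_of_disjoint d1]; push_cast; ring
        have c2 : (((B' ∪ D').card : ℝ)) = (B'.card : ℝ) + (D'.card : ℝ) := by
          rw [Finset.card_union_of_disjoint d2]; push_cast; ring
        have c3 : (((C' ∪ D').card : ℝ)) = (C'.card : ℝ) + (D'.card : ℝ) := by
          rw [Finset.card_union_of_disjoint d3]; push_cast; ring
        simp only [MM]
        rw [c1, c2, c3]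
        congr 1
        · congr 1 <;> ring
        · ring
      have hlb : ∀ y ∈ {y : ℝ | ∃ A' B' C' D' : Finset (Fin k),
            A'.Nonempty ∧ B'.Nonempty ∧ C'.Nonempty ∧
            Disjoint A' B' ∧ Disjoint A' C' ∧ Disjoint A' D' ∧
            Disjoint B' C' ∧ Disjoint B' D' ∧ Disjoint C' D' ∧
            A' ∪ B' ∪ C' ∪ D' = Finset.univ ∧
            y = MM (fun X => (X.card : ℝ) / 2) γ A' B' C' D'}, T ≤ y := by
        rintro y ⟨A', B', C', D', hA1, hB1, hC1, d1, d2, d3, d4, d5, d6, hun, rfl⟩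
        rw [hMMcomp A' B' C' D' d3 d5 d6]
        have hna : 1 ≤ A'.card := Finset.card_pos.mpr hA1
        have hnb : 1 ≤ B'.card := Finset.card_pos.mpr hB1
        have hnc : 1 ≤ C'.card := Finset.card_pos.mpr hC1
        have hsum : A'.card + B'.card + C'.card + D'.card = k := by
          have h1 : ((A' ∪ B' ∪ C' ∪ D').card) = k := by
            rw [hun, Finset.card_univ, Fintype.card_fin]
          rw [Finset.card_union_of_disjoint (by
              exact Finset.disjoint_union_left.mpr ⟨Finset.disjoint_union_left.mpr ⟨d3, d5⟩, d6⟩),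
            Finset.card_union_of_disjoint (Finset.disjoint_union_left.mpr ⟨d2, d4⟩),
            Finset.card_union_of_disjoint d1] at h1
          omega
        have h2 : ((A'.card : ℝ)) + (B'.card : ℝ) + (C'.card : ℝ) + (D'.card : ℝ) = (k : ℝ) := by
          exact_mod_cast hsum
        have hcase : (C'.card ≤ A'.card ∧ C'.card ≤ B'.card) ∨
            (B'.card ≤ A'.card ∧ B'.card ≤ C'.card) ∨
            (A'.card ≤ B'.card ∧ A'.card ≤ C'.card) := by omega
        rcases hcase with ⟨u1, u2⟩ | ⟨u1, u2⟩ | ⟨u1, u2⟩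
        · refine le_trans ?_ (le_max_of_le_left (le_max_left _ _))
          have hle : ((C'.card : ℝ)) ≤ ((c : ℕ) : ℝ) := by exact_mod_cast (by omega : C'.card ≤ c)
          have qq : (0 : ℝ) ≤ (1 - γ) * (((c : ℕ) : ℝ) - (C'.card : ℝ)) :=
            mul_nonneg (by linarith) (by linarith)
          rw [hTdef]; nlinarith
        · refine le_trans ?_ (le_max_of_le_left (le_max_right _ _))
          have hle : ((B'.card : ℝ)) ≤ ((c : ℕ) : ℝ) := by exact_mod_cast (by omega : B'.card ≤ c)
          have qq : (0 : ℝ) ≤ (1 - γ) * (((c : ℕ) : ℝ) - (B'.card : ℝ)) :=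
            mul_nonneg (by linarith) (by linarith)
          rw [hTdef]; nlinarith
        · refine le_trans ?_ (le_max_right _ _)
          have hle : ((A'.card : ℝ)) ≤ ((c : ℕ) : ℝ) := by exact_mod_cast (by omega : A'.card ≤ c)
          have qq : (0 : ℝ) ≤ (1 - γ) * (((c : ℕ) : ℝ) - (A'.card : ℝ)) :=
            mul_nonneg (by linarith) (by linarith)
          rw [hTdef]; nlinarith
      have hmem : T ∈ {y : ℝ | ∃ A' B' C' D' : Finset (Fin k),
            A'.Nonempty ∧ B'.Nonempty ∧ C'.Nonempty ∧
            Disjoint A' B' ∧ Disjoint A' C' ∧ Disjoint A' D' ∧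
            Disjoint B' C' ∧ Disjoint B' D' ∧ Disjoint C' D' ∧
            A' ∪ B' ∪ C' ∪ D' = Finset.univ ∧
            y = MM (fun X => (X.card : ℝ) / 2) γ A' B' C' D'} := by
        refine ⟨A, B, C, ∅, hAne, hBne, hCne, hdAB, hdAC, Finset.disjoint_empty_right _,
          hdBC, Finset.disjoint_empty_right _, Finset.disjoint_empty_right _, hunion, ?_⟩
        rw [hMMcomp A B C ∅ (Finset.disjoint_empty_right _) (Finset.disjoint_empty_right _)
          (Finset.disjoint_empty_right _), hcardA, hcardB, hcardC]
        simp only [Finset.card_empty, Nat.cast_zero, zero_div, add_zero]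
        refine le_antisymm ?_ ?_
        · exact le_trans (le_of_eq (by rw [hTdef]; ring))
            (le_max_of_le_left (le_max_left _ _))
        · exact hkey3 _ _ _ le_rfl le_rfl le_rfl (by positivity) (by positivity) (by positivity)
      have hsInf : sInf {y : ℝ | ∃ A' B' C' D' : Finset (Fin k),
            A'.Nonempty ∧ B'.Nonempty ∧ C'.Nonempty ∧
            Disjoint A' B' ∧ Disjoint A' C' ∧ Disjoint A' D' ∧
            Disjoint B' C' ∧ Disjoint B' D' ∧ Disjoint C' D' ∧
            A' ∪ B' ∪ C' ∪ D' = Finset.univ ∧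
            y = MM (fun X => (X.card : ℝ) / 2) γ A' B' C' D'} = T :=
        le_antisymm (csInf_le ⟨T, hlb⟩ hmem) (le_csInf ⟨T, hmem⟩ hlb)
      show T = min (((Finset.univ : Finset (Fin k)).card : ℝ) / 2) _
      rw [huniv, hsInf, min_eq_right hTk]
  · -- upper bound
    rintro x ⟨h, hp, he, rfl⟩
    obtain ⟨h0, hnn, hmono, hsub⟩ := hp
    have hhA : h A ≤ ((a : ℕ) : ℝ) / 2 :=
      pm_key h ⟨h0, hnn, hmono, hsub⟩ he a (by omega) A hcardA
    have hhB : h B ≤ ((b : ℕ) : ℝ) / 2 :=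
      pm_key h ⟨h0, hnn, hmono, hsub⟩ he b (by omega) B hcardB
    have hhC : h C ≤ ((c : ℕ) : ℝ) / 2 :=
      pm_key h ⟨h0, hnn, hmono, hsub⟩ he c (by omega) C hcardC
    have hMM : MM h γ A B C ∅ ≤ T := by
      unfold MM
      rw [Finset.union_empty, Finset.union_empty, Finset.union_empty, h0]
      simp only [sub_zero, add_zero]
      exact hkey3 _ _ _ hhA hhB hhC (hnn A) (hnn B) (hnn C)
    have hbdd : BddBelow {y : ℝ | ∃ A' B' C' D' : Finset (Fin k),
            A'.Nonempty ∧ B'.Nonempty ∧ C'.Nonempty ∧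
            Disjoint A' B' ∧ Disjoint A' C' ∧ Disjoint A' D' ∧
            Disjoint B' C' ∧ Disjoint B' D' ∧ Disjoint C' D' ∧
            A' ∪ B' ∪ C' ∪ D' = Finset.univ ∧
            y = MM h γ A' B' C' D'} := by
      refine ⟨0, ?_⟩
      rintro y ⟨A', B', C', D', -, -, -, -, -, -, -, -, -, -, rfl⟩
      have m1 : 0 ≤ h (A' ∪ D') - h D' := by
        have := hmono D' (A' ∪ D') Finset.subset_union_right; linarith
      have m2 : 0 ≤ h (B' ∪ D') - h D' := by
        have := hmono D' (B' ∪ D') Finset.subset_union_right; linarith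
      have m3 : 0 ≤ h (C' ∪ D') - h D' := by
        have := hmono D' (C' ∪ D') Finset.subset_union_right; linarith
      have hD0 := hnn D'
      have hm3 := mul_nonneg hγ0 m3
      refine le_trans ?_ (le_max_of_le_left (le_max_left _ _))
      unfold MM at *
      linarith
    have hmem' : MM h γ A B C ∅ ∈ {y : ℝ | ∃ A' B' C' D' : Finset (Fin k),
            A'.Nonempty ∧ B'.Nonempty ∧ C'.Nonempty ∧
            Disjoint A' B' ∧ Disjoint A' C' ∧ Disjoint A' D' ∧
            Disjoint B' C' ∧ Disjoint B' D' ∧ Disjoint C' D' ∧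
            A' ∪ B' ∪ C' ∪ D' = Finset.univ ∧
            y = MM h γ A' B' C' D'} :=
      ⟨A, B, C, ∅, hAne, hBne, hCne, hdAB, hdAC, Finset.disjoint_empty_right _,
        hdBC, Finset.disjoint_empty_right _, Finset.disjoint_empty_right _, hunion, rfl⟩
    exact le_trans (min_le_right _ _) (le_trans (csInf_le hbdd hmem') hMM)
end

section
/- Fix ω ∈ [2,3]. For every polymatroid h on {Y, X_1, X_2, X_3} satisfying h({Y, X_i}) ≤ 1 for i = 1, 2, 3 and h({X_1, X_2, X_3}) ≤ 1 (edge-dominance for the 3-pyramid hypergraph), the following holds: min( h({Y, X_1, X_2, X_3}), MM({X_2};{X_3};{Y} | {X_1}) ) ≤ 2 − 1/ω. (This is the inequality establishing that the ω-submodular width of the 3-pyramid query is at most 2 − 1/ω.) -/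
open Finset

set_option maxHeartbeats 2000000 in
/-- the upper bound `2 − 1/ω` on the ω-submodular width of the
3-pyramid query.  Vertices: `Y = 0`, `X₁ = 1`, `X₂ = 2`, `X₃ = 3`. -/
theorem omega_subw_three_pyramid_upper (ω : ℝ) (hω₂ : 2 ≤ ω) (hω₃ : ω ≤ 3)
    (h : Finset (Fin 4) → ℝ) (hpoly : IsPolymatroid h)
    (hYX1 : h {0, 1} ≤ 1) (hYX2 : h {0, 2} ≤ 1) (hYX3 : h {0, 3} ≤ 1)
    (hX123 : h {1, 2, 3} ≤ 1) :
    min (h {0, 1, 2, 3}) (MM h (ω - 2) {2} {3} {0} {1}) ≤ 2 - 1 / ω := by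
  obtain ⟨h0, hnn, hmono, hsub⟩ := hpoly
  have hω0 : (0:ℝ) < ω := by linarith
  -- submodularity instances
  have sa : h {0,1,2} + h {2} ≤ h {0,2} + h {1,2} := by
    have e1 : ({0,2} : Finset (Fin 4)) ∪ {1,2} = {0,1,2} := by decide
    have e2 : ({0,2} : Finset (Fin 4)) ∩ {1,2} = {2} := by decide
    have := hsub {0,2} {1,2}; rw [e1, e2] at this; linarith
  have sb : h {0,1,2,3} + h {2,3} ≤ h {0,2,3} + h {1,2,3} := by
    have e1 : ({0,2,3} : Finset (Fin 4)) ∪ {1,2,3} = {0,1,2,3} := by decide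
    have e2 : ({0,2,3} : Finset (Fin 4)) ∩ {1,2,3} = {2,3} := by decide
    have := hsub {0,2,3} {1,2,3}; rw [e1, e2] at this; linarith
  have sc : h {0,1,2} + h {1} ≤ h {0,1} + h {1,2} := by
    have e1 : ({0,1} : Finset (Fin 4)) ∪ {1,2} = {0,1,2} := by decide
    have e2 : ({0,1} : Finset (Fin 4)) ∩ {1,2} = {1} := by decide
    have := hsub {0,1} {1,2}; rw [e1, e2] at this; linarith
  have sd : h {0,2,3} + h {3} ≤ h {0,3} + h {2,3} := by
    have e1 : ({0,3} : Finset (Fin 4)) ∪ {2,3} = {0,2,3} := by decide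
    have e2 : ({0,3} : Finset (Fin 4)) ∩ {2,3} = {3} := by decide
    have := hsub {0,3} {2,3}; rw [e1, e2] at this; linarith
  have se : h {0,1,2,3} + h {1,2} ≤ h {0,1,2} + h {1,2,3} := by
    have e1 : ({0,1,2} : Finset (Fin 4)) ∪ {1,2,3} = {0,1,2,3} := by decide
    have e2 : ({0,1,2} : Finset (Fin 4)) ∩ {1,2,3} = {1,2} := by decide
    have := hsub {0,1,2} {1,2,3}; rw [e1, e2] at this; linarith
  have sf : h {1,2} ≤ h {1} + h {2} := by
    have e1 : ({1} : Finset (Fin 4)) ∪ {2} = {1,2} := by decide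
    have e2 : ({1} : Finset (Fin 4)) ∩ {2} = ∅ := by decide
    have := hsub {1} {2}; rw [e1, e2, h0] at this; linarith
  have sg : h {1,3} ≤ h {1} + h {3} := by
    have e1 : ({1} : Finset (Fin 4)) ∪ {3} = {1,3} := by decide
    have e2 : ({1} : Finset (Fin 4)) ∩ {3} = ∅ := by decide
    have := hsub {1} {3}; rw [e1, e2, h0] at this; linarith
  have sh' : h {0,1,3} + h {3} ≤ h {0,3} + h {1,3} := by
    have e1 : ({0,3} : Finset (Fin 4)) ∪ {1,3} = {0,1,3} := by decide
    have e2 : ({0,3} : Finset (Fin 4)) ∩ {1,3} = {3} := by decide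
    have := hsub {0,3} {1,3}; rw [e1, e2] at this; linarith
  have si : h {0,1,2,3} + h {1,3} ≤ h {0,1,3} + h {1,2,3} := by
    have e1 : ({0,1,3} : Finset (Fin 4)) ∪ {1,2,3} = {0,1,2,3} := by decide
    have e2 : ({0,1,3} : Finset (Fin 4)) ∩ {1,2,3} = {1,3} := by decide
    have := hsub {0,1,3} {1,2,3}; rw [e1, e2] at this; linarith
  have sj : h {0,2,3} + h {2} ≤ h {0,2} + h {2,3} := by
    have e1 : ({0,2} : Finset (Fin 4)) ∪ {2,3} = {0,2,3} := by decide
    have e2 : ({0,2} : Finset (Fin 4)) ∩ {2,3} = {2} := by decide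
    have := hsub {0,2} {2,3}; rw [e1, e2] at this; linarith
  -- unfold MM and normalize the unions
  have u2 : ({2} : Finset (Fin 4)) ∪ {1} = {1,2} := by decide
  have u3 : ({3} : Finset (Fin 4)) ∪ {1} = {1,3} := by decide
  have u0 : ({0} : Finset (Fin 4)) ∪ {1} = {0,1} := by decide
  rw [MM, u2, u3, u0]
  set A := h {0,1,2,3} with hA
  set T1 := (h {1,2} - h {1}) + (h {1,3} - h {1}) + (ω-2) * (h {0,1} - h {1}) + h {1} with hT1
  set T2 := (h {1,2} - h {1}) + (ω-2) * (h {1,3} - h {1}) + (h {0,1} - h {1}) + h {1} with hT2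
  set T3 := (ω-2) * (h {1,2} - h {1}) + (h {1,3} - h {1}) + (h {0,1} - h {1}) + h {1} with hT3
  rw [min_max_distrib_left, min_max_distrib_left]
  have key : 2 - 1/ω = (2*ω - 1)/ω := by field_simp
  have c1 : min A T1 ≤ 2 - 1/ω := by
    have mA : min A T1 ≤ A := min_le_left _ _
    have mT : min A T1 ≤ T1 := min_le_right _ _
    have step : (6 - ω) * min A T1 ≤ 8 - ω := by
      nlinarith [mul_le_mul_of_nonneg_left mA (by linarith : (0:ℝ) ≤ 5 - ω),
        mul_le_mul_of_nonneg_left sc (by linarith : (0:ℝ) ≤ 3 - ω),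
        mul_le_mul_of_nonneg_left se (by linarith : (0:ℝ) ≤ 4 - ω),
        mul_le_mul_of_nonneg_left hX123 (by linarith : (0:ℝ) ≤ 5 - ω),
        sa, sb, sd, sf, sg, hYX1, hYX2, hYX3, mT]
    have h6 : (0:ℝ) < 6 - ω := by linarith
    rw [key, le_div_iff₀ hω0]
    have final : (min A T1 * ω) * (6 - ω) ≤ (2*ω - 1) * (6 - ω) := by
      nlinarith [mul_le_mul_of_nonneg_left step hω0.le,
        mul_nonneg (by linarith : (0:ℝ) ≤ ω - 2) (by linarith : (0:ℝ) ≤ 3 - ω)]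
    exact le_of_mul_le_mul_right final h6
  have c2 : min A T2 ≤ 2 - 1/ω := by
    have mA : min A T2 ≤ A := min_le_left _ _
    have mT : min A T2 ≤ T2 := min_le_right _ _
    rw [key, le_div_iff₀ hω0]
    nlinarith [mul_le_mul_of_nonneg_left mA (by linarith : (0:ℝ) ≤ ω - 1),
      mul_le_mul_of_nonneg_left sh' (by linarith : (0:ℝ) ≤ ω - 2),
      mul_le_mul_of_nonneg_left si (by linarith : (0:ℝ) ≤ ω - 2),
      mul_le_mul_of_nonneg_left sg (by linarith : (0:ℝ) ≤ ω - 2),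
      mul_le_mul_of_nonneg_left hYX3 (by linarith : (0:ℝ) ≤ ω - 2),
      mul_le_mul_of_nonneg_left hX123 (by linarith : (0:ℝ) ≤ ω - 1),
      sb, sj, sf, hYX1, hYX2, mT]
  have c3 : min A T3 ≤ 2 - 1/ω := by
    have mA : min A T3 ≤ A := min_le_left _ _
    have mT : min A T3 ≤ T3 := min_le_right _ _
    rw [key, le_div_iff₀ hω0]
    nlinarith [mul_le_mul_of_nonneg_left mA (by linarith : (0:ℝ) ≤ ω - 1),
      mul_le_mul_of_nonneg_left sa (by linarith : (0:ℝ) ≤ ω - 2),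
      mul_le_mul_of_nonneg_left se (by linarith : (0:ℝ) ≤ ω - 2),
      mul_le_mul_of_nonneg_left sf (by linarith : (0:ℝ) ≤ ω - 2),
      mul_le_mul_of_nonneg_left hYX2 (by linarith : (0:ℝ) ≤ ω - 2),
      mul_le_mul_of_nonneg_left hX123 (by linarith : (0:ℝ) ≤ ω - 1),
      sb, sd, sg, hYX1, hYX3, mT]
  exact max_le (max_le c1 c2) c3
end

section
/- Fix ω ∈ [2,3] and an integer k ≥ 3, and let V = {Y, X_1, …, X_k}. Define M as follows: if k is odd, M := MM( {X_2, …, X_{(k+1)/2}} ; {X_{(k+3)/2}, …, X_k} ; {Y} | {X_1} ); if k is even, M := MM( {X_1, …, X_{k/2}} ; {X_{k/2+1}, …, X_k} ; {Y} ). Then for every polymatroid h on V satisfying h({Y, X_i}) ≤ 1 for all i ∈ {1, …, k} and h({X_1, …, X_k}) ≤ 1 (edge-dominance for the k-pyramid hypergraph): min( h(V), M ) ≤ 2 − 2/(ω·(k−1) − k + 3). (This is the inequality establishing that the ω-submodular width of the k-pyramid query is at most 2 − 2/(ω(k−1) − k + 3).) -/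
open Finset

/-- Cardinality of a filter over `Fin n` via a filter over `range n`. -/
lemma card_filter_val {n : ℕ} (p : Fin n → Prop) [DecidablePred p]
    (P : ℕ → Prop) [DecidablePred P] (hpP : ∀ v : Fin n, p v ↔ P (v : ℕ)) :
    ((Finset.univ : Finset (Fin n)).filter p).card = ((Finset.range n).filter P).card := by
  apply Finset.card_bij (fun (v : Fin n) _ => (v : ℕ))
  · intro a ha
    simp only [Finset.mem_filter, Finset.mem_range]
    exact ⟨a.isLt, (hpP a).1 (Finset.mem_filter.1 ha).2⟩
  · intro a _ b _ hab
    exact Fin.val_injective hab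
  · intro b hb
    simp only [Finset.mem_filter, Finset.mem_range] at hb
    refine ⟨⟨b, hb.1⟩, ?_, rfl⟩
    simp only [Finset.mem_filter, Finset.mem_univ, true_and]
    exact (hpP _).2 hb.2

/-- Arithmetic core for the odd case. -/
lemma aux_odd (γ m v aG bG yG yAG yBG g c x : ℝ)
    (hγ0 : 0 ≤ γ) (hγ1 : γ ≤ 1) (hm : 2 ≤ m)
    (hg : 0 ≤ g) (hc : 0 ≤ c)
    (F1 : v + aG ≤ yAG + x) (F2 : v + bG ≤ yBG + x) (F3 : v + g ≤ yG + x)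
    (F4 : yAG + (m - 1) * c ≤ yG + (m - 1))
    (F4' : yAG + m * c ≤ c + m)
    (F5 : yBG + m * c ≤ c + m)
    (F6 : yG ≤ c + g) (F7 : x ≤ 1) :
    min v (max (max ((aG - g) + (bG - g) + γ * (yG - g) + g)
                    ((aG - g) + γ * (bG - g) + (yG - g) + g))
               (γ * (aG - g) + (bG - g) + (yG - g) + g))
      ≤ 2 - 2 / (γ * (2 * m - 2) + 2 * m) := by
  set D : ℝ := γ * (2 * m - 2) + 2 * m with hD
  have hD0 : 0 < D := by
    have : 0 ≤ γ * (2 * m - 2) := mul_nonneg hγ0 (by linarith)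
    simp only [hD]; linarith
  rcases le_or_gt v (2 - 2 / D) with hv | hv
  · exact le_trans (min_le_left _ _) hv
  refine le_trans (min_le_right _ _) ?_
  -- term 1 : γ on C
  have ht1 : (aG - g) + (bG - g) + γ * (yG - g) + g ≤ 2 - 2 / D := by
    have Q3 : (2 * m - 3 - γ) * ((v + g) - (yG + x)) ≤ 0 :=
      mul_nonpos_of_nonneg_of_nonpos (by linarith) (by linarith)
    have Q6 : (2 * m - 2) * (yG - (c + g)) ≤ 0 :=
      mul_nonpos_of_nonneg_of_nonpos (by linarith) (by linarith)
    have Q7 : (2 * m - 1 - γ) * (x - 1) ≤ 0 :=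
      mul_nonpos_of_nonneg_of_nonpos (by linarith) (by linarith)
    have hb1 : (2 * m - 1 - γ) * v + ((aG - g) + (bG - g) + γ * (yG - g) + g)
        ≤ 4 * m - 2 - γ := by linarith [Q3, Q6, Q7, F1, F2, F4, F5]
    have key : 2 * (2 * m - γ) ≤ (2 - γ) * D := by
      nlinarith [mul_nonneg (mul_nonneg hγ0 (by linarith : (0:ℝ) ≤ 1 - γ))
        (by linarith : (0:ℝ) ≤ m - 1)]
    have h2 : (2 * m - γ) * (2 / D) ≤ 2 - γ := by
      rw [show (2 * m - γ) * (2 / D) = (2 * (2 * m - γ)) / D from by ring,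
        div_le_iff₀ hD0]
      linarith [key]
    have hs1 : 4 * m - 2 - γ ≤ (2 * m - γ) * (2 - 2 / D) := by
      have : (2 * m - γ) * (2 - 2 / D) = 2 * (2 * m - γ) - (2 * m - γ) * (2 / D) := by ring
      rw [this]; linarith
    have P : 0 ≤ (2 * m - 1 - γ) * (v - (2 - 2 / D)) :=
      mul_nonneg (by linarith) (by linarith)
    linarith [hb1, hs1, P]
  -- common data for terms 2 and 3
  have hmu : 0 ≤ (m - 1) * (1 + γ) := mul_nonneg (by linarith) (by linarith)
  have h2eq : 2 * ((m - 1) * (1 + γ) + 1) = D := by rw [hD]; ring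
  have e1 : ((m - 1) * (1 + γ) + 1) * (2 - 2 / D) = D - 1 := by
    have : ((m - 1) * (1 + γ) + 1) * (2 - 2 / D)
        = 2 * ((m - 1) * (1 + γ) + 1) - (2 * ((m - 1) * (1 + γ) + 1)) / D := by ring
    rw [this, h2eq, div_self (ne_of_gt hD0)]
  have P : 0 ≤ ((m - 1) * (1 + γ)) * (v - (2 - 2 / D)) := mul_nonneg hmu (by linarith)
  have QQ3 : ((m - 2) * (1 + γ)) * ((v + g) - (yG + x)) ≤ 0 :=
    mul_nonpos_of_nonneg_of_nonpos (mul_nonneg (by linarith) (by linarith)) (by linarith)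
  have QQ6 : ((m - 1) * (1 + γ)) * (yG - (c + g)) ≤ 0 :=
    mul_nonpos_of_nonneg_of_nonpos hmu (by linarith)
  have QQ7 : ((m - 1) * (1 + γ)) * (x - 1) ≤ 0 :=
    mul_nonpos_of_nonneg_of_nonpos hmu (by linarith)
  have Q4a : γ * ((yAG + (m - 1) * c) - (yG + (m - 1))) ≤ 0 :=
    mul_nonpos_of_nonneg_of_nonpos hγ0 (by linarith)
  have Q5g : γ * ((yBG + m * c) - (c + m)) ≤ 0 :=
    mul_nonpos_of_nonneg_of_nonpos hγ0 (by linarith)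
  -- term 2 : γ on B
  have ht2 : (aG - g) + γ * (bG - g) + (yG - g) + g ≤ 2 - 2 / D := by
    have Q2 : γ * ((v + bG) - (yBG + x)) ≤ 0 :=
      mul_nonpos_of_nonneg_of_nonpos hγ0 (by linarith)
    have Q4b : (1 - γ) * ((yAG + m * c) - (c + m)) ≤ 0 :=
      mul_nonpos_of_nonneg_of_nonpos (by linarith) (by linarith)
    have hb2 : ((m - 1) * (1 + γ)) * v + ((aG - g) + γ * (bG - g) + (yG - g) + g)
        ≤ D - 1 := by
      have hDval : D - 1 = 2 * m - 1 + 2 * γ * (m - 1) := by rw [hD]; ring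
      rw [hDval]
      linarith [F1, Q2, QQ3, Q4a, Q4b, Q5g, QQ6, QQ7]
    linarith [hb2, e1, P]
  -- term 3 : γ on A
  have ht3 : γ * (aG - g) + (bG - g) + (yG - g) + g ≤ 2 - 2 / D := by
    have Q1 : γ * ((v + aG) - (yAG + x)) ≤ 0 :=
      mul_nonpos_of_nonneg_of_nonpos hγ0 (by linarith)
    have hb3 : ((m - 1) * (1 + γ)) * v + (γ * (aG - g) + (bG - g) + (yG - g) + g)
        ≤ D - 1 := by
      have hDval : D - 1 = 2 * m - 1 + 2 * γ * (m - 1) := by rw [hD]; ring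
      rw [hDval]
      linarith [Q1, F2, QQ3, Q4a, F5, QQ6, QQ7]
    linarith [hb3, e1, P]
  exact max_le (max_le ht1 ht2) ht3

/-- Arithmetic core for the even case. -/
lemma aux_even (γ m v aG bG yA yB c x : ℝ)
    (hγ0 : 0 ≤ γ) (hγ1 : γ ≤ 1) (hm : 2 ≤ m) (hc : 0 ≤ c)
    (F1 : v + aG ≤ yA + x) (F2 : v + bG ≤ yB + x) (F3 : v ≤ c + x)
    (F4 : yA + m * c ≤ c + m) (F5 : yB + m * c ≤ c + m) (F7 : x ≤ 1) :
    min v (max (max (aG + bG + γ * c) (aG + γ * bG + c)) (γ * aG + bG + c))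
      ≤ 2 - 2 / (γ * (2 * m - 1) + 2 * m + 1) := by
  set D : ℝ := γ * (2 * m - 1) + 2 * m + 1 with hD
  have hD0 : 0 < D := by
    have : 0 ≤ γ * (2 * m - 1) := mul_nonneg hγ0 (by linarith)
    simp only [hD]; linarith
  rcases le_or_gt v (2 - 2 / D) with hv | hv
  · exact le_trans (min_le_left _ _) hv
  refine le_trans (min_le_right _ _) ?_
  -- term 1 : γ on C
  have ht1 : aG + bG + γ * c ≤ 2 - 2 / D := by
    have Q3 : (2 * m - 2 - γ) * (v - (c + x)) ≤ 0 :=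
      mul_nonpos_of_nonneg_of_nonpos (by linarith) (by linarith)
    have Q7 : (2 * m - γ) * (x - 1) ≤ 0 :=
      mul_nonpos_of_nonneg_of_nonpos (by linarith) (by linarith)
    have hb1 : (2 * m - γ) * v + (aG + bG + γ * c) ≤ 4 * m - γ := by
      linarith [Q3, Q7, F1, F2, F4, F5]
    have key : 2 * (2 * m + 1 - γ) ≤ (2 - γ) * D := by
      nlinarith [mul_nonneg (mul_nonneg hγ0 (by linarith : (0:ℝ) ≤ 1 - γ))
        (by linarith : (0:ℝ) ≤ 2 * m - 1)]
    have h2 : (2 * m + 1 - γ) * (2 / D) ≤ 2 - γ := by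
      rw [show (2 * m + 1 - γ) * (2 / D) = (2 * (2 * m + 1 - γ)) / D from by ring,
        div_le_iff₀ hD0]
      linarith [key]
    have hs1 : 4 * m - γ ≤ (2 * m + 1 - γ) * (2 - 2 / D) := by
      have : (2 * m + 1 - γ) * (2 - 2 / D)
          = 2 * (2 * m + 1 - γ) - (2 * m + 1 - γ) * (2 / D) := by ring
      rw [this]; linarith
    have P : 0 ≤ (2 * m - γ) * (v - (2 - 2 / D)) := mul_nonneg (by linarith) (by linarith)
    linarith [hb1, hs1, P]
  -- common for terms 2,3
  have hmu : 0 ≤ m * (1 + γ) - 1 := by nlinarith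
  have key2 : 2 * m * (1 + γ) ≤ D := by rw [hD]; nlinarith
  have h2 : (m * (1 + γ)) * (2 / D) ≤ 1 := by
    rw [show (m * (1 + γ)) * (2 / D) = (2 * m * (1 + γ)) / D from by ring, div_le_one hD0]
    exact key2
  have hs2 : 2 * m * (1 + γ) - 1 ≤ (m * (1 + γ)) * (2 - 2 / D) := by
    have : (m * (1 + γ)) * (2 - 2 / D) = 2 * m * (1 + γ) - (m * (1 + γ)) * (2 / D) := by ring
    rw [this]; linarith
  have P : 0 ≤ (m * (1 + γ) - 1) * (v - (2 - 2 / D)) := mul_nonneg hmu (by linarith)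
  have Q3' : ((m - 1) * (1 + γ) - 1) * (v - (c + x)) ≤ 0 :=
    mul_nonpos_of_nonneg_of_nonpos (by nlinarith) (by linarith)
  have Q7' : (m * (1 + γ) - 1) * (x - 1) ≤ 0 :=
    mul_nonpos_of_nonneg_of_nonpos hmu (by linarith)
  -- term 2 : γ on B
  have ht2 : aG + γ * bG + c ≤ 2 - 2 / D := by
    have Q2 : γ * ((v + bG) - (yB + x)) ≤ 0 :=
      mul_nonpos_of_nonneg_of_nonpos hγ0 (by linarith)
    have Q5 : γ * ((yB + m * c) - (c + m)) ≤ 0 :=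
      mul_nonpos_of_nonneg_of_nonpos hγ0 (by linarith)
    have hb2 : (m * (1 + γ) - 1) * v + (aG + γ * bG + c) ≤ 2 * m * (1 + γ) - 1 := by
      linarith [F1, Q2, Q3', F4, Q5, Q7']
    linarith [hb2, hs2, P]
  -- term 3 : γ on A
  have ht3 : γ * aG + bG + c ≤ 2 - 2 / D := by
    have Q1 : γ * ((v + aG) - (yA + x)) ≤ 0 :=
      mul_nonpos_of_nonneg_of_nonpos hγ0 (by linarith)
    have Q4 : γ * ((yA + m * c) - (c + m)) ≤ 0 :=
      mul_nonpos_of_nonneg_of_nonpos hγ0 (by linarith)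
    have hb3 : (m * (1 + γ) - 1) * v + (γ * aG + bG + c) ≤ 2 * m * (1 + γ) - 1 := by
      linarith [Q1, F2, Q3', Q4, F5, Q7']
    linarith [hb3, hs2, P]
  exact max_le (max_le ht1 ht2) ht3

/-- the upper bound `2 − 2/(ω(k−1) − k + 3)` on the ω-submodular
width of the `k`-pyramid query, `k ≥ 3`.  Vertices of `Fin (k+1)`: `Y = 0`
and `Xᵢ = i` for `1 ≤ i ≤ k`.  The matrix-multiplication term `M` is
`MM({X₂,…,X_{(k+1)/2}}; {X_{(k+3)/2},…,X_k}; {Y} | {X₁})` for odd `k` and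
`MM({X₁,…,X_{k/2}}; {X_{k/2+1},…,X_k}; {Y})` for even `k`. -/
theorem omega_subw_k_pyramid_upper (ω : ℝ) (hω₂ : 2 ≤ ω) (hω₃ : ω ≤ 3)
    (k : ℕ) (hk : 3 ≤ k)
    (h : Finset (Fin (k + 1)) → ℝ) (hpoly : IsPolymatroid h)
    (hED₁ : ∀ i : Fin (k + 1), i ≠ 0 → h {0, i} ≤ 1)
    (hED₂ : h ({0}ᶜ) ≤ 1) :
    min (h Finset.univ)
      (if k % 2 = 1 then
        MM h (ω - 2)
          (Finset.univ.filter (fun v : Fin (k + 1) => 2 ≤ (v : ℕ) ∧ (v : ℕ) ≤ (k + 1) / 2))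
          (Finset.univ.filter (fun v : Fin (k + 1) => (k + 1) / 2 < (v : ℕ)))
          {0} {1}
      else
        MM h (ω - 2)
          (Finset.univ.filter (fun v : Fin (k + 1) => 1 ≤ (v : ℕ) ∧ (v : ℕ) ≤ k / 2))
          (Finset.univ.filter (fun v : Fin (k + 1) => k / 2 < (v : ℕ)))
          {0} ∅)
    ≤ 2 - 2 / (ω * ((k : ℝ) - 1) - (k : ℝ) + 3) := by
  obtain ⟨h0, hnn, hmono, hsub⟩ := hpoly
  have hγ0 : (0:ℝ) ≤ ω - 2 := by linarith
  have hγ1 : ω - 2 ≤ 1 := by linarith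
  have h1v : ((1 : Fin (k+1)) : ℕ) = 1 := by
    rw [Fin.val_one', Nat.mod_eq_of_lt (by omega)]
  have h0v : ((0 : Fin (k+1)) : ℕ) = 0 := rfl
  -- generic submodular consequence
  have Fgen : ∀ S : Finset (Fin (k+1)), (0 : Fin (k+1)) ∉ S →
      h Finset.univ + h S ≤ h (insert 0 S) + h ({0}ᶜ) := by
    intro S h0S
    have key := hsub (insert 0 S) ({0}ᶜ)
    have e1 : insert 0 S ∪ ({0}ᶜ : Finset (Fin (k+1))) = Finset.univ := by
      ext x
      simp only [Finset.mem_union, Finset.mem_insert, Finset.mem_compl,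
        Finset.mem_singleton, Finset.mem_univ, iff_true]
      by_cases hx : x = 0
      · exact Or.inl (Or.inl hx)
      · exact Or.inr hx
    have e2 : insert 0 S ∩ ({0}ᶜ : Finset (Fin (k+1))) = S := by
      ext x
      simp only [Finset.mem_inter, Finset.mem_insert, Finset.mem_compl, Finset.mem_singleton]
      constructor
      · rintro ⟨hx | hx, hx0⟩
        · exact absurd hx hx0
        · exact hx
      · intro hx
        exact ⟨Or.inr hx, fun e => h0S (e ▸ hx)⟩
    rwa [e1, e2] at key
  -- chain lemma
  have chain : ∀ S T : Finset (Fin (k+1)), (0 : Fin (k+1)) ∈ T → Disjoint S T →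
      h (T ∪ S) + (S.card : ℝ) * h {0} ≤ h T + (S.card : ℝ) := by
    intro S
    induction S using Finset.induction_on with
    | empty => intro T _ _; simp
    | @insert i S hiS ih =>
      intro T h0T hdis
      have hdis' : Disjoint S T := Finset.disjoint_of_subset_left (Finset.subset_insert i S) hdis
      have hiT : i ∉ T := Finset.disjoint_left.1 hdis (Finset.mem_insert_self i S)
      have hi0 : i ≠ 0 := fun e => hiT (e ▸ h0T)
      have e1 : (T ∪ S) ∪ ({0, i} : Finset (Fin (k+1))) = T ∪ insert i S := by
        ext x
        simp only [Finset.mem_union, Finset.mem_insert, Finset.mem_singleton]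
        constructor
        · rintro ((hx | hx) | (rfl | rfl))
          · exact Or.inl hx
          · exact Or.inr (Or.inr hx)
          · exact Or.inl h0T
          · exact Or.inr (Or.inl rfl)
        · rintro (hx | (rfl | hx))
          · exact Or.inl (Or.inl hx)
          · exact Or.inr (Or.inr rfl)
          · exact Or.inl (Or.inr hx)
      have e2 : (T ∪ S) ∩ ({0, i} : Finset (Fin (k+1))) = {0} := by
        ext x
        simp only [Finset.mem_inter, Finset.mem_union, Finset.mem_insert, Finset.mem_singleton]
        constructor
        · rintro ⟨hx, rfl | rfl⟩
          · rfl
          · exact absurd hx (by rintro (hx' | hx'); exacts [hiT hx', hiS hx'])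
        · rintro rfl
          exact ⟨Or.inl h0T, Or.inl rfl⟩
      have key := hsub (T ∪ S) ({0, i} : Finset (Fin (k+1)))
      rw [e1, e2] at key
      have hedge := hED₁ i hi0
      have hih := ih T h0T hdis'
      have hcard : (((insert i S).card : ℕ) : ℝ) = (S.card : ℝ) + 1 := by
        rw [Finset.card_insert_of_notMem hiS]; push_cast; ring
      rw [hcard]
      linarith
  by_cases hpar : k % 2 = 1
  · -- odd case
    rw [if_pos hpar]
    set Mn : ℕ := (k+1)/2 with hMn
    have hkM : 2 * Mn = k + 1 := by omega
    have hM2 : 2 ≤ Mn := by omega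
    set A : Finset (Fin (k+1)) :=
      Finset.univ.filter (fun v : Fin (k + 1) => 2 ≤ (v : ℕ) ∧ (v : ℕ) ≤ (k + 1) / 2) with hA
    set B : Finset (Fin (k+1)) :=
      Finset.univ.filter (fun v : Fin (k + 1) => (k + 1) / 2 < (v : ℕ)) with hB
    have memA : ∀ x : Fin (k+1), x ∈ A ↔ 2 ≤ (x:ℕ) ∧ (x:ℕ) ≤ (k+1)/2 := by
      intro x; rw [hA, Finset.mem_filter]; simp
    have memB : ∀ x : Fin (k+1), x ∈ B ↔ (k+1)/2 < (x:ℕ) := by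
      intro x; rw [hB, Finset.mem_filter]; simp
    have mem1 : ∀ x : Fin (k+1), x ∈ ({1} : Finset (Fin (k+1))) ↔ (x:ℕ) = 1 := by
      intro x
      rw [Finset.mem_singleton]
      constructor
      · rintro rfl; exact h1v
      · intro hx; exact Fin.val_injective (by rw [hx, h1v])
    -- memberships
    have h0AG : (0 : Fin (k+1)) ∉ A ∪ {1} := by
      intro hx
      rcases Finset.mem_union.1 hx with hx | hx
      · have := (memA 0).1 hx; rw [h0v] at this; omega
      · have := (mem1 0).1 hx; rw [h0v] at this; omega
    have h0BG : (0 : Fin (k+1)) ∉ B ∪ {1} := by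
      intro hx
      rcases Finset.mem_union.1 hx with hx | hx
      · have := (memB 0).1 hx; rw [h0v] at this; omega
      · have := (mem1 0).1 hx; rw [h0v] at this; omega
    have h01 : (0 : Fin (k+1)) ∉ ({1} : Finset (Fin (k+1))) := by
      intro hx; have := (mem1 0).1 hx; rw [h0v] at this; omega
    -- cards
    have hAcard : A.card = Mn - 1 := by
      rw [hA, card_filter_val _ (fun x => 2 ≤ x ∧ x ≤ (k+1)/2) (fun v => Iff.rfl)]
      have : (Finset.range (k+1)).filter (fun x => 2 ≤ x ∧ x ≤ (k+1)/2)
          = Finset.Icc 2 ((k+1)/2) := by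
        ext a; simp only [Finset.mem_filter, Finset.mem_range, Finset.mem_Icc]; omega
      rw [this, Nat.card_Icc]; omega
    have hBcard : B.card = Mn - 1 := by
      rw [hB, card_filter_val _ (fun x => (k+1)/2 < x) (fun v => Iff.rfl)]
      have : (Finset.range (k+1)).filter (fun x => (k+1)/2 < x)
          = Finset.Icc ((k+1)/2 + 1) k := by
        ext a; simp only [Finset.mem_filter, Finset.mem_range, Finset.mem_Icc]; omega
      rw [this, Nat.card_Icc]; omega
    have hdisjA1 : Disjoint A ({1} : Finset (Fin (k+1))) := by
      rw [Finset.disjoint_left]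
      intro a haA ha1
      have h1 := (memA a).1 haA
      have h2 := (mem1 a).1 ha1
      omega
    have hdisjB1 : Disjoint B ({1} : Finset (Fin (k+1))) := by
      rw [Finset.disjoint_left]
      intro a haB ha1
      have h1 := (memB a).1 haB
      have h2 := (mem1 a).1 ha1
      omega
    have hAGcard : (((A ∪ {1}).card : ℕ) : ℝ) = (Mn : ℝ) := by
      rw [Finset.card_union_of_disjoint hdisjA1, hAcard, Finset.card_singleton]
      have : Mn - 1 + 1 = Mn := by omega
      rw [this]
    have hBGcard : (((B ∪ {1}).card : ℕ) : ℝ) = (Mn : ℝ) := by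
      rw [Finset.card_union_of_disjoint hdisjB1, hBcard, Finset.card_singleton]
      have : Mn - 1 + 1 = Mn := by omega
      rw [this]
    have hAcardR : ((A.card : ℕ) : ℝ) = (Mn : ℝ) - 1 := by
      rw [hAcard, Nat.cast_sub (by omega)]; simp
    -- facts
    have F1 := Fgen (A ∪ {1}) h0AG
    have F2 := Fgen (B ∪ {1}) h0BG
    have F3 : h Finset.univ + h {1} ≤ h ({0} ∪ {1}) + h ({0}ᶜ) := by
      have := Fgen {1} h01
      rwa [Finset.insert_eq] at this
    have F4 : h (insert 0 (A ∪ {1})) + ((Mn:ℝ) - 1) * h {0}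
        ≤ h ({0} ∪ {1}) + ((Mn:ℝ) - 1) := by
      have hmem : (0 : Fin (k+1)) ∈ ({0} ∪ {1} : Finset (Fin (k+1))) :=
        Finset.mem_union.2 (Or.inl (Finset.mem_singleton_self 0))
      have hdisj : Disjoint A (({0} ∪ {1}) : Finset (Fin (k+1))) := by
        rw [Finset.disjoint_left]
        intro a haA hmem'
        have h1 := (memA a).1 haA
        rcases Finset.mem_union.1 hmem' with hx | hx
        · rw [Finset.mem_singleton] at hx; subst hx; rw [h0v] at h1; omega
        · have := (mem1 a).1 hx; omega
      have hch := chain A ({0} ∪ {1}) hmem hdisj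
      have eset : ({0} ∪ {1} : Finset (Fin (k+1))) ∪ A = insert 0 (A ∪ {1}) := by
        ext x
        simp only [Finset.mem_union, Finset.mem_insert, Finset.mem_singleton]
        tauto
      rw [eset, hAcardR] at hch
      exact hch
    have F4' : h (insert 0 (A ∪ {1})) + (Mn:ℝ) * h {0} ≤ h {0} + (Mn:ℝ) := by
      have hdisj : Disjoint (A ∪ {1}) ({0} : Finset (Fin (k+1))) := by
        rw [Finset.disjoint_right]
        intro a ha; rw [Finset.mem_singleton] at ha; subst ha; exact h0AG
      have hch := chain (A ∪ {1}) {0} (Finset.mem_singleton_self 0) hdisj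
      rw [← Finset.insert_eq] at hch
      rwa [hAGcard] at hch
    have F5 : h (insert 0 (B ∪ {1})) + (Mn:ℝ) * h {0} ≤ h {0} + (Mn:ℝ) := by
      have hdisj : Disjoint (B ∪ {1}) ({0} : Finset (Fin (k+1))) := by
        rw [Finset.disjoint_right]
        intro a ha; rw [Finset.mem_singleton] at ha; subst ha; exact h0BG
      have hch := chain (B ∪ {1}) {0} (Finset.mem_singleton_self 0) hdisj
      rw [← Finset.insert_eq] at hch
      rwa [hBGcard] at hch
    have F6 : h ({0} ∪ {1}) ≤ h {0} + h {1} := by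
      have key := hsub ({0} : Finset (Fin (k+1))) {1}
      have : ({0} : Finset (Fin (k+1))) ∩ {1} = ∅ := by
        rw [Finset.singleton_inter_of_notMem h01]
      rw [this, h0] at key
      linarith
    have hM2' : (2:ℝ) ≤ (Mn:ℝ) := by exact_mod_cast hM2
    have hkR : (k : ℝ) = 2 * (Mn : ℝ) - 1 := by
      have : ((2 * Mn : ℕ) : ℝ) = ((k + 1 : ℕ) : ℝ) := by rw [hkM]
      push_cast at this
      linarith
    have hDeq : ω * ((k : ℝ) - 1) - (k : ℝ) + 3
        = (ω - 2) * (2 * (Mn:ℝ) - 2) + 2 * (Mn:ℝ) := by rw [hkR]; ring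
    rw [hDeq]
    have key := aux_odd (ω - 2) (Mn:ℝ) (h Finset.univ) (h (A ∪ {1})) (h (B ∪ {1}))
      (h ({0} ∪ {1})) (h (insert 0 (A ∪ {1}))) (h (insert 0 (B ∪ {1}))) (h {1}) (h {0})
      (h ({0}ᶜ)) hγ0 hγ1 hM2' (hnn {1}) (hnn {0}) F1 F2 F3 F4 F4' F5 F6 hED₂
    simpa only [MM] using key
  · -- even case
    rw [if_neg hpar]
    set Mn : ℕ := k / 2 with hMn
    have hkM : 2 * Mn = k := by omega
    have hM2 : 2 ≤ Mn := by omega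
    set A : Finset (Fin (k+1)) :=
      Finset.univ.filter (fun v : Fin (k + 1) => 1 ≤ (v : ℕ) ∧ (v : ℕ) ≤ k / 2) with hA
    set B : Finset (Fin (k+1)) :=
      Finset.univ.filter (fun v : Fin (k + 1) => k / 2 < (v : ℕ)) with hB
    have memA : ∀ x : Fin (k+1), x ∈ A ↔ 1 ≤ (x:ℕ) ∧ (x:ℕ) ≤ k/2 := by
      intro x; rw [hA, Finset.mem_filter]; simp
    have memB : ∀ x : Fin (k+1), x ∈ B ↔ k/2 < (x:ℕ) := by
      intro x; rw [hB, Finset.mem_filter]; simp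
    have h0A : (0 : Fin (k+1)) ∉ A := by
      intro hx; have := (memA 0).1 hx; rw [h0v] at this; omega
    have h0B : (0 : Fin (k+1)) ∉ B := by
      intro hx; have := (memB 0).1 hx; rw [h0v] at this; omega
    have hAcard : A.card = Mn := by
      rw [hA, card_filter_val _ (fun x => 1 ≤ x ∧ x ≤ k/2) (fun v => Iff.rfl)]
      have : (Finset.range (k+1)).filter (fun x => 1 ≤ x ∧ x ≤ k/2)
          = Finset.Icc 1 (k/2) := by
        ext a; simp only [Finset.mem_filter, Finset.mem_range, Finset.mem_Icc]; omega
      rw [this, Nat.card_Icc]; omega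
    have hBcard : B.card = Mn := by
      rw [hB, card_filter_val _ (fun x => k/2 < x) (fun v => Iff.rfl)]
      have : (Finset.range (k+1)).filter (fun x => k/2 < x)
          = Finset.Icc (k/2 + 1) k := by
        ext a; simp only [Finset.mem_filter, Finset.mem_range, Finset.mem_Icc]; omega
      rw [this, Nat.card_Icc]; omega
    have hAcardR : ((A.card : ℕ) : ℝ) = (Mn : ℝ) := by rw [hAcard]
    have hBcardR : ((B.card : ℕ) : ℝ) = (Mn : ℝ) := by rw [hBcard]
    -- facts
    have F1 := Fgen A h0A
    have F2 := Fgen B h0B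
    have F3 : h Finset.univ ≤ h {0} + h ({0}ᶜ) := by
      have key := hsub ({0} : Finset (Fin (k+1))) ({0}ᶜ)
      rw [Finset.union_compl, Finset.inter_compl, h0] at key
      linarith
    have F4 : h (insert 0 A) + (Mn:ℝ) * h {0} ≤ h {0} + (Mn:ℝ) := by
      have hdisj : Disjoint A ({0} : Finset (Fin (k+1))) := by
        rw [Finset.disjoint_right]
        intro a ha; rw [Finset.mem_singleton] at ha; subst ha; exact h0A
      have hch := chain A {0} (Finset.mem_singleton_self 0) hdisj
      rw [← Finset.insert_eq] at hch
      rwa [hAcardR] at hch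
    have F5 : h (insert 0 B) + (Mn:ℝ) * h {0} ≤ h {0} + (Mn:ℝ) := by
      have hdisj : Disjoint B ({0} : Finset (Fin (k+1))) := by
        rw [Finset.disjoint_right]
        intro a ha; rw [Finset.mem_singleton] at ha; subst ha; exact h0B
      have hch := chain B {0} (Finset.mem_singleton_self 0) hdisj
      rw [← Finset.insert_eq] at hch
      rwa [hBcardR] at hch
    have hM2' : (2:ℝ) ≤ (Mn:ℝ) := by exact_mod_cast hM2
    have hkR : (k : ℝ) = 2 * (Mn : ℝ) := by
      have : ((2 * Mn : ℕ) : ℝ) = ((k : ℕ) : ℝ) := by rw [hkM]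
      push_cast at this
      linarith
    have hDeq : ω * ((k : ℝ) - 1) - (k : ℝ) + 3
        = (ω - 2) * (2 * (Mn:ℝ) - 1) + 2 * (Mn:ℝ) + 1 := by rw [hkR]; ring
    rw [hDeq]
    have hMM : MM h (ω - 2) A B {0} ∅
        = max (max (h A + h B + (ω - 2) * h {0}) (h A + (ω - 2) * h B + h {0}))
            ((ω - 2) * h A + h B + h {0}) := by
      simp only [MM, Finset.union_empty, h0, sub_zero, add_zero]
    rw [hMM]
    exact aux_even (ω - 2) (Mn:ℝ) (h Finset.univ) (h A) (h B) (h (insert 0 A))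
      (h (insert 0 B)) (h {0}) (h ({0}ᶜ)) hγ0 hγ1 hM2' (hnn {0}) F1 F2 F3 F4 F5 hED₂
end

section
/- Fix ω ∈ [2,3]. For every polymatroid h on {X, Y, Z, W, L} satisfying h({X,Y,W}) ≤ 1, h({X,Y,L}) ≤ 1, h({X,Z}) ≤ 1, h({Y,Z}) ≤ 1, and h({Z,W,L}) ≤ 1, the following holds: min( h({X,Y,Z,W,L}), MM({Z};{W};{X,Y} | {L}) ) ≤ 2 − 1/(2ω − 1). (This is the inequality establishing that the ω-submodular width of the query with hypergraph ({X,Y,Z,W,L}, {{X,Y,W},{X,Y,L},{X,Z},{Y,Z},{Z,W,L}}) is at most 2 − 1/(2(ω−2)+3), which strictly improves on its submodular width 9/5 whenever ω < 3.) -/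
open Finset

lemma mm_helper1 (ω m a T : ℝ) (hω : 2 ≤ ω) (h1 : m ≤ a) (h2 : m ≤ T)
    (hc : (2 * ω - 3) * a + 2 * T ≤ 4 * ω - 3) : m * (2 * ω - 1) ≤ 4 * ω - 3 := by
  nlinarith [mul_nonneg (by linarith : (0:ℝ) ≤ 2 * ω - 3) (by linarith : (0:ℝ) ≤ a - m)]

lemma mm_helper2 (ω m a T : ℝ) (hω : 2 ≤ ω) (h1 : m ≤ a) (h2 : m ≤ T)
    (hc : (ω - 1) * a + T ≤ 2 * ω - 1) : m * (2 * ω - 1) ≤ 4 * ω - 3 := by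
  have hωm : ω * m ≤ 2 * ω - 1 := by
    nlinarith [mul_nonneg (by linarith : (0:ℝ) ≤ ω - 1) (by linarith : (0:ℝ) ≤ a - m)]
  nlinarith [mul_le_mul_of_nonneg_right hωm (by linarith : (0:ℝ) ≤ 2 * ω - 1)]

/-- the upper bound `2 − 1/(2ω−1)` on the ω-submodular width of
the query with hypergraph `({X,Y,Z,W,L}, {{X,Y,W},{X,Y,L},{X,Z},{Y,Z},{Z,W,L}})`.
Vertices: `X = 0`, `Y = 1`, `Z = 2`, `W = 3`, `L = 4`. -/
theorem omega_subw_example_upper (ω : ℝ) (hω₂ : 2 ≤ ω) (hω₃ : ω ≤ 3)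
    (h : Finset (Fin 5) → ℝ) (hpoly : IsPolymatroid h)
    (hXYW : h {0, 1, 3} ≤ 1) (hXYL : h {0, 1, 4} ≤ 1)
    (hXZ : h {0, 2} ≤ 1) (hYZ : h {1, 2} ≤ 1) (hZWL : h {2, 3, 4} ≤ 1) :
    min (h {0, 1, 2, 3, 4}) (MM h (ω - 2) {2} {3} {0, 1} {4}) ≤
      2 - 1 / (2 * ω - 1) := by
  obtain ⟨h0, hnn, hmono, hsub⟩ := hpoly
  have hγ0 : (0:ℝ) ≤ ω - 2 := by linarith
  have hγ1 : ω - 2 ≤ 1 := by linarith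
  have hb : (0:ℝ) < 2 * ω - 1 := by linarith
  have key : ∀ A B U I : Finset (Fin 5), A ∪ B = U → A ∩ B = I →
      h U + h I ≤ h A + h B := by
    intro A B U I hU hI; rw [← hU, ← hI]; exact hsub A B
  have hU1 : ({2} ∪ {4} : Finset (Fin 5)) = {2, 4} := by decide
  have hU2 : ({3} ∪ {4} : Finset (Fin 5)) = {3, 4} := by decide
  have hU3 : ({0, 1} ∪ {4} : Finset (Fin 5)) = {0, 1, 4} := by decide
  rw [MM, hU1, hU2, hU3]
  have ebound : 2 - 1 / (2 * ω - 1) = (4 * ω - 3) / (2 * ω - 1) := by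
    field_simp; ring
  rcases le_total (h {0, 1, 4}) (h {3, 4}) with hA | hA
  · -- Case A : h(XYL) ≤ h(WL).  Then h(V) ≤ 3/2.
    have s1 := key {0, 1, 3, 4} {1, 2, 3, 4} {0, 1, 2, 3, 4} {1, 3, 4} (by decide) (by decide)
    have s2 := key {0, 1, 4} {1, 3, 4} {0, 1, 3, 4} {1, 4} (by decide) (by decide)
    have s3 := key {0, 1, 3} {1, 3, 4} {0, 1, 3, 4} {1, 3} (by decide) (by decide)
    have s4 := key {1, 4} {2, 4} {1, 2, 4} {4} (by decide) (by decide)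
    have s5 := key {1, 3, 4} {2, 3, 4} {1, 2, 3, 4} {3, 4} (by decide) (by decide)
    have s6 := key {1, 2, 4} {2, 3, 4} {1, 2, 3, 4} {2, 4} (by decide) (by decide)
    have s7 := key {1, 3} {3, 4} {1, 3, 4} {3} (by decide) (by decide)
    have s8 := key {3} {4} {3, 4} (∅ : Finset (Fin 5)) (by decide) (by decide)
    have ha : h {0, 1, 2, 3, 4} ≤ 3 / 2 := by linarith
    have hone : 1 / (2 * ω - 1) ≤ 1 / 3 := by
      rw [div_le_div_iff₀ hb (by norm_num)]; linarith
    calc min (h {0, 1, 2, 3, 4}) _ ≤ h {0, 1, 2, 3, 4} := min_le_left _ _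
      _ ≤ 2 - 1 / (2 * ω - 1) := by linarith
  · rcases le_total (h {2, 4}) (h {3, 4}) with hB | hB
    · -- Case V2 : h(ZL) ≤ h(WL) ≤ h(XYL); T2 is the max.
      have u1 := key {0, 1, 3} {1, 2, 3} {0, 1, 2, 3} {1, 3} (by decide) (by decide)
      have u2 := key {0, 1, 2, 3} {1, 2, 3, 4} {0, 1, 2, 3, 4} {1, 2, 3} (by decide) (by decide)
      have u3 := key {1, 3, 4} {2, 3, 4} {1, 2, 3, 4} {3, 4} (by decide) (by decide)
      have u4 := key {1, 3} {3, 4} {1, 3, 4} {3} (by decide) (by decide)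
      have u5 := key {3} {4} {3, 4} (∅ : Finset (Fin 5)) (by decide) (by decide)
      -- γ-multiplied facts
      have g1 : 0 ≤ (ω - 2) * (h {0, 1, 3} + h {1, 2, 3} - h {0, 1, 2, 3} - h {1, 3}) :=
        mul_nonneg hγ0 (by linarith)
      have g2 : 0 ≤ (ω - 2) * (h {0, 1, 2, 3} + h {1, 2, 3, 4} - h {0, 1, 2, 3, 4} - h {1, 2, 3}) :=
        mul_nonneg hγ0 (by linarith)
      have g3 : 0 ≤ (ω - 2) * (h {1, 3, 4} + h {2, 3, 4} - h {1, 2, 3, 4} - h {3, 4}) :=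
        mul_nonneg hγ0 (by linarith)
      have g4 : 0 ≤ (ω - 2) * (h {1, 3} + h {3, 4} - h {1, 3, 4} - h {3}) :=
        mul_nonneg hγ0 (by linarith)
      have g5 : 0 ≤ (ω - 2) * (h {3} + h {4} - h {3, 4}) :=
        mul_nonneg hγ0 (by linarith)
      have ge1 : 0 ≤ (ω - 2) * (1 - h {0, 1, 3}) := mul_nonneg hγ0 (by linarith)
      have ge2 : 0 ≤ (ω - 2) * (1 - h {2, 3, 4}) := mul_nonneg hγ0 (by linarith)
      have gx : 0 ≤ (ω - 2) * (h {3, 4} - h {2, 4}) := mul_nonneg hγ0 (by linarith)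
      have hcert : (ω - 1) * h {0, 1, 2, 3, 4} +
          ((ω - 2) * (h {2, 4} - h {4}) + (h {3, 4} - h {4}) + (h {0, 1, 4} - h {4}) + h {4})
            ≤ 2 * ω - 1 := by linarith
      -- T1 ≤ T2 and T0 ≤ T2
      have p1 : 0 ≤ (1 - (ω - 2)) * (h {3, 4} - h {2, 4}) :=
        mul_nonneg (by linarith) (by linarith)
      have p2 : 0 ≤ (1 - (ω - 2)) * (h {0, 1, 4} - h {2, 4}) :=
        mul_nonneg (by linarith) (by linarith)
      have hT1 : (h {2, 4} - h {4}) + (ω - 2) * (h {3, 4} - h {4}) + (h {0, 1, 4} - h {4}) + h {4}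
          ≤ (ω - 2) * (h {2, 4} - h {4}) + (h {3, 4} - h {4}) + (h {0, 1, 4} - h {4}) + h {4} := by
        linarith [p1]
      have hT0 : (h {2, 4} - h {4}) + (h {3, 4} - h {4}) + (ω - 2) * (h {0, 1, 4} - h {4}) + h {4}
          ≤ (ω - 2) * (h {2, 4} - h {4}) + (h {3, 4} - h {4}) + (h {0, 1, 4} - h {4}) + h {4} := by
        linarith [p2]
      have hMle : max (max ((h {2, 4} - h {4}) + (h {3, 4} - h {4}) + (ω - 2) * (h {0, 1, 4} - h {4}) + h {4})
            ((h {2, 4} - h {4}) + (ω - 2) * (h {3, 4} - h {4}) + (h {0, 1, 4} - h {4}) + h {4}))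
            ((ω - 2) * (h {2, 4} - h {4}) + (h {3, 4} - h {4}) + (h {0, 1, 4} - h {4}) + h {4})
          ≤ (ω - 2) * (h {2, 4} - h {4}) + (h {3, 4} - h {4}) + (h {0, 1, 4} - h {4}) + h {4} :=
        max_le (max_le hT0 hT1) le_rfl
      have hm1 := min_le_left (h {0, 1, 2, 3, 4}) (max (max ((h {2, 4} - h {4}) + (h {3, 4} - h {4}) + (ω - 2) * (h {0, 1, 4} - h {4}) + h {4})
            ((h {2, 4} - h {4}) + (ω - 2) * (h {3, 4} - h {4}) + (h {0, 1, 4} - h {4}) + h {4}))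
            ((ω - 2) * (h {2, 4} - h {4}) + (h {3, 4} - h {4}) + (h {0, 1, 4} - h {4}) + h {4}))
      have hm2 := le_trans (min_le_right (h {0, 1, 2, 3, 4}) _) hMle
      rw [ebound, le_div_iff₀ hb]
      exact mm_helper2 ω _ _ _ hω₂ hm1 hm2 hcert
    · -- Case V1 : T1 is the max (h(WL) ≤ h(ZL), h(WL) ≤ h(XYL)).
      have t1 := key {0, 2} {1, 2} {0, 1, 2} {2} (by decide) (by decide)
      have t2 := key {0, 3} {2, 3} {0, 2, 3} {3} (by decide) (by decide)
      have t3 := key {0, 1, 2, 4} {1, 2, 3, 4} {0, 1, 2, 3, 4} {1, 2, 4} (by decide) (by decide)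
      have t4 := key {0, 1, 2} {1, 2, 4} {0, 1, 2, 4} {1, 2} (by decide) (by decide)
      have t5 := key {0, 1, 2, 3} {1, 2, 3, 4} {0, 1, 2, 3, 4} {1, 2, 3} (by decide) (by decide)
      have t6 := key {0, 1, 3} {0, 2, 3} {0, 1, 2, 3} {0, 3} (by decide) (by decide)
      have t7 := key {1, 2, 4} {2, 3, 4} {1, 2, 3, 4} {2, 4} (by decide) (by decide)
      have t8 := key {1, 2} {2, 4} {1, 2, 4} {2} (by decide) (by decide)
      have t9 := key {1, 2, 3} {2, 3, 4} {1, 2, 3, 4} {2, 3} (by decide) (by decide)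
      have t10 := key {2} {4} {2, 4} (∅ : Finset (Fin 5)) (by decide) (by decide)
      have t11 := key {3} {4} {3, 4} (∅ : Finset (Fin 5)) (by decide) (by decide)
      have g2 : 0 ≤ (ω - 2) * (h {0, 3} + h {2, 3} - h {0, 2, 3} - h {3}) :=
        mul_nonneg hγ0 (by linarith)
      have g5 : 0 ≤ (ω - 2) * (h {0, 1, 2, 3} + h {1, 2, 3, 4} - h {0, 1, 2, 3, 4} - h {1, 2, 3}) :=
        mul_nonneg hγ0 (by linarith)
      have g6 : 0 ≤ (ω - 2) * (h {0, 1, 3} + h {0, 2, 3} - h {0, 1, 2, 3} - h {0, 3}) :=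
        mul_nonneg hγ0 (by linarith)
      have g9 : 0 ≤ (ω - 2) * (h {1, 2, 3} + h {2, 3, 4} - h {1, 2, 3, 4} - h {2, 3}) :=
        mul_nonneg hγ0 (by linarith)
      have g11 : 0 ≤ (ω - 2) * (h {3} + h {4} - h {3, 4}) :=
        mul_nonneg hγ0 (by linarith)
      have ge1 : 0 ≤ (ω - 2) * (1 - h {0, 1, 3}) := mul_nonneg hγ0 (by linarith)
      have ge2 : 0 ≤ (ω - 2) * (1 - h {2, 3, 4}) := mul_nonneg hγ0 (by linarith)
      have hcert : (2 * ω - 3) * h {0, 1, 2, 3, 4} +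
          2 * ((h {2, 4} - h {4}) + (ω - 2) * (h {3, 4} - h {4}) + (h {0, 1, 4} - h {4}) + h {4})
            ≤ 4 * ω - 3 := by linarith
      have p1 : 0 ≤ (1 - (ω - 2)) * (h {0, 1, 4} - h {3, 4}) :=
        mul_nonneg (by linarith) (by linarith)
      have p2 : 0 ≤ (1 - (ω - 2)) * (h {2, 4} - h {3, 4}) :=
        mul_nonneg (by linarith) (by linarith)
      have hT0 : (h {2, 4} - h {4}) + (h {3, 4} - h {4}) + (ω - 2) * (h {0, 1, 4} - h {4}) + h {4}
          ≤ (h {2, 4} - h {4}) + (ω - 2) * (h {3, 4} - h {4}) + (h {0, 1, 4} - h {4}) + h {4} := by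
        linarith [p1]
      have hT2 : (ω - 2) * (h {2, 4} - h {4}) + (h {3, 4} - h {4}) + (h {0, 1, 4} - h {4}) + h {4}
          ≤ (h {2, 4} - h {4}) + (ω - 2) * (h {3, 4} - h {4}) + (h {0, 1, 4} - h {4}) + h {4} := by
        linarith [p2]
      have hMle : max (max ((h {2, 4} - h {4}) + (h {3, 4} - h {4}) + (ω - 2) * (h {0, 1, 4} - h {4}) + h {4})
            ((h {2, 4} - h {4}) + (ω - 2) * (h {3, 4} - h {4}) + (h {0, 1, 4} - h {4}) + h {4}))
            ((ω - 2) * (h {2, 4} - h {4}) + (h {3, 4} - h {4}) + (h {0, 1, 4} - h {4}) + h {4})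
          ≤ (h {2, 4} - h {4}) + (ω - 2) * (h {3, 4} - h {4}) + (h {0, 1, 4} - h {4}) + h {4} :=
        max_le (max_le hT0 le_rfl) hT2
      have hm1 := min_le_left (h {0, 1, 2, 3, 4}) (max (max ((h {2, 4} - h {4}) + (h {3, 4} - h {4}) + (ω - 2) * (h {0, 1, 4} - h {4}) + h {4})
            ((h {2, 4} - h {4}) + (ω - 2) * (h {3, 4} - h {4}) + (h {0, 1, 4} - h {4}) + h {4}))
            ((ω - 2) * (h {2, 4} - h {4}) + (h {3, 4} - h {4}) + (h {0, 1, 4} - h {4}) + h {4}))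
      have hm2 := le_trans (min_le_right (h {0, 1, 2, 3, 4}) _) hMle
      rw [ebound, le_div_iff₀ hb]
      exact mm_helper1 ω _ _ _ hω₂ hm1 hm2 hcert
end

section
/- Fix ω ∈ [2,3] and let (α_1, β_1, ζ_1), (α_2, β_2, ζ_2), (α_3, β_3, ζ_3) be ω-dominant triples. Then for every polymatroid h on a finite set V and all pairwise-disjoint subsets X, Y, Z, G of V: MM(X;Y;Z|G) ≤ max( α_1·h(X|G) + β_1·h(Y|G) + ζ_1·h(Z|G) + h(G), α_2·h(X|G) + ζ_2·h(Y|G) + β_2·h(Z|G) + h(G), ζ_3·h(X|G) + α_3·h(Y|G) + β_3·h(Z|G) + h(G) ). -/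
open Finset

/-- An ω-dominant triple `(α, β, ζ)`. -/
def OmegaDominant (ω α β ζ : ℝ) : Prop :=
  1 ≤ α ∧ 1 ≤ β ∧ 0 ≤ ζ ∧ ω ≤ α + β + ζ

set_option maxHeartbeats 1600000 in
/-- upper bound on `MM(X;Y;Z|G)` via three ω-dominant triples. -/
theorem MM_upper_bound {V : Type*} [DecidableEq V] [Fintype V]
    (ω : ℝ) (hω₂ : 2 ≤ ω) (hω₃ : ω ≤ 3)
    (α₁ β₁ ζ₁ α₂ β₂ ζ₂ α₃ β₃ ζ₃ : ℝ)
    (hd₁ : OmegaDominant ω α₁ β₁ ζ₁)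
    (hd₂ : OmegaDominant ω α₂ β₂ ζ₂)
    (hd₃ : OmegaDominant ω α₃ β₃ ζ₃)
    (h : Finset V → ℝ) (hpoly : IsPolymatroid h)
    (X Y Z G : Finset V)
    (hXY : Disjoint X Y) (hXZ : Disjoint X Z) (hXG : Disjoint X G)
    (hYZ : Disjoint Y Z) (hYG : Disjoint Y G) (hZG : Disjoint Z G) :
    MM h (ω - 2) X Y Z G ≤
      max (max (α₁ * (h (X ∪ G) - h G) + β₁ * (h (Y ∪ G) - h G) +
                  ζ₁ * (h (Z ∪ G) - h G) + h G)
               (α₂ * (h (X ∪ G) - h G) + ζ₂ * (h (Y ∪ G) - h G) +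
                  β₂ * (h (Z ∪ G) - h G) + h G))
          (ζ₃ * (h (X ∪ G) - h G) + α₃ * (h (Y ∪ G) - h G) +
             β₃ * (h (Z ∪ G) - h G) + h G) := by

  obtain ⟨h0, hnn, hmono, hsub⟩ := hpoly
  set a := h (X ∪ G) - h G with hadef
  set b := h (Y ∪ G) - h G with hbdef
  set c := h (Z ∪ G) - h G with hcdef
  have ha : 0 ≤ a := by
    have := hmono G (X ∪ G) Finset.subset_union_right
    simp [hadef]; linarith
  have hb : 0 ≤ b := by
    have := hmono G (Y ∪ G) Finset.subset_union_right
    simp [hbdef]; linarith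
  have hc : 0 ≤ c := by
    have := hmono G (Z ∪ G) Finset.subset_union_right
    simp [hcdef]; linarith
  obtain ⟨hα₁, hβ₁, hζ₁, hs₁⟩ := hd₁
  obtain ⟨hα₂, hβ₂, hζ₂, hs₂⟩ := hd₂
  obtain ⟨hα₃, hβ₃, hζ₃, hs₃⟩ := hd₃
  set γ := ω - 2 with hγdef
  have hγ0 : 0 ≤ γ := by linarith
  have hγ1 : γ ≤ 1 := by linarith
  unfold MM
  rcases le_total c a with hca | hac
  · rcases le_total c b with hcb | hbc
    · -- c is the min: use R1
      refine le_trans ?_ (le_max_of_le_left (le_max_left _ _))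
      have h1 : a + b + γ * c + h G ≤ α₁ * a + β₁ * b + ζ₁ * c + h G := by
        nlinarith [mul_nonneg (sub_nonneg.2 hα₁) (sub_nonneg.2 hca),
          mul_nonneg (sub_nonneg.2 hβ₁) (sub_nonneg.2 hcb)]
      have h2 : a + γ * b + c + h G ≤ a + b + γ * c + h G := by
        nlinarith [mul_nonneg (sub_nonneg.2 hγ1) (sub_nonneg.2 hcb)]
      have h3 : γ * a + b + c + h G ≤ a + b + γ * c + h G := by
        nlinarith [mul_nonneg (sub_nonneg.2 hγ1) (sub_nonneg.2 hca)]
      simp only [max_le_iff]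
      exact ⟨⟨h1, le_trans h2 h1⟩, le_trans h3 h1⟩
    · -- b is the min: use R2
      refine le_trans ?_ (le_max_of_le_left (le_max_right _ _))
      have h1 : a + γ * b + c + h G ≤ α₂ * a + ζ₂ * b + β₂ * c + h G := by
        nlinarith [mul_nonneg (sub_nonneg.2 hα₂) (sub_nonneg.2 (le_trans hbc hca)),
          mul_nonneg (sub_nonneg.2 hβ₂) (sub_nonneg.2 hbc)]
      have h2 : a + b + γ * c + h G ≤ a + γ * b + c + h G := by
        nlinarith [mul_nonneg (sub_nonneg.2 hγ1) (sub_nonneg.2 hbc)]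
      have h3 : γ * a + b + c + h G ≤ a + γ * b + c + h G := by
        nlinarith [mul_nonneg (sub_nonneg.2 hγ1) (sub_nonneg.2 (le_trans hbc hca))]
      simp only [max_le_iff]
      exact ⟨⟨le_trans h2 h1, h1⟩, le_trans h3 h1⟩
  · rcases le_total a b with hab | hba
    · -- a is the min: use R3
      refine le_trans ?_ (le_max_right _ _)
      have h1 : γ * a + b + c + h G ≤ ζ₃ * a + α₃ * b + β₃ * c + h G := by
        nlinarith [mul_nonneg (sub_nonneg.2 hα₃) (sub_nonneg.2 hab),
          mul_nonneg (sub_nonneg.2 hβ₃) (sub_nonneg.2 hac)]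
      have h2 : a + b + γ * c + h G ≤ γ * a + b + c + h G := by
        nlinarith [mul_nonneg (sub_nonneg.2 hγ1) (sub_nonneg.2 hac)]
      have h3 : a + γ * b + c + h G ≤ γ * a + b + c + h G := by
        nlinarith [mul_nonneg (sub_nonneg.2 hγ1) (sub_nonneg.2 hab)]
      simp only [max_le_iff]
      exact ⟨⟨le_trans h2 h1, le_trans h3 h1⟩, h1⟩
    · -- b is the min: use R2
      refine le_trans ?_ (le_max_of_le_left (le_max_right _ _))
      have h1 : a + γ * b + c + h G ≤ α₂ * a + ζ₂ * b + β₂ * c + h G := by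
        nlinarith [mul_nonneg (sub_nonneg.2 hα₂) (sub_nonneg.2 hba),
          mul_nonneg (sub_nonneg.2 hβ₂) (sub_nonneg.2 (le_trans hba hac))]
      have h2 : a + b + γ * c + h G ≤ a + γ * b + c + h G := by
        nlinarith [mul_nonneg (sub_nonneg.2 hγ1) (sub_nonneg.2 (le_trans hba hac))]
      have h3 : γ * a + b + c + h G ≤ a + γ * b + c + h G := by
        nlinarith [mul_nonneg (sub_nonneg.2 hγ1) (sub_nonneg.2 hba)]
      simp only [max_le_iff]
      exact ⟨⟨le_trans h2 h1, h1⟩, le_trans h3 h1⟩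
end

section
/- Given an ω-Shannon inequality over a finite set V, with left-hand side Σ_{ℓ∈[L]} λ_ℓ·h(U_ℓ) + Σ_{j∈[J]} ( α_j·h(X_j|G_j) + β_j·h(Y_j|G_j) + ζ_j·h(Z_j|G_j) + κ_j·h(G_j) ) and right-hand side Σ_{i∈[I]} w_i·h(Y_i|X_i), there exist finitely many subsets X_p, Y_p (p∈[P]) and X_q, Y_q, Z_q (q∈[Q]) of V and nonnegative reals m_p (p∈[P]) and s_q (q∈[Q]) such that the left-hand side equals Σ_{i∈[I]} w_i·h(Y_i|X_i) − Σ_{p∈[P]} m_p·h(Y_p|X_p) − Σ_{q∈[Q]} s_q·h(Y_q;Z_q|X_q) identically, i.e., for every function h from subsets of V to ℝ with h(∅) = 0. -/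
/-!
A set function `h` with `h ∅ = 0` is the same as a linear form `v ↦ ∑ A, v A * h A` on
coefficient vectors `v : Finset V → ℝ` vanishing at `∅`; every Shannon term and both sides of the
inequality are such a form evaluated at a fixed vector. Since `h` is a polymatroid iff it is
nonnegative on the elementary vectors of `h(Y|X)` and `h(Y;Z|X)`, the hypothesis says that the
vector of "right-hand side minus left-hand side" is nonnegative wherever all elementary vectors
are. By Farkas' lemma it is then a nonnegative combination of elementary vectors, which is the
identity. Farkas' lemma follows from Hahn–Banach, the finitely generated cone being closed by
the conic Carathéodory theorem.
-/

open Finset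

/-- The conditional term `h(Y|X) = h(X ∪ Y) − h(X)`. -/
noncomputable def condH {V : Type*} [DecidableEq V]
    (h : Finset V → ℝ) (Y X : Finset V) : ℝ :=
  h (X ∪ Y) - h X

/-- The conditional mutual-information term
`h(Y;Z|X) = h(X∪Y) + h(X∪Z) − h(X) − h(X∪Y∪Z)`. -/
noncomputable def condMI {V : Type*} [DecidableEq V]
    (h : Finset V → ℝ) (Y Z X : Finset V) : ℝ :=
  h (X ∪ Y) + h (X ∪ Z) - h X - h (X ∪ Y ∪ Z)

section Caratheodory

variable {𝕜 M ι : Type*} [Field 𝕜] [LinearOrder 𝕜] [IsStrictOrderedRing 𝕜]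
  [AddCommGroup M] [Module 𝕜 M] [DecidableEq ι] {g : ι → M}

theorem exists_nonneg_sum_erase_eq_of_not_linearIndepOn {s : Finset ι} {c : ι → 𝕜}
    (hc : ∀ i ∈ s, 0 ≤ c i) (hdep : ¬LinearIndepOn 𝕜 g s) :
    ∃ i₀ ∈ s, ∃ c' : ι → 𝕜, (∀ i ∈ s.erase i₀, 0 ≤ c' i) ∧
      ∑ i ∈ s.erase i₀, c' i • g i = ∑ i ∈ s, c i • g i := by
  obtain ⟨f, hf, hf_pos⟩ : ∃ f : ι → 𝕜, ∑ i ∈ s, f i • g i = 0 ∧ ∃ i ∈ s, 0 < f i := by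
    obtain ⟨f, hf, i, hi, hfi⟩ := not_linearIndepOn_finset_iff.mp hdep
    rcases hfi.lt_or_gt with hneg | hpos
    · exact ⟨-f, by simp [hf], i, hi, by simpa using hneg⟩
    · exact ⟨f, hf, i, hi, hpos⟩
  -- Move along `-f` until the first coefficient vanishes.
  obtain ⟨i₀, hi₀, hmin⟩ := exists_min_image (s.filter (0 < f ·)) (fun i => c i / f i)
    (by simpa [Finset.Nonempty] using hf_pos)
  rw [mem_filter] at hi₀
  set r := c i₀ / f i₀
  have hr : 0 ≤ r := div_nonneg (hc i₀ hi₀.1) hi₀.2.le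
  refine ⟨i₀, hi₀.1, fun i => c i - r * f i, fun i hi => ?_, ?_⟩
  · have hi := (mem_erase.mp hi).2
    rcases le_or_gt (f i) 0 with hfi | hfi
    · nlinarith [hc i hi]
    · have := hmin i (mem_filter.mpr ⟨hi, hfi⟩)
      rw [le_div_iff₀ hfi] at this
      linarith
  · rw [sum_erase _ (by simp [r, div_mul_cancel₀ _ hi₀.2.ne'])]
    simp only [sub_smul, sum_sub_distrib, mul_smul, ← smul_sum, hf, smul_zero, sub_zero]

theorem exists_linearIndepOn_nonneg_sum_eq (s : Finset ι) (c : ι → 𝕜)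
    (hc : ∀ i ∈ s, 0 ≤ c i) :
    ∃ t ⊆ s, ∃ c' : ι → 𝕜, LinearIndepOn 𝕜 g t ∧ (∀ i ∈ t, 0 ≤ c' i) ∧
      ∑ i ∈ t, c' i • g i = ∑ i ∈ s, c i • g i := by
  induction s using Finset.strongInduction generalizing c with
  | H s ih =>
    by_cases hind : LinearIndepOn 𝕜 g s
    · exact ⟨s, subset_rfl, c, hind, hc, rfl⟩
    obtain ⟨i₀, hi₀, c', hc', hsum⟩ := exists_nonneg_sum_erase_eq_of_not_linearIndepOn hc hind
    obtain ⟨t, hts, c'', ht, hc'', hsum'⟩ := ih _ (erase_ssubset hi₀) c' hc'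
    exact ⟨t, hts.trans (erase_subset _ _), c'', ht, hc'', hsum'.trans hsum⟩

end Caratheodory

namespace PointedCone

variable {R E ι : Type*}

theorem mem_hull_range_iff [Semiring R] [PartialOrder R] [IsOrderedRing R]
    [AddCommMonoid E] [Module R E] [Fintype ι] {g : ι → E} {x : E} :
    x ∈ hull R (Set.range g) ↔ ∃ c : ι → R, (∀ i, 0 ≤ c i) ∧ ∑ i, c i • g i = x := by
  rw [Submodule.mem_span_range_iff_exists_fun]
  constructor
  · rintro ⟨c, rfl⟩
    exact ⟨fun i => c i, fun i => (c i).2, rfl⟩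
  · rintro ⟨c, hc, rfl⟩
    exact ⟨fun i => ⟨c i, hc i⟩, rfl⟩

variable [AddCommGroup E] [Module ℝ E] [TopologicalSpace E] [IsTopologicalAddGroup E]
  [ContinuousSMul ℝ E] [T2Space E]

/-- By Carathéodory, the cone is a finite union of injective linear images of closed orthants. -/
theorem isClosed_hull_range [Finite ι] (g : ι → E) :
    IsClosed (hull ℝ (Set.range g) : Set E) := by
  classical
  have := Fintype.ofFinite ι
  have hunion : (hull ℝ (Set.range g) : Set E) = ⋃ (t : Finset ι) (_ : LinearIndepOn ℝ g t),
      Fintype.linearCombination ℝ (fun i : (t : Set ι) => g i) '' Set.Ici 0 := by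
    ext x
    simp only [SetLike.mem_coe, Set.mem_iUnion, Set.mem_image, Set.mem_Ici,
      Fintype.linearCombination_apply]
    constructor
    · intro hx
      obtain ⟨c, hc, rfl⟩ := mem_hull_range_iff.mp hx
      obtain ⟨t, -, c', ht, hc', hsum⟩ :=
        exists_linearIndepOn_nonneg_sum_eq (g := g) univ c fun i _ => hc i
      refine ⟨t, ht, fun i => c' i, fun i => hc' i i.2, ?_⟩
      rw [← hsum]
      exact sum_coe_sort t fun i => c' i • g i
    · rintro ⟨t, -, c, hc, rfl⟩
      exact sum_mem fun i _ => smul_mem _ (hc i) (subset_hull (Set.mem_range_self _))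
  rw [hunion]
  refine isClosed_iUnion_of_finite fun t => isClosed_iUnion_of_finite fun ht => ?_
  exact (LinearMap.isClosedEmbedding_of_injective (LinearMap.ker_eq_bot.mpr
    ht.fintypeLinearCombination_injective)).isClosedMap _ isClosed_Ici

variable [LocallyConvexSpace ℝ E]

theorem mem_hull_range_of_forall_nonneg [Finite ι] (g : ι → E) {x : E}
    (hx : ∀ f : StrongDual ℝ E, (∀ i, 0 ≤ f (g i)) → 0 ≤ f x) :
    x ∈ hull ℝ (Set.range g) := by
  by_contra hxC
  obtain ⟨f, hfC, hfx⟩ := ProperCone.hyperplane_separation_point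
    (⟨hull ℝ (Set.range g), isClosed_hull_range g⟩ : ProperCone ℝ E) hxC
  exact hfx.not_ge (hx f fun i => hfC _ (subset_hull ⟨i, rfl⟩))

end PointedCone

section Shannon

variable {V : Type*} [DecidableEq V]

theorem isPolymatroid_of_condH_nonneg_of_condMI_nonneg [Fintype V] {h : Finset V → ℝ}
    (h0 : h ∅ = 0) (hcondH : ∀ Y X, 0 ≤ condH h Y X) (hcondMI : ∀ Y Z X, 0 ≤ condMI h Y Z X) :
    IsPolymatroid h := by
  refine ⟨h0, fun A => ?_, fun A B hAB => ?_, fun A B => ?_⟩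
  · simpa [condH, h0] using hcondH A ∅
  · simpa [condH, union_eq_right.mpr hAB] using hcondH B A
  · have := hcondMI A B (A ∩ B)
    rw [condMI, union_eq_right.mpr inter_subset_left, union_eq_right.mpr inter_subset_right]
      at this
    linarith

/-- The `∅` coordinate is zeroed out, so that every linear form `φ` gives a set function
`A ↦ φ (coordVec A)` vanishing at `∅`. -/
noncomputable def coordVec (A : Finset V) : Finset V → ℝ :=
  if A = ∅ then 0 else Pi.single A 1

noncomputable def condHVec (Y X : Finset V) : Finset V → ℝ :=
  coordVec (X ∪ Y) - coordVec X

noncomputable def condMIVec (Y Z X : Finset V) : Finset V → ℝ :=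
  coordVec (X ∪ Y) + coordVec (X ∪ Z) - coordVec X - coordVec (X ∪ Y ∪ Z)

noncomputable def setFunction (φ : (Finset V → ℝ) →ₗ[ℝ] ℝ) (A : Finset V) : ℝ :=
  φ (coordVec A)

variable (φ : (Finset V → ℝ) →ₗ[ℝ] ℝ)

@[simp]
theorem setFunction_empty : setFunction φ ∅ = 0 := by
  simp [setFunction, coordVec]

@[simp]
theorem map_condHVec (Y X : Finset V) : φ (condHVec Y X) = condH (setFunction φ) Y X := by
  simp [condHVec, condH, setFunction]

@[simp]
theorem map_condMIVec (Y Z X : Finset V) :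
    φ (condMIVec Y Z X) = condMI (setFunction φ) Y Z X := by
  simp [condMIVec, condMI, setFunction]

theorem setFunction_linearCombination [Fintype V] {h : Finset V → ℝ} (h0 : h ∅ = 0) :
    setFunction (Fintype.linearCombination ℝ h) = h := by
  ext A
  by_cases hA : A = ∅
  · simp [hA, h0]
  · simp [setFunction, coordVec, hA]

end Shannon

theorem omega_shannon_identity_general {V : Type*} [DecidableEq V] [Fintype V]
    {L J I : ℕ}
    (U : Fin L → Finset V) (Xj Yj Zj Gj : Fin J → Finset V)
    (Xi Yi : Fin I → Finset V)
    (lam : Fin L → ℝ) (α β ζ κ : Fin J → ℝ) (w : Fin I → ℝ)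
    (hvalid : ∀ h : Finset V → ℝ, IsPolymatroid h →
      (∑ ℓ, lam ℓ * h (U ℓ)) +
        (∑ j, (α j * condH h (Xj j) (Gj j) + β j * condH h (Yj j) (Gj j) +
               ζ j * condH h (Zj j) (Gj j) + κ j * h (Gj j))) ≤
      ∑ i, w i * condH h (Yi i) (Xi i)) :
    ∃ (P Q : ℕ) (Xp Yp : Fin P → Finset V) (Xq Yq Zq : Fin Q → Finset V)
      (m : Fin P → ℝ) (s : Fin Q → ℝ),
      (∀ p, 0 ≤ m p) ∧ (∀ q, 0 ≤ s q) ∧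
      ∀ h : Finset V → ℝ, h ∅ = 0 →
        (∑ ℓ, lam ℓ * h (U ℓ)) +
          (∑ j, (α j * condH h (Xj j) (Gj j) + β j * condH h (Yj j) (Gj j) +
                 ζ j * condH h (Zj j) (Gj j) + κ j * h (Gj j))) =
        (∑ i, w i * condH h (Yi i) (Xi i))
          - (∑ p, m p * condH h (Yp p) (Xp p))
          - (∑ q, s q * condMI h (Yq q) (Zq q) (Xq q)) := by
  set eP := (Fintype.equivFin (Finset V × Finset V)).symm
  set eQ := (Fintype.equivFin (Finset V × Finset V × Finset V)).symm
  set g : _ ⊕ _ → Finset V → ℝ := Sum.elim (fun p => condHVec (eP p).1 (eP p).2)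
    (fun q => condMIVec (eQ q).1 (eQ q).2.1 (eQ q).2.2)
  set F : Finset V → ℝ := (∑ i, w i • condHVec (Yi i) (Xi i)) -
    ((∑ ℓ, lam ℓ • coordVec (U ℓ)) + ∑ j, (α j • condHVec (Xj j) (Gj j) +
      β j • condHVec (Yj j) (Gj j) + ζ j • condHVec (Zj j) (Gj j) + κ j • coordVec (Gj j)))
  have map_F (φ : (Finset V → ℝ) →ₗ[ℝ] ℝ) :
      φ F = (∑ i, w i * condH (setFunction φ) (Yi i) (Xi i)) -
        ((∑ ℓ, lam ℓ * setFunction φ (U ℓ)) +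
          ∑ j, (α j * condH (setFunction φ) (Xj j) (Gj j) +
            β j * condH (setFunction φ) (Yj j) (Gj j) +
            ζ j * condH (setFunction φ) (Zj j) (Gj j) + κ j * setFunction φ (Gj j))) := by
    simp [F, setFunction]
  have hF : F ∈ PointedCone.hull ℝ (Set.range g) := by
    refine PointedCone.mem_hull_range_of_forall_nonneg g fun f hf => ?_
    set φ : (Finset V → ℝ) →ₗ[ℝ] ℝ := f.toLinearMap
    have hφ : ∀ k, 0 ≤ φ (g k) := hf
    have hpoly := isPolymatroid_of_condH_nonneg_of_condMI_nonneg (setFunction_empty φ)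
      (fun Y X => by simpa [g] using hφ (.inl (eP.symm (Y, X))))
      (fun Y Z X => by simpa [g] using hφ (.inr (eQ.symm (Y, Z, X))))
    change 0 ≤ φ F
    linarith [map_F φ, hvalid _ hpoly]
  obtain ⟨c, hc, hFc⟩ := PointedCone.mem_hull_range_iff.mp hF
  refine ⟨_, _, fun p => (eP p).2, fun p => (eP p).1, fun q => (eQ q).2.2, fun q => (eQ q).1,
    fun q => (eQ q).2.1, fun p => c (.inl p), fun q => c (.inr q), fun p => hc _, fun q => hc _,
    fun h h0 => ?_⟩
  have hcomb := congrArg (Fintype.linearCombination ℝ h) hFc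
  rw [map_F, map_sum, Fintype.sum_sum_type] at hcomb
  simp [g, setFunction_linearCombination h0] at hcomb
  linarith

/-- every ω-Shannon inequality can be written, identically in
any set function `h` with `h(∅) = 0`, as the right-hand side minus a
nonnegative combination of monotonicity terms `h(Y_p|X_p)` and submodularity
terms `h(Y_q;Z_q|X_q)`. -/
theorem omega_shannon_identity {V : Type*} [DecidableEq V] [Fintype V]
    (ω : ℝ) (hω₂ : 2 ≤ ω) (hω₃ : ω ≤ 3)
    {L J I : ℕ}
    (U : Fin L → Finset V) (Xj Yj Zj Gj : Fin J → Finset V)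
    (Xi Yi : Fin I → Finset V)
    (lam : Fin L → ℝ) (α β ζ κ : Fin J → ℝ) (w : Fin I → ℝ)
    (hlam : ∀ ℓ, 0 ≤ lam ℓ) (hα : ∀ j, 0 ≤ α j) (hβ : ∀ j, 0 ≤ β j)
    (hζ : ∀ j, 0 ≤ ζ j) (hκ : ∀ j, 0 < κ j) (hw : ∀ i, 0 ≤ w i)
    (hdom : ∀ j, OmegaDominant ω (α j / κ j) (β j / κ j) (ζ j / κ j))
    (hvalid : ∀ h : Finset V → ℝ, IsPolymatroid h →
      (∑ ℓ, lam ℓ * h (U ℓ)) +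
        (∑ j, (α j * condH h (Xj j) (Gj j) + β j * condH h (Yj j) (Gj j) +
               ζ j * condH h (Zj j) (Gj j) + κ j * h (Gj j))) ≤
      ∑ i, w i * condH h (Yi i) (Xi i)) :
    ∃ (P Q : ℕ) (Xp Yp : Fin P → Finset V) (Xq Yq Zq : Fin Q → Finset V)
      (m : Fin P → ℝ) (s : Fin Q → ℝ),
      (∀ p, 0 ≤ m p) ∧ (∀ q, 0 ≤ s q) ∧
      ∀ h : Finset V → ℝ, h ∅ = 0 →
        (∑ ℓ, lam ℓ * h (U ℓ)) +
          (∑ j, (α j * condH h (Xj j) (Gj j) + β j * condH h (Yj j) (Gj j) +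
                 ζ j * condH h (Zj j) (Gj j) + κ j * h (Gj j))) =
        (∑ i, w i * condH h (Yi i) (Xi i))
          - (∑ p, m p * condH h (Yp p) (Xp p))
          - (∑ q, s q * condMI h (Yq q) (Zq q) (Xq q)) :=
  omega_shannon_identity_general U Xj Yj Zj Gj Xi Yi lam α β ζ κ w hvalid
end

section
/- (Generalized Reset Lemma.) Let an integral ω-Shannon inequality over a finite set V be given, with left-hand side Σ_{ℓ∈[L]} λ_ℓ·h(U_ℓ) + Σ_{j∈[J]} ( α_j·h(X_j|G_j) + β_j·h(Y_j|G_j) + ζ_j·h(Z_j|G_j) + κ_j·h(G_j) ) and right-hand side Σ_{i∈[I]} w_i·h(Y_i|X_i), and suppose that for some i_0 ∈ [I] we have X_{i_0} = ∅ and w_{i_0} > 0. Then there exist nonnegative integers λ'_ℓ (ℓ∈[L]), α'_j, β'_j, ζ'_j, κ'_j (j∈[J]), w'_i (i∈[I]) and a subset J' ⊆ [J] with κ'_j > 0 for j ∈ J' and α'_j = β'_j = ζ'_j = κ'_j = 0 for j ∉ J', such that Σ_{ℓ∈[L]} λ'_ℓ·h(U_ℓ) + Σ_{j∈J'} ( α'_j·h(X_j|G_j)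 + β'_j·h(Y_j|G_j) + ζ'_j·h(Z_j|G_j) + κ'_j·h(G_j) ) ≤ Σ_{i∈[I]} w'_i·h(Y_i|X_i) is again an integral ω-Shannon inequality, and moreover w'_{i_0} ≤ w_{i_0} − 1, w'_i ≤ w_i for all i ∈ [I]∖{i_0}, and Σ_ℓ λ'_ℓ + Σ_j κ'_j ≥ Σ_ℓ λ_ℓ + Σ_j κ_j − 1. -/
open Finset

/-- The left-hand side of an (integral) ω-Shannon inequality, with
natural-number coefficients. -/
noncomputable def ShannonLHS {V : Type*} [DecidableEq V] {L J : ℕ}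
    (h : Finset V → ℝ) (U : Fin L → Finset V) (lam : Fin L → ℕ)
    (Xj Yj Zj Gj : Fin J → Finset V) (α β ζ κ : Fin J → ℕ) : ℝ :=
  (∑ ℓ, (lam ℓ : ℝ) * h (U ℓ)) +
    ∑ j, ((α j : ℝ) * condH h (Xj j) (Gj j) + (β j : ℝ) * condH h (Yj j) (Gj j) +
          (ζ j : ℝ) * condH h (Zj j) (Gj j) + (κ j : ℝ) * h (Gj j))

/-- The right-hand side of an (integral) ω-Shannon inequality. -/
noncomputable def ShannonRHS {V : Type*} [DecidableEq V] {I : ℕ}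
    (h : Finset V → ℝ) (Xi Yi : Fin I → Finset V) (w : Fin I → ℕ) : ℝ :=
  ∑ i, (w i : ℝ) * condH h (Yi i) (Xi i)

/-- The integrality certificate: the left-hand side equals the right-hand side
minus a nonnegative *integer* combination of monotonicity terms `h(Y_p|X_p)`
and submodularity terms `h(Y_q;Z_q|X_q)`, identically in every set function
`h` with `h(∅) = 0`. -/
def IntegralCert {V : Type*} [DecidableEq V] [Fintype V] {L J I : ℕ}
    (U : Fin L → Finset V) (lam : Fin L → ℕ)
    (Xj Yj Zj Gj : Fin J → Finset V) (α β ζ κ : Fin J → ℕ)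
    (Xi Yi : Fin I → Finset V) (w : Fin I → ℕ) : Prop :=
  ∃ (P Q : ℕ) (Xp Yp : Fin P → Finset V) (Xq Yq Zq : Fin Q → Finset V)
    (m : Fin P → ℕ) (s : Fin Q → ℕ),
    ∀ h : Finset V → ℝ, h ∅ = 0 →
      ShannonLHS h U lam Xj Yj Zj Gj α β ζ κ =
        ShannonRHS h Xi Yi w
          - (∑ p, (m p : ℝ) * condH h (Yp p) (Xp p))
          - (∑ q, (s q : ℝ) * condMI h (Yq q) (Zq q) (Xq q))

/-!
Removing one unit of `h(Y_{i₀}) = h(Y_{i₀}|∅)` from the right-hand side of the certificate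
identity leaves a debt `+h(C)`, `C = Y_{i₀}`, on its right. A monotonicity term `h(Y|X)` of the
certificate with `C ⊆ X ∪ Y` moves the debt down to `h(X)`, the term becoming `h(X ∪ Y|C)`.
Evaluating the identity at the indicator of the sets from which no such chain leads to a terminal
set (a monotone `0/1` function) shows that the debt always reaches one. A terminal set is `∅`;
a set `U_ℓ`, `G_j ∪ X_j`, `G_j ∪ Y_j` or `G_j ∪ Z_j` of the left-hand side, paid for with one unit
of `λ_ℓ` or `κ_j` (the block stays ω-dominant as `ω ≥ 1`, or dissolves into monotonicity terms
when `κ_j = 1`); or `X ∪ Y` or `X ∪ Z` for a submodularity term `h(Y;Z|X)`, which splits into a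
monotonicity term and the new debt `h(X ∪ Y ∪ Z)`, so that the process terminates.
-/

section Polymatroid

variable {V : Type*} [DecidableEq V] [Fintype V]

lemma IsPolymatroid.monotone {h : Finset V → ℝ} (hp : IsPolymatroid h) :
    Monotone h :=
  hp.2.2.1

lemma IsPolymatroid.condMI_nonneg {h : Finset V → ℝ} (hp : IsPolymatroid h)
    (Y Z X : Finset V) : 0 ≤ condMI h Y Z X := by
  have hsub := hp.2.2.2 (X ∪ Y) (X ∪ Z)
  have hX : h X ≤ h ((X ∪ Y) ∩ (X ∪ Z)) :=
    hp.monotone (subset_inter subset_union_left subset_union_left)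
  rw [show X ∪ Y ∪ (X ∪ Z) = X ∪ Y ∪ Z by ext; simp; tauto] at hsub
  rw [condMI]
  linarith

end Polymatroid

namespace IntegralShannon

section SetFunctions

variable {V : Type*} [DecidableEq V]

lemma condH_of_subset (h : Finset V → ℝ) {X Y : Finset V} (hXY : X ⊆ Y) :
    condH h Y X = h Y - h X := by
  rw [condH, union_eq_right.mpr hXY]

lemma condH_nonneg_of_monotone {h : Finset V → ℝ} (hh : Monotone h) (Y X : Finset V) :
    0 ≤ condH h Y X :=
  sub_nonneg.mpr (hh subset_union_left)

/-- The pair `(X, Y)` stands for the term `h(Y|X)`. -/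
noncomputable def monoSum (h : Finset V → ℝ) : Multiset (Finset V × Finset V) →+ ℝ :=
  Multiset.sumAddMonoidHom.comp (Multiset.mapAddMonoidHom fun e => condH h e.2 e.1)

/-- The triple `(X, Y, Z)` stands for the term `h(Y;Z|X)`. -/
noncomputable def submodSum (h : Finset V → ℝ) :
    Multiset (Finset V × Finset V × Finset V) →+ ℝ :=
  Multiset.sumAddMonoidHom.comp (Multiset.mapAddMonoidHom fun e => condMI h e.2.1 e.2.2 e.1)

lemma monoSum_apply (h : Finset V → ℝ) (M : Multiset (Finset V × Finset V)) :
    monoSum h M = (M.map fun e => condH h e.2 e.1).sum := rfl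

lemma submodSum_apply (h : Finset V → ℝ) (S : Multiset (Finset V × Finset V × Finset V)) :
    submodSum h S = (S.map fun e => condMI h e.2.1 e.2.2 e.1).sum := rfl

@[simp] lemma monoSum_cons (h : Finset V → ℝ) (e : Finset V × Finset V) (M) :
    monoSum h (e ::ₘ M) = condH h e.2 e.1 + monoSum h M := by
  simp [monoSum_apply]

@[simp] lemma monoSum_replicate (h : Finset V → ℝ) (n : ℕ) (e : Finset V × Finset V) :
    monoSum h (Multiset.replicate n e) = n * condH h e.2 e.1 := by
  simp [monoSum_apply]

@[simp] lemma submodSum_replicate (h : Finset V → ℝ) (n : ℕ) (e : Finset V × Finset V × Finset V) :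
    submodSum h (Multiset.replicate n e) = n * condMI h e.2.1 e.2.2 e.1 := by
  simp [submodSum_apply]

@[simp] lemma submodSum_cons (h : Finset V → ℝ) (e : Finset V × Finset V × Finset V) (S) :
    submodSum h (e ::ₘ S) = condMI h e.2.1 e.2.2 e.1 + submodSum h S := by
  simp [submodSum_apply]

lemma monoSum_nonneg_of_monotone {h : Finset V → ℝ} (hh : Monotone h) (M) :
    0 ≤ monoSum h M :=
  Multiset.sum_nonneg fun _ hx => by
    obtain ⟨e, -, rfl⟩ := Multiset.mem_map.mp hx
    exact condH_nonneg_of_monotone hh _ _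

lemma submodSum_nonneg [Fintype V] {h : Finset V → ℝ} (hp : IsPolymatroid h) (S) :
    0 ≤ submodSum h S :=
  Multiset.sum_nonneg fun _ hx => by
    obtain ⟨e, -, rfl⟩ := Multiset.mem_map.mp hx
    exact hp.condMI_nonneg _ _ _

lemma exists_fin_enum {α : Type*} (M : Multiset α) :
    ∃ (P : ℕ) (g : Fin P → α), ∀ f : α → ℝ, (M.map f).sum = ∑ p, f (g p) :=
  ⟨M.toList.length, fun p => M.toList[p.1], fun f => by
    rw [Fin.sum_univ_fun_getElem, ← Multiset.sum_coe, ← Multiset.map_coe, Multiset.coe_toList]⟩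

end SetFunctions

section Shannon

variable {V : Type*} [DecidableEq V]

lemma sum_add_eq_sum_add_of_eq_of_ne {ι M : Type*} [Fintype ι] [DecidableEq ι] [AddCommMonoid M]
    {f g : ι → M} (i₀ : ι) (hfg : ∀ i ≠ i₀, f i = g i) :
    ∑ i, f i + g i₀ = ∑ i, g i + f i₀ := by
  rw [← add_sum_erase _ f (mem_univ i₀), ← add_sum_erase _ g (mem_univ i₀),
    sum_congr rfl fun i hi => hfg i (ne_of_mem_erase hi)]
  abel

lemma shannonRHS_nonneg_of_monotone {I : ℕ} {h : Finset V → ℝ} (hh : Monotone h)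
    (Xi Yi : Fin I → Finset V) (w : Fin I → ℕ) : 0 ≤ ShannonRHS h Xi Yi w :=
  sum_nonneg fun _ _ => mul_nonneg (Nat.cast_nonneg _) (condH_nonneg_of_monotone hh _ _)

lemma shannonRHS_update_sub_one {I : ℕ} (h : Finset V → ℝ) (Xi Yi : Fin I → Finset V)
    {w : Fin I → ℕ} {i₀ : Fin I} (hw : 0 < w i₀) :
    ShannonRHS h Xi Yi w =
      ShannonRHS h Xi Yi (Function.update w i₀ (w i₀ - 1)) + condH h (Yi i₀) (Xi i₀) := by
  have := sum_add_eq_sum_add_of_eq_of_ne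
    (f := fun i => (Function.update w i₀ (w i₀ - 1) i : ℝ) * condH h (Yi i) (Xi i))
    (g := fun i => (w i : ℝ) * condH h (Yi i) (Xi i)) i₀
    fun i hi => by rw [Function.update_of_ne hi]
  simp only [Function.update_self, Nat.cast_sub hw, Nat.cast_one] at this
  rw [ShannonRHS, ShannonRHS]
  linarith

variable [Fintype V] {L J I : ℕ} {U : Fin L → Finset V} {Xj Yj Zj Gj : Fin J → Finset V}
  {Xi Yi : Fin I → Finset V} {lam : Fin L → ℕ} {α β ζ κ : Fin J → ℕ} {w : Fin I → ℕ}

lemma integralCert_iff :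
    IntegralCert U lam Xj Yj Zj Gj α β ζ κ Xi Yi w ↔
      ∃ (M : Multiset (Finset V × Finset V)) (S : Multiset (Finset V × Finset V × Finset V)),
        ∀ h : Finset V → ℝ, h ∅ = 0 →
          ShannonLHS h U lam Xj Yj Zj Gj α β ζ κ + monoSum h M + submodSum h S =
            ShannonRHS h Xi Yi w := by
  constructor
  · rintro ⟨P, Q, Xp, Yp, Xq, Yq, Zq, m, s, hcert⟩
    refine ⟨∑ p, Multiset.replicate (m p) (Xp p, Yp p),
      ∑ q, Multiset.replicate (s q) (Xq q, Yq q, Zq q), fun h h0 => ?_⟩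
    simp only [map_sum, monoSum_replicate, submodSum_replicate, hcert h h0]
    ring
  · rintro ⟨M, S, hMS⟩
    obtain ⟨P, gM, hgM⟩ := exists_fin_enum M
    obtain ⟨Q, gS, hgS⟩ := exists_fin_enum S
    refine ⟨P, Q, fun p => (gM p).1, fun p => (gM p).2, fun q => (gS q).1,
      fun q => (gS q).2.1, fun q => (gS q).2.2, fun _ => 1, fun _ => 1, fun h h0 => ?_⟩
    simp only [Nat.cast_one, one_mul, ← hMS h h0, monoSum_apply, submodSum_apply, hgM, hgS]
    ring

lemma IntegralCert.shannonLHS_le (hcert : IntegralCert U lam Xj Yj Zj Gj α β ζ κ Xi Yi w)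
    {h : Finset V → ℝ} (hp : IsPolymatroid h) :
    ShannonLHS h U lam Xj Yj Zj Gj α β ζ κ ≤ ShannonRHS h Xi Yi w := by
  obtain ⟨M, S, hMS⟩ := integralCert_iff.mp hcert
  have := hMS h hp.1
  linarith [monoSum_nonneg_of_monotone hp.monotone M, submodSum_nonneg hp S]

end Shannon

section Blocks

variable {V : Type*} [DecidableEq V]

noncomputable def blockTerm (h : Finset V → ℝ) (X Y Z G : Finset V) (a b z k : ℕ) : ℝ :=
  a * condH h X G + b * condH h Y G + z * condH h Z G + k * h G

/-- `(a, b, z, k)` is either ω-dominant after division by `k > 0`, or zero. -/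
def Admissible (ω : ℝ) (a b z k : ℕ) : Prop :=
  k ≤ a ∧ k ≤ b ∧ ω * k ≤ ((a + b + z : ℕ) : ℝ) ∧ (k = 0 → a = 0 ∧ b = 0 ∧ z = 0)

variable {ω : ℝ} {a b z k : ℕ}

lemma admissible_iff_omegaDominant (hk : 0 < k) :
    Admissible ω a b z k ↔ OmegaDominant ω (a / k) (b / k) (z / k) := by
  have hk' : (0 : ℝ) < k := Nat.cast_pos.mpr hk
  simp only [Admissible, OmegaDominant, one_le_div hk', Nat.cast_le, ← add_div,
    le_div_iff₀ hk', zero_mul, Nat.cast_nonneg, Nat.cast_add, hk.ne', false_imp_iff, and_true,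
    true_and, mul_comm ω]

lemma Admissible.exists_pred (hω : 1 ≤ ω) (hadm : Admissible ω a b z k) (hk : 0 < k)
    {da db dz : ℕ} (hd : da + db + dz = 1) (hdz : dz ≤ z) :
    ∃ a' b' z', Admissible ω a' b' z' (k - 1) ∧ a' + da ≤ a ∧ b' + db ≤ b ∧ z' + dz ≤ z := by
  obtain ⟨ha, hb, hs, -⟩ := hadm
  obtain rfl | hk2 : k = 1 ∨ 2 ≤ k := by omega
  · exact ⟨0, 0, 0, by simp [Admissible], by omega, by omega, by omega⟩
  refine ⟨a - da, b - db, z - dz, ⟨by omega, by omega, ?_, by omega⟩, by omega, by omega, by omega⟩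
  have hsum : ((a - da + (b - db) + (z - dz) : ℕ) : ℝ) + 1 = ((a + b + z : ℕ) : ℝ) := by
    norm_cast; omega
  rw [Nat.cast_sub hk, Nat.cast_one, mul_sub, mul_one]
  linarith

lemma blockTerm_eq_add (h : Finset V → ℝ) (X Y Z G : Finset V) {a' b' z' da db dz : ℕ}
    (ha : a' + da ≤ a) (hb : b' + db ≤ b) (hz : z' + dz ≤ z) (hk : 0 < k) :
    blockTerm h X Y Z G a b z k =
      blockTerm h X Y Z G a' b' z' (k - 1) +
        monoSum h (Multiset.replicate (a - (a' + da)) (G, X) +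
          Multiset.replicate (b - (b' + db)) (G, Y) + Multiset.replicate (z - (z' + dz)) (G, Z)) +
        (da * condH h X G + db * condH h Y G + dz * condH h Z G + h G) := by
  simp only [blockTerm, map_add, monoSum_replicate]
  push_cast [Nat.cast_sub ha, Nat.cast_sub hb, Nat.cast_sub hz, Nat.cast_sub hk]
  ring

lemma blockTerm_nonpos {u : Finset V → ℝ} (hu : Monotone u) (hu0 : u ∅ = 0)
    {X Y Z G : Finset V} (hX : u (G ∪ X) = 0) (hY : u (G ∪ Y) = 0)
    (hZ : 0 < z → u (G ∪ Z) = 0) : blockTerm u X Y Z G a b z k ≤ 0 := by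
  have hG : u G = 0 :=
    le_antisymm (hX ▸ hu subset_union_left) (hu0 ▸ hu (empty_subset G))
  rcases z.eq_zero_or_pos with rfl | hz
  · simp [blockTerm, condH, hG, hX, hY]
  · simp [blockTerm, condH, hG, hX, hY, hZ hz]

end Blocks

structure Coeffs (L J : ℕ) where
  lam : Fin L → ℕ
  α : Fin J → ℕ
  β : Fin J → ℕ
  ζ : Fin J → ℕ
  κ : Fin J → ℕ

namespace Coeffs

variable {V : Type*} [DecidableEq V] {L J : ℕ}
  (U : Fin L → Finset V) (Xj Yj Zj Gj : Fin J → Finset V) (ω : ℝ)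

noncomputable def lhs (c : Coeffs L J) (h : Finset V → ℝ) : ℝ :=
  ShannonLHS h U c.lam Xj Yj Zj Gj c.α c.β c.ζ c.κ

def weight (c : Coeffs L J) : ℕ :=
  ∑ ℓ, c.lam ℓ + ∑ j, c.κ j

def Valid (c : Coeffs L J) : Prop :=
  ∀ j, Admissible ω (c.α j) (c.β j) (c.ζ j) (c.κ j)

def decLam (c : Coeffs L J) (ℓ : Fin L) : Coeffs L J :=
  { c with lam := Function.update c.lam ℓ (c.lam ℓ - 1) }

def setBlock (c : Coeffs L J) (j : Fin J) (a b z k : ℕ) : Coeffs L J :=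
  ⟨c.lam, Function.update c.α j a, Function.update c.β j b, Function.update c.ζ j z,
    Function.update c.κ j k⟩

variable {U Xj Yj Zj Gj ω} {c : Coeffs L J}

lemma lhs_eq (h : Finset V → ℝ) :
    c.lhs U Xj Yj Zj Gj h = ∑ ℓ, c.lam ℓ * h (U ℓ) +
      ∑ j, blockTerm h (Xj j) (Yj j) (Zj j) (Gj j) (c.α j) (c.β j) (c.ζ j) (c.κ j) :=
  rfl

lemma lhs_decLam {ℓ : Fin L} (hℓ : 0 < c.lam ℓ) (h : Finset V → ℝ) :
    c.lhs U Xj Yj Zj Gj h = (c.decLam ℓ).lhs U Xj Yj Zj Gj h + h (U ℓ) := by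
  have := sum_add_eq_sum_add_of_eq_of_ne (f := fun i => ((c.decLam ℓ).lam i : ℝ) * h (U i))
    (g := fun i => (c.lam i : ℝ) * h (U i)) ℓ fun i hi => by
      simp only [decLam, Function.update_of_ne hi]
  simp only [decLam, Function.update_self, Nat.cast_sub hℓ, Nat.cast_one] at this
  simp only [lhs_eq, decLam]
  linarith

lemma weight_decLam {ℓ : Fin L} (hℓ : 0 < c.lam ℓ) : c.weight = (c.decLam ℓ).weight + 1 := by
  have := sum_add_eq_sum_add_of_eq_of_ne (f := (c.decLam ℓ).lam) (g := c.lam) ℓ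
    fun i hi => Function.update_of_ne hi _ _
  simp only [decLam, Function.update_self] at this
  simp only [weight, decLam]
  omega

lemma lhs_setBlock (j : Fin J) (a b z k : ℕ) (h : Finset V → ℝ) :
    c.lhs U Xj Yj Zj Gj h + blockTerm h (Xj j) (Yj j) (Zj j) (Gj j) a b z k =
      (c.setBlock j a b z k).lhs U Xj Yj Zj Gj h +
        blockTerm h (Xj j) (Yj j) (Zj j) (Gj j) (c.α j) (c.β j) (c.ζ j) (c.κ j) := by
  have := sum_add_eq_sum_add_of_eq_of_ne
    (f := fun i => blockTerm h (Xj i) (Yj i) (Zj i) (Gj i)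
      ((c.setBlock j a b z k).α i) ((c.setBlock j a b z k).β i) ((c.setBlock j a b z k).ζ i)
      ((c.setBlock j a b z k).κ i))
    (g := fun i => blockTerm h (Xj i) (Yj i) (Zj i) (Gj i) (c.α i) (c.β i) (c.ζ i) (c.κ i)) j
    fun i hi => by simp only [setBlock, Function.update_of_ne hi]
  simp only [setBlock, Function.update_self] at this
  simp only [lhs_eq, setBlock]
  linarith

lemma weight_setBlock (j : Fin J) (a b z k : ℕ) :
    (c.setBlock j a b z k).weight + c.κ j = c.weight + k := by
  have := sum_add_eq_sum_add_of_eq_of_ne (f := (c.setBlock j a b z k).κ) (g := c.κ) j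
    fun i hi => Function.update_of_ne hi _ _
  simp only [setBlock, Function.update_self] at this
  simp only [weight, setBlock]
  omega

lemma Valid.setBlock (hc : c.Valid ω) {j : Fin J} {a b z k : ℕ} (hadm : Admissible ω a b z k) :
    (c.setBlock j a b z k).Valid ω := by
  intro i
  rcases eq_or_ne i j with rfl | hi
  · simpa [Coeffs.setBlock] using hadm
  · simpa [Coeffs.setBlock, Function.update_of_ne hi] using hc i

end Coeffs

section Chains

variable {V : Type*} [DecidableEq V]

/-- `Chain K C D`: using each edge `(X, Y)` of `K` once, to move from a set inside `X ∪ Y` to `X`,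
one gets from `C` to a subset of `D`. -/
inductive Chain : Multiset (Finset V × Finset V) → Finset V → Finset V → Prop
  | of_subset {C D : Finset V} : C ⊆ D → Chain 0 C D
  | cons {e : Finset V × Finset V} {K : Multiset (Finset V × Finset V)} {C D : Finset V} :
      C ⊆ e.1 ∪ e.2 → Chain K e.1 D → Chain (e ::ₘ K) C D

variable {K M : Multiset (Finset V × Finset V)} {A C D : Finset V}

lemma Chain.mono (hAC : A ⊆ C) : Chain K C D → Chain K A D
  | .of_subset hCD => .of_subset (hAC.trans hCD)
  | .cons hC hK => .cons (hAC.trans hC) hK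

lemma Chain.exists_le_of_mem {e : Finset V × Finset V} (hK : Chain K A D) (he : e ∈ K)
    (hC : C ⊆ e.1 ∪ e.2) : ∃ K' ≤ K, Chain K' C D := by
  induction hK with
  | of_subset => simp at he
  | cons _ hK ih =>
    rcases Multiset.mem_cons.mp he with rfl | he
    · exact ⟨_, le_rfl, .cons hC hK⟩
    · obtain ⟨K', hle, hK'⟩ := ih he
      exact ⟨K', hle.trans (Multiset.le_cons_self _ _), hK'⟩

lemma Chain.exists_monoSum_eq (hK : Chain K C D) :
    ∃ K', ∀ h : Finset V → ℝ, monoSum h K + h D = monoSum h K' + h C := by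
  induction hK with
  | @of_subset C D hCD =>
    refine ⟨(C, D) ::ₘ 0, fun h => ?_⟩
    rw [monoSum_cons, map_zero, condH_of_subset h hCD]
    ring
  | @cons e K C D hC _ ih =>
    obtain ⟨K', hK'⟩ := ih
    refine ⟨(C, e.1 ∪ e.2) ::ₘ K', fun h => ?_⟩
    simp only [monoSum_cons, condH_of_subset h hC]
    rw [condH] at *
    linarith [hK' h]

def Reachable (M : Multiset (Finset V × Finset V)) (T : Finset V → Prop) (C : Finset V) : Prop :=
  ∃ K ≤ M, ∃ D, T D ∧ Chain K C D

variable {T : Finset V → Prop}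

lemma reachable_of_mem (hC : T C) : Reachable M T C :=
  ⟨0, Multiset.zero_le M, C, hC, .of_subset subset_rfl⟩

lemma Reachable.mono (hAC : A ⊆ C) : Reachable M T C → Reachable M T A
  | ⟨K, hKM, D, hD, hK⟩ => ⟨K, hKM, D, hD, hK.mono hAC⟩

lemma Reachable.union_of_mem {e : Finset V × Finset V} (he : e ∈ M) :
    Reachable M T e.1 → Reachable M T (e.1 ∪ e.2)
  | ⟨K, hKM, D, hD, hK⟩ => by
    by_cases heK : e ∈ K
    · obtain ⟨K', hle, hK'⟩ := hK.exists_le_of_mem heK subset_rfl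
      exact ⟨K', hle.trans hKM, D, hD, hK'⟩
    · exact ⟨e ::ₘ K, (Multiset.cons_le_of_notMem heK).mpr ⟨he, hKM⟩, D, hD, .cons subset_rfl hK⟩

open Classical in
noncomputable def unreachableIndicator (M : Multiset (Finset V × Finset V))
    (T : Finset V → Prop) (A : Finset V) : ℝ :=
  if Reachable M T A then 0 else 1

lemma unreachableIndicator_of_reachable (hA : Reachable M T A) :
    unreachableIndicator M T A = 0 :=
  if_pos hA

lemma unreachableIndicator_of_not_reachable (hA : ¬ Reachable M T A) :
    unreachableIndicator M T A = 1 :=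
  if_neg hA

lemma unreachableIndicator_le_one : unreachableIndicator M T A ≤ 1 := by
  unfold unreachableIndicator; split_ifs <;> norm_num

lemma unreachableIndicator_monotone : Monotone (unreachableIndicator M T) := by
  intro A C hAC
  by_cases hA : Reachable M T A
  · rw [unreachableIndicator_of_reachable hA]
    unfold unreachableIndicator; split_ifs <;> norm_num
  · rw [unreachableIndicator_of_not_reachable hA,
      unreachableIndicator_of_not_reachable fun hC => hA (hC.mono hAC)]

lemma monoSum_unreachableIndicator_nonpos : monoSum (unreachableIndicator M T) M ≤ 0 := by
  rw [monoSum_apply, ← Multiset.sum_map_zero (m := M)]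
  refine Multiset.sum_map_le_sum_map _ _ fun e he => ?_
  rw [condH, sub_nonpos]
  by_cases h1 : Reachable M T e.1
  · rw [unreachableIndicator_of_reachable (h1.union_of_mem he),
      unreachableIndicator_of_reachable h1]
  · rw [unreachableIndicator_of_not_reachable h1]
    exact unreachableIndicator_le_one

end Chains

section Reset

variable {V : Type*} [DecidableEq V] {L J : ℕ}
  (U : Fin L → Finset V) (Xj Yj Zj Gj : Fin J → Finset V) (ω : ℝ)

def Cashable (c : Coeffs L J) (T : Finset V) : Prop :=
  ∃ (c' : Coeffs L J) (M₀ : Multiset (Finset V × Finset V)), c'.Valid ω ∧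
    c.weight ≤ c'.weight + 1 ∧
    ∀ h : Finset V → ℝ, c.lhs U Xj Yj Zj Gj h = c'.lhs U Xj Yj Zj Gj h + monoSum h M₀ + h T

variable (R : (Finset V → ℝ) → ℝ)

/-- The certificate identity, with the debt `h C` on the right. -/
def Balanced (c : Coeffs L J) (M : Multiset (Finset V × Finset V))
    (S : Multiset (Finset V × Finset V × Finset V)) (C : Finset V) : Prop :=
  ∀ h : Finset V → ℝ, h ∅ = 0 →
    c.lhs U Xj Yj Zj Gj h + monoSum h M + submodSum h S = R h + h C

def IsTerminal (c : Coeffs L J) (S : Multiset (Finset V × Finset V × Finset V))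
    (D : Finset V) : Prop :=
  D = ∅ ∨ Cashable U Xj Yj Zj Gj ω c D ∨ ∃ e ∈ S, D = e.1 ∪ e.2.1 ∨ D = e.1 ∪ e.2.2

variable {U Xj Yj Zj Gj ω R} {c : Coeffs L J}

lemma cashable_lam (hc : c.Valid ω) {ℓ : Fin L} (hℓ : 0 < c.lam ℓ) :
    Cashable U Xj Yj Zj Gj ω c (U ℓ) :=
  ⟨c.decLam ℓ, 0, hc, (Coeffs.weight_decLam hℓ).le, fun h => by
    rw [Coeffs.lhs_decLam hℓ, map_zero, add_zero]⟩

lemma cashable_block (hω : 1 ≤ ω) (hc : c.Valid ω) {j : Fin J} (hk : 0 < c.κ j)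
    {da db dz : ℕ} (hd : da + db + dz = 1) (hdz : dz ≤ c.ζ j) {T : Finset V}
    (hT : ∀ h : Finset V → ℝ, da * condH h (Xj j) (Gj j) + db * condH h (Yj j) (Gj j) +
      dz * condH h (Zj j) (Gj j) + h (Gj j) = h T) :
    Cashable U Xj Yj Zj Gj ω c T := by
  obtain ⟨a', b', z', hadm, ha, hb, hz⟩ := (hc j).exists_pred hω hk hd hdz
  refine ⟨c.setBlock j a' b' z' (c.κ j - 1),
    Multiset.replicate (c.α j - (a' + da)) (Gj j, Xj j) +
      Multiset.replicate (c.β j - (b' + db)) (Gj j, Yj j) +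
      Multiset.replicate (c.ζ j - (z' + dz)) (Gj j, Zj j), hc.setBlock hadm, ?_, fun h => ?_⟩
  · have := c.weight_setBlock j a' b' z' (c.κ j - 1)
    omega
  · have := c.lhs_setBlock (U := U) (Xj := Xj) (Yj := Yj) (Zj := Zj) (Gj := Gj)
      j a' b' z' (c.κ j - 1) h
    rw [blockTerm_eq_add h _ _ _ _ ha hb hz hk, hT] at this
    linarith

lemma lhs_nonpos (hω : 1 ≤ ω) (hc : c.Valid ω) {u : Finset V → ℝ} (hu : Monotone u)
    (hu0 : u ∅ = 0) (hcash : ∀ T, Cashable U Xj Yj Zj Gj ω c T → u T = 0) :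
    c.lhs U Xj Yj Zj Gj u ≤ 0 := by
  rw [Coeffs.lhs_eq]
  refine add_nonpos (sum_nonpos fun ℓ _ => ?_) (sum_nonpos fun j _ => ?_)
  · rcases (c.lam ℓ).eq_zero_or_pos with hℓ | hℓ
    · simp [hℓ]
    · simp [hcash _ (cashable_lam hc hℓ)]
  · rcases (c.κ j).eq_zero_or_pos with hk | hk
    · obtain ⟨ha, hb, hz⟩ := (hc j).2.2.2 hk
      simp [blockTerm, ha, hb, hz, hk]
    · refine blockTerm_nonpos hu hu0 (hcash _ ?_) (hcash _ ?_) fun hz => hcash _ ?_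
      · exact cashable_block (da := 1) (db := 0) (dz := 0) hω hc hk rfl (Nat.zero_le _)
          fun h => by simp [condH]
      · exact cashable_block (da := 0) (db := 1) (dz := 0) hω hc hk rfl (Nat.zero_le _)
          fun h => by simp [condH]
      · exact cashable_block (da := 0) (db := 0) (dz := 1) hω hc hk rfl hz
          fun h => by simp [condH]

/-- The debt can always be pushed along monotonicity edges to a terminal set: otherwise the
indicator of the unreachable sets would violate the identity. -/
lemma Balanced.reachable (hω : 1 ≤ ω) (hR : ∀ u, Monotone u → 0 ≤ R u) (hc : c.Valid ω)
    {M S C} (hbal : Balanced U Xj Yj Zj Gj R c M S C) :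
    Reachable M (IsTerminal U Xj Yj Zj Gj ω c S) C := by
  set u := unreachableIndicator M (IsTerminal U Xj Yj Zj Gj ω c S)
  have hu : Monotone u := unreachableIndicator_monotone
  have hterm : ∀ D, IsTerminal U Xj Yj Zj Gj ω c S D → u D = 0 := fun D hD =>
    unreachableIndicator_of_reachable (reachable_of_mem hD)
  have hu0 : u ∅ = 0 := hterm ∅ (Or.inl rfl)
  have hlhs : c.lhs U Xj Yj Zj Gj u ≤ 0 :=
    lhs_nonpos hω hc hu hu0 fun T hT => hterm T (Or.inr (Or.inl hT))
  have hS : submodSum u S ≤ 0 := by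
    rw [submodSum_apply, ← Multiset.sum_map_zero (m := S)]
    refine Multiset.sum_map_le_sum_map _ _ fun e he => ?_
    have hY := hterm _ (Or.inr (Or.inr ⟨e, he, Or.inl rfl⟩))
    have hZ := hterm _ (Or.inr (Or.inr ⟨e, he, Or.inr rfl⟩))
    have hX : u e.1 = 0 := le_antisymm (hY ▸ hu subset_union_left) (hu0 ▸ hu (empty_subset _))
    have hXYZ : 0 ≤ u (e.1 ∪ e.2.1 ∪ e.2.2) := hu0 ▸ hu (empty_subset _)
    simp only [condMI, hX, hY, hZ]
    linarith
  by_contra hC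
  have huC : u C = 1 := unreachableIndicator_of_not_reachable hC
  linarith [hbal u hu0, monoSum_unreachableIndicator_nonpos (M := M)
    (T := IsTerminal U Xj Yj Zj Gj ω c S), hR u hu]

lemma Balanced.exists_of_chain {M K S C D} (hbal : Balanced U Xj Yj Zj Gj R c M S C)
    (hKM : K ≤ M) (hK : Chain K C D) : ∃ M', Balanced U Xj Yj Zj Gj R c M' S D := by
  obtain ⟨K', hK'⟩ := hK.exists_monoSum_eq
  refine ⟨M - K + K', fun h h0 => ?_⟩
  have hM : monoSum h M = monoSum h (M - K) + monoSum h K := by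
    rw [← map_add, tsub_add_cancel_of_le hKM]
  rw [map_add]
  linarith [hbal h h0, hK' h]

lemma Balanced.exists_of_cashable {M S D} (hbal : Balanced U Xj Yj Zj Gj R c M S D)
    (hD : Cashable U Xj Yj Zj Gj ω c D) :
    ∃ (c' : Coeffs L J) (M' : Multiset (Finset V × Finset V)), c'.Valid ω ∧
      c.weight ≤ c'.weight + 1 ∧ Balanced U Xj Yj Zj Gj R c' M' S ∅ := by
  obtain ⟨c', M₀, hc', hw, hlhs⟩ := hD
  refine ⟨c', M₀ + M, hc', hw, fun h h0 => ?_⟩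
  rw [map_add, h0]
  linarith [hbal h h0, hlhs h]

lemma Balanced.exists_of_submod {M S D} {e : Finset V × Finset V × Finset V}
    (hbal : Balanced U Xj Yj Zj Gj R c M S D) (he : e ∈ S)
    (hD : D = e.1 ∪ e.2.1 ∨ D = e.1 ∪ e.2.2) :
    ∃ M', Balanced U Xj Yj Zj Gj R c M' (S.erase e) (e.1 ∪ e.2.1 ∪ e.2.2) := by
  obtain ⟨W, hW⟩ : ∃ W, ∀ h : Finset V → ℝ,
      condMI h e.2.1 e.2.2 e.1 + h (e.1 ∪ e.2.1 ∪ e.2.2) = h D + condH h W e.1 := by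
    rcases hD with rfl | rfl
    exacts [⟨e.2.2, fun h => by rw [condMI, condH]; ring⟩,
      ⟨e.2.1, fun h => by rw [condMI, condH]; ring⟩]
  refine ⟨(e.1, W) ::ₘ M, fun h h0 => ?_⟩
  have := hbal h h0
  rw [← Multiset.cons_erase he, submodSum_cons] at this
  rw [monoSum_cons]
  linarith [hW h]

theorem Balanced.exists_balanced_empty (hω : 1 ≤ ω) (hR : ∀ u, Monotone u → 0 ≤ R u)
    {M S C} (hc : c.Valid ω) (hbal : Balanced U Xj Yj Zj Gj R c M S C) :
    ∃ (c' : Coeffs L J) (M' : Multiset (Finset V × Finset V))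
      (S' : Multiset (Finset V × Finset V × Finset V)),
      c'.Valid ω ∧ c.weight ≤ c'.weight + 1 ∧ Balanced U Xj Yj Zj Gj R c' M' S' ∅ := by
  induction S using Multiset.strongInductionOn generalizing M C with
  | ih S ih =>
  obtain ⟨K, hKM, D, hD, hK⟩ := hbal.reachable hω hR hc
  obtain ⟨M₁, hbal₁⟩ := hbal.exists_of_chain hKM hK
  rcases hD with rfl | hD | ⟨e, he, hD⟩
  · exact ⟨c, M₁, S, hc, Nat.le_succ _, hbal₁⟩
  · obtain ⟨c', M', hc', hw, hbal'⟩ := hbal₁.exists_of_cashable hD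
    exact ⟨c', M', S, hc', hw, hbal'⟩
  · obtain ⟨M₂, hbal₂⟩ := hbal₁.exists_of_submod he hD
    exact ih _ (Multiset.erase_lt.mpr he) hbal₂

end Reset

end IntegralShannon

open IntegralShannon

theorem generalized_reset_lemma_general {V : Type*} [DecidableEq V] [Fintype V]
    (ω : ℝ) (hω₂ : 2 ≤ ω)
    {L J I : ℕ}
    (U : Fin L → Finset V) (Xj Yj Zj Gj : Fin J → Finset V)
    (Xi Yi : Fin I → Finset V)
    (lam : Fin L → ℕ) (α β ζ κ : Fin J → ℕ) (w : Fin I → ℕ)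
    (hκ : ∀ j, 0 < κ j)
    (hdom : ∀ j, OmegaDominant ω ((α j : ℝ) / (κ j : ℝ)) ((β j : ℝ) / (κ j : ℝ))
      ((ζ j : ℝ) / (κ j : ℝ)))
    (hcert : IntegralCert U lam Xj Yj Zj Gj α β ζ κ Xi Yi w)
    (i₀ : Fin I) (hX₀ : Xi i₀ = (∅ : Finset V)) (hw₀ : 0 < w i₀) :
    ∃ (lam' : Fin L → ℕ) (α' β' ζ' κ' : Fin J → ℕ) (w' : Fin I → ℕ)
      (J' : Finset (Fin J)),
      (∀ j ∈ J', 0 < κ' j) ∧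
      (∀ j ∉ J', α' j = 0 ∧ β' j = 0 ∧ ζ' j = 0 ∧ κ' j = 0) ∧
      (∀ j ∈ J', OmegaDominant ω ((α' j : ℝ) / (κ' j : ℝ)) ((β' j : ℝ) / (κ' j : ℝ))
        ((ζ' j : ℝ) / (κ' j : ℝ))) ∧
      (∀ h : Finset V → ℝ, IsPolymatroid h →
        ShannonLHS h U lam' Xj Yj Zj Gj α' β' ζ' κ' ≤ ShannonRHS h Xi Yi w') ∧
      IntegralCert U lam' Xj Yj Zj Gj α' β' ζ' κ' Xi Yi w' ∧
      w' i₀ + 1 ≤ w i₀ ∧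
      (∀ i : Fin I, i ≠ i₀ → w' i ≤ w i) ∧
      (∑ ℓ, lam ℓ) + (∑ j, κ j) ≤ (∑ ℓ, lam' ℓ) + (∑ j, κ' j) + 1 := by
  obtain ⟨M, S, hMS⟩ := integralCert_iff.mp hcert
  set w' := Function.update w i₀ (w i₀ - 1)
  have hbal : Balanced U Xj Yj Zj Gj (ShannonRHS · Xi Yi w') ⟨lam, α, β, ζ, κ⟩ M S (Yi i₀) :=
    fun h h0 => by
      rw [Coeffs.lhs, hMS h h0, shannonRHS_update_sub_one h Xi Yi hw₀, condH, hX₀, h0,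
        empty_union, sub_zero]
  have hvalid : Coeffs.Valid ω ⟨lam, α, β, ζ, κ⟩ := fun j =>
    (admissible_iff_omegaDominant (hκ j)).mpr (hdom j)
  obtain ⟨c, M', S', hc, hweight, hbal'⟩ := hbal.exists_balanced_empty (by linarith)
    (fun u hu => shannonRHS_nonneg_of_monotone hu Xi Yi w') hvalid
  have hcert' : IntegralCert U c.lam Xj Yj Zj Gj c.α c.β c.ζ c.κ Xi Yi w' :=
    integralCert_iff.mpr ⟨M', S', fun h h0 => by simpa [Coeffs.lhs, h0] using hbal' h h0⟩
  refine ⟨c.lam, c.α, c.β, c.ζ, c.κ, w', univ.filter (0 < c.κ ·), fun j hj => (mem_filter.mp hj).2,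
    fun j hj => ?_, fun j hj => (admissible_iff_omegaDominant (mem_filter.mp hj).2).mp (hc j),
    fun h hp => hcert'.shannonLHS_le hp, hcert', by simp [w']; omega,
    fun i hi => by simp [w', Function.update_of_ne hi], hweight⟩
  have hk : c.κ j = 0 := by simpa using hj
  exact ⟨((hc j).2.2.2 hk).1, ((hc j).2.2.2 hk).2.1, ((hc j).2.2.2 hk).2.2, hk⟩

/-- Generalized Reset Lemma. -/
theorem generalized_reset_lemma {V : Type*} [DecidableEq V] [Fintype V]
    (ω : ℝ) (hω₂ : 2 ≤ ω) (hω₃ : ω ≤ 3)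
    {L J I : ℕ}
    (U : Fin L → Finset V) (Xj Yj Zj Gj : Fin J → Finset V)
    (Xi Yi : Fin I → Finset V)
    (lam : Fin L → ℕ) (α β ζ κ : Fin J → ℕ) (w : Fin I → ℕ)
    (hκ : ∀ j, 0 < κ j)
    (hdom : ∀ j, OmegaDominant ω ((α j : ℝ) / (κ j : ℝ)) ((β j : ℝ) / (κ j : ℝ))
      ((ζ j : ℝ) / (κ j : ℝ)))
    (hvalid : ∀ h : Finset V → ℝ, IsPolymatroid h →
      ShannonLHS h U lam Xj Yj Zj Gj α β ζ κ ≤ ShannonRHS h Xi Yi w)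
    (hcert : IntegralCert U lam Xj Yj Zj Gj α β ζ κ Xi Yi w)
    (i₀ : Fin I) (hX₀ : Xi i₀ = (∅ : Finset V)) (hw₀ : 0 < w i₀) :
    ∃ (lam' : Fin L → ℕ) (α' β' ζ' κ' : Fin J → ℕ) (w' : Fin I → ℕ)
      (J' : Finset (Fin J)),
      (∀ j ∈ J', 0 < κ' j) ∧
      (∀ j ∉ J', α' j = 0 ∧ β' j = 0 ∧ ζ' j = 0 ∧ κ' j = 0) ∧
      (∀ j ∈ J', OmegaDominant ω ((α' j : ℝ) / (κ' j : ℝ)) ((β' j : ℝ) / (κ' j : ℝ))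
        ((ζ' j : ℝ) / (κ' j : ℝ))) ∧
      (∀ h : Finset V → ℝ, IsPolymatroid h →
        ShannonLHS h U lam' Xj Yj Zj Gj α' β' ζ' κ' ≤ ShannonRHS h Xi Yi w') ∧
      IntegralCert U lam' Xj Yj Zj Gj α' β' ζ' κ' Xi Yi w' ∧
      w' i₀ + 1 ≤ w i₀ ∧
      (∀ i : Fin I, i ≠ i₀ → w' i ≤ w i) ∧
      (∑ ℓ, lam ℓ) + (∑ j, κ j) ≤ (∑ ℓ, lam' ℓ) + (∑ j, κ' j) + 1 :=
  generalized_reset_lemma_general ω hω₂ U Xj Yj Zj Gj Xi Yi lam α β ζ κ w hκ hdom hcert i₀ hX₀ hw₀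
end

section
/- For every hypergraph H = (V, E) and every monotone nonnegative set function h on V (in particular, every polymatroid), the minimum over plain elimination orders σ of V of max_{i} h(U_i^σ) equals the minimum over generalized elimination orders σ̄ of V of max_{i} h(U_i^{σ̄}). Consequently, the submodular width of H can equivalently be defined as max over edge-dominated polymatroids h of min over generalized elimination orders σ̄ of max_i h(U_i^{σ̄}). -/
open Finset

/-- `U(X)`: the union of the hyperedges of `E` intersecting the block `X`. -/
def elimU {V : Type*} [DecidableEq V] (E : Finset (Finset V)) (X : Finset V) :
    Finset V :=
  (E.filter fun e => ¬ Disjoint e X).sup id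

/-- Eliminating the block `X`: the hyperedges not intersecting `X`, together
with the new hyperedge `U(X) \ X`. -/
def elimStep {V : Type*} [DecidableEq V] (E : Finset (Finset V)) (X : Finset V) :
    Finset (Finset V) :=
  insert (elimU E X \ X) (E.filter fun e => Disjoint e X)

/-- The list `U_1, …, U_m` determined by a (generalized) elimination order,
given as a list of blocks. -/
def elimUs {V : Type*} [DecidableEq V] (E : Finset (Finset V)) :
    List (Finset V) → List (Finset V)
  | [] => []
  | X :: σ => elimU E X :: elimUs (elimStep E X) σ

/-- A generalized elimination order: an ordered partition of `V` into
nonempty blocks. -/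
def IsGenElimOrder {V : Type*} [DecidableEq V] [Fintype V]
    (σ : List (Finset V)) : Prop :=
  (∀ X ∈ σ, X.Nonempty) ∧ σ.Pairwise Disjoint ∧
    σ.foldr (· ∪ ·) ∅ = (Finset.univ : Finset V)

/-!
Split every block `X` of a generalized elimination order into singletons, eliminated one after
the other. While the vertices of `X` are being eliminated, every hyperedge of the current
hypergraph avoids the vertices already eliminated and lies either inside `U(X)` or inside an
original hyperedge disjoint from `X`. Hence every bag produced on the way is contained in `U(X)`,
and once `X` is used up, every hyperedge is contained in a hyperedge of the hypergraph obtained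
by eliminating `X` at once. By induction over the blocks and monotonicity of `h`, the resulting plain
order costs no more than the generalized one; conversely every plain order is a generalized one.
-/

namespace GenElimOrder

variable {V : Type*}

noncomputable def toSingletons (σ : List (Finset V)) : List (Finset V) :=
  σ.flatMap fun X => X.toList.map ({·})

lemma mem_toSingletons {σ : List (Finset V)} {t : Finset V} :
    t ∈ toSingletons σ ↔ ∃ X ∈ σ, ∃ x ∈ X, {x} = t := by
  simp [toSingletons]

lemma pairwise_disjoint_toSingletons {σ : List (Finset V)} (hσ : σ.Pairwise Disjoint) :
    (toSingletons σ).Pairwise Disjoint := by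
  refine List.pairwise_flatMap.2 ⟨fun X _ => ?_, hσ.imp fun hXY => ?_⟩
  · exact List.pairwise_map.2 ((nodup_toList X).imp fun hne => disjoint_singleton.2 hne)
  · simp only [List.mem_map, mem_toList]
    rintro _ ⟨x, hx, rfl⟩ _ ⟨y, hy, rfl⟩
    exact disjoint_singleton.2 fun hxy => disjoint_left.1 hXY hx (hxy ▸ hy)

lemma card_eq_one_of_mem_toSingletons {σ : List (Finset V)} {t : Finset V}
    (ht : t ∈ toSingletons σ) : t.card = 1 := by
  obtain ⟨_, _, x, _, rfl⟩ := mem_toSingletons.1 ht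
  exact card_singleton x

def Dominated (F E : Finset (Finset V)) : Prop := ∀ e ∈ F, ∃ f ∈ E, e ⊆ f

variable [DecidableEq V]

lemma foldr_union_toSingletons (σ : List (Finset V)) :
    (toSingletons σ).foldr (· ∪ ·) ∅ = σ.foldr (· ∪ ·) ∅ := by
  have hmap : ∀ (xs : List V) (a : Finset V),
      (xs.map ({·})).foldr (· ∪ ·) a = xs.toFinset ∪ a := by
    intro xs a
    induction xs with
    | nil => simp
    | cons x xs ih => rw [List.map_cons, List.foldr_cons, ih, List.toFinset_cons, insert_union,
        insert_eq]
  induction σ with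
  | nil => rfl
  | cons X σ ih =>
    rw [toSingletons, List.flatMap_cons, List.foldr_append, ← toSingletons, ih, hmap,
      toList_toFinset, List.foldr_cons]

lemma isGenElimOrder_toSingletons [Fintype V] {σ : List (Finset V)} (hσ : IsGenElimOrder σ) :
    IsGenElimOrder (toSingletons σ) := by
  refine ⟨fun t ht => ?_, pairwise_disjoint_toSingletons hσ.2.1,
    (foldr_union_toSingletons σ).trans hσ.2.2⟩
  obtain ⟨_, _, x, _, rfl⟩ := mem_toSingletons.1 ht
  exact singleton_nonempty x

noncomputable def elimWidth (h : Finset V → ℝ) (E : Finset (Finset V)) (σ : List (Finset V)) :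
    ℝ :=
  ((elimUs E σ).map h).foldr max 0

lemma subset_elimU {E : Finset (Finset V)} {e X : Finset V} (he : e ∈ E)
    (hX : ¬ Disjoint e X) : e ⊆ elimU E X :=
  Finset.le_sup (f := id) (mem_filter.2 ⟨he, hX⟩)

lemma elimUs_append (E : Finset (Finset V)) (σ τ : List (Finset V)) :
    elimUs E (σ ++ τ) = elimUs E σ ++ elimUs (σ.foldl elimStep E) τ := by
  induction σ generalizing E with
  | nil => rfl
  | cons X σ ih => simp [elimUs, ih]

lemma _root_.List.foldr_max_le {α : Type*} [LinearOrder α] {l : List α} {a b : α} (ha : a ≤ b)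
    (hl : ∀ x ∈ l, x ≤ b) : l.foldr max a ≤ b := by
  induction l with
  | nil => exact ha
  | cons c l ih => simp_all

section BlockSplit

variable {E F : Finset (Finset V)} {X S : Finset V} {x : V}

/-- The invariant of eliminating the block `X` of `E` vertex by vertex, when `F` is the current
hypergraph and `S` the set of vertices eliminated so far. -/
def IsBlockSplitStage (E : Finset (Finset V)) (X S : Finset V) (F : Finset (Finset V)) : Prop :=
  ∀ e ∈ F, Disjoint e S ∧ (e ⊆ elimU E X ∨ ∃ f ∈ E, e ⊆ f ∧ Disjoint f X)

lemma Dominated.isBlockSplitStage (hd : Dominated F E) (X : Finset V) :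
    IsBlockSplitStage E X ∅ F := by
  intro e he
  obtain ⟨f, hf, hef⟩ := hd e he
  refine ⟨disjoint_empty_right e, ?_⟩
  by_cases hfX : Disjoint f X
  · exact Or.inr ⟨f, hf, hef, hfX⟩
  · exact Or.inl (hef.trans (subset_elimU hf hfX))

namespace IsBlockSplitStage

lemma elimU_singleton_subset (hF : IsBlockSplitStage E X S F) (hx : x ∈ X) :
    elimU F {x} ⊆ elimU E X := by
  refine Finset.sup_le fun e he => ?_
  obtain ⟨he, hex⟩ := mem_filter.1 he
  rw [disjoint_singleton_right, not_not] at hex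
  rcases (hF e he).2 with heU | ⟨f, -, hef, hfX⟩
  · exact heU
  · exact absurd hx (disjoint_left.1 hfX (hef hex))

lemma elimStep_singleton (hF : IsBlockSplitStage E X S F) (hx : x ∈ X) :
    IsBlockSplitStage E X (insert x S) (elimStep F {x}) := by
  intro e he
  rcases mem_insert.1 he with rfl | he
  · refine ⟨disjoint_insert_right.2 ⟨by simp, disjoint_left.2 fun a ha haS => ?_⟩,
      Or.inl (sdiff_subset.trans (hF.elimU_singleton_subset hx))⟩
    obtain ⟨e, he, hae⟩ := mem_sup.1 (sdiff_subset ha)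
    exact disjoint_left.1 (hF e (mem_filter.1 he).1).1 hae haS
  · obtain ⟨he, hex⟩ := mem_filter.1 he
    obtain ⟨heS, hcases⟩ := hF e he
    exact ⟨disjoint_insert_right.2 ⟨disjoint_singleton_right.1 hex, heS⟩, hcases⟩

lemma foldl_elimStep (hF : IsBlockSplitStage E X S F) {xs : List V} (hxs : ∀ x ∈ xs, x ∈ X) :
    IsBlockSplitStage E X (xs.toFinset ∪ S) ((xs.map ({·})).foldl elimStep F) := by
  induction xs generalizing F S with
  | nil => simpa using hF
  | cons x xs ih =>
    have := ih (hF.elimStep_singleton (hxs x (by simp))) fun y hy => hxs y (by simp [hy])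
    rwa [union_insert, ← insert_union, ← List.toFinset_cons] at this

lemma subset_elimU_of_mem_elimUs (hF : IsBlockSplitStage E X S F) {xs : List V}
    (hxs : ∀ x ∈ xs, x ∈ X) : ∀ U ∈ elimUs F (xs.map ({·})), U ⊆ elimU E X := by
  induction xs generalizing F S with
  | nil => simp [elimUs]
  | cons x xs ih =>
    have hx : x ∈ X := hxs x (by simp)
    intro U hU
    rcases List.mem_cons.1 hU with rfl | hU
    · exact hF.elimU_singleton_subset hx
    · exact ih (hF.elimStep_singleton hx) (fun y hy => hxs y (by simp [hy])) U hU

lemma dominated_elimStep (hF : IsBlockSplitStage E X S F) (hXS : X ⊆ S) :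
    Dominated F (elimStep E X) := by
  intro e he
  obtain ⟨heS, heU | ⟨f, hf, hef, hfX⟩⟩ := hF e he
  · exact ⟨elimU E X \ X, mem_insert_self _ _,
      subset_sdiff.2 ⟨heU, heS.mono_right hXS⟩⟩
  · exact ⟨f, mem_insert_of_mem (mem_filter.2 ⟨hf, hfX⟩), hef⟩

end IsBlockSplitStage

end BlockSplit

lemma elimWidth_toSingletons_le {h : Finset V → ℝ} (hh : Monotone h) (σ : List (Finset V))
    {E F : Finset (Finset V)} (hd : Dominated F E) :
    elimWidth h F (toSingletons σ) ≤ elimWidth h E σ := by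
  induction σ generalizing E F with
  | nil => simp [elimWidth, toSingletons, elimUs]
  | cons X σ ih =>
    have hX : ∀ x ∈ X.toList, x ∈ X := fun x => mem_toList.1
    have hstage := hd.isBlockSplitStage X
    have hrest := ih ((hstage.foldl_elimStep hX).dominated_elimStep (by simp))
    simp only [elimWidth, toSingletons, List.flatMap_cons, elimUs_append, List.map_append,
      List.foldr_append, elimUs, List.map_cons, List.foldr_cons] at hrest ⊢
    refine List.foldr_max_le (hrest.trans (le_max_right _ _)) fun y hy => ?_
    obtain ⟨U, hU, rfl⟩ := List.mem_map.1 hy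
    exact (hh (hstage.subset_elimU_of_mem_elimUs hX U hU)).trans (le_max_left _ _)

theorem sInf_plain_eq_sInf_gen [Fintype V] (E : Finset (Finset V)) {h : Finset V → ℝ}
    (hh : Monotone h) :
    sInf {x | ∃ σ, IsGenElimOrder σ ∧ (∀ X ∈ σ, X.card = 1) ∧ x = elimWidth h E σ} =
      sInf {x | ∃ σ, IsGenElimOrder σ ∧ x = elimWidth h E σ} := by
  refine csInf_eq_csInf_of_forall_exists_le ?_ ?_
  · rintro x ⟨σ, hσ, -, rfl⟩
    exact ⟨_, ⟨σ, hσ, rfl⟩, le_rfl⟩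
  · rintro x ⟨σ, hσ, rfl⟩
    exact ⟨_, ⟨toSingletons σ, isGenElimOrder_toSingletons hσ,
      fun _ => card_eq_one_of_mem_toSingletons, rfl⟩,
      elimWidth_toSingletons_le hh σ fun e he => ⟨e, he, subset_rfl⟩⟩

end GenElimOrder

open GenElimOrder in
/-- for every hypergraph and every monotone nonnegative set
function `h`, the minimum over plain elimination orders of `max_i h(U_i)`
equals the minimum over generalized elimination orders; consequently the
submodular width can equivalently be defined using generalized elimination
orders. -/
theorem gen_elim_orders_equiv_plain {V : Type*} [DecidableEq V] [Fintype V]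
    (E : Finset (Finset V)) :
    (∀ h : Finset V → ℝ, (∀ A : Finset V, 0 ≤ h A) →
      (∀ A B : Finset V, A ⊆ B → h A ≤ h B) →
      sInf {x : ℝ | ∃ σ : List (Finset V), IsGenElimOrder σ ∧
          (∀ X ∈ σ, X.card = 1) ∧ x = ((elimUs E σ).map h).foldr max 0} =
      sInf {x : ℝ | ∃ σ : List (Finset V), IsGenElimOrder σ ∧
          x = ((elimUs E σ).map h).foldr max 0}) ∧
    sSup {x : ℝ | ∃ h : Finset V → ℝ, IsPolymatroid h ∧ (∀ e ∈ E, h e ≤ 1) ∧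
        x = sInf {y : ℝ | ∃ σ : List (Finset V), IsGenElimOrder σ ∧
            (∀ X ∈ σ, X.card = 1) ∧ y = ((elimUs E σ).map h).foldr max 0}} =
    sSup {x : ℝ | ∃ h : Finset V → ℝ, IsPolymatroid h ∧ (∀ e ∈ E, h e ≤ 1) ∧
        x = sInf {y : ℝ | ∃ σ : List (Finset V), IsGenElimOrder σ ∧
            y = ((elimUs E σ).map h).foldr max 0}} := by
  refine ⟨fun h _ hmono => sInf_plain_eq_sInf_gen E fun A B => hmono A B, ?_⟩
  congr 1
  ext x
  refine exists_congr fun h => and_congr_right fun hpoly => and_congr_right fun _ => ?_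
  exact iff_of_eq (congrArg (x = ·) (sInf_plain_eq_sInf_gen E fun A B => hpoly.2.2.1 A B))
end
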